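/- arXiv:1602.08999 — 5 statements merged into one kernel-verified Lean document; each statement's English description precedes it below -/
import Mathlib

section
/- The numbers a(n,k) = #{π ∈ AS_{n+1} : des(π) = k} satisfy the recurrence a(n+1,k) = k·a(n,k) + (n−k+2)·a(n,k−1) for n ≥ 1 and k ≥ 1, with a(1,1) = 1 and a(1,k) = 0 for k ≥ 2. -/
open scoped Classical

/-- The word `π(1)π(2)⋯π(n)` of a permutation of `[n]`, with values in `{1,…,n}`. -/
def permWord {n : ℕ} (π : Equiv.Perm (Fin n)) : List ℕ :=
  List.ofFn fun i => (π i : ℕ) + 1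

/-- The restriction of a word to `[k]`: the subword of entries `≤ k`. -/
def restrict (w : List ℕ) (k : ℕ) : List ℕ := w.filter (fun x => x ≤ k)

/-- A succession of a word: an index `i` with `w(i+1) = w(i) + 1`. -/
def hasSuccession (w : List ℕ) : Prop :=
  ∃ i, i + 1 < w.length ∧ w.getD (i + 1) 0 = w.getD i 0 + 1

/-- The number of descents of a word. -/
def desList (w : List ℕ) : ℕ :=
  (List.range (w.length - 1)).countP fun i =>
    decide (w.getD (i + 1) 0 < w.getD i 0)

/-- `AS_n`: permutations all of whose restrictions to `[k]` have no successions
(permutations avoiding simsun successions). -/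
def InAS {n : ℕ} (π : Equiv.Perm (Fin n)) : Prop :=
  ∀ k, ¬ hasSuccession (restrict (permWord π) k)

/-!
Deleting the letter `m + 1` from a word of `AS_{m+1}` gives a word of `AS_m`; conversely, `m + 1`
can be inserted into `v ∈ AS_m` at any of its `m + 1` slots. All restrictions of the result to
`k ≤ m` are restrictions of `v`, so it lies in `AS_{m+1}` unless it has a succession itself, which
happens exactly at the slot right after `m`. A new maximum inserted at the end or right after a
descent top keeps the number of descents, and elsewhere adds one. There are `des v + 1` slots of
the first kind, among them the slot after `m` (which ends the word or precedes a smaller letter),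
and `m - des v` of the second. Hence each `v ∈ AS_m` with `k` descents has `k` extensions with
`k` descents, and each one with `k - 1` descents has `m + 1 - k`. The value `a(1,1) = 1` is the
case `m = k = 1` of this recurrence.
-/

namespace SimsunSuccession

open List

theorem not_hasSuccession_iff_isChain {w : List ℕ} :
    ¬ hasSuccession w ↔ w.IsChain (fun a b => b ≠ a + 1) := by
  simp only [hasSuccession, isChain_iff_getElem, not_exists, not_and]
  refine forall_congr' fun i => ⟨fun h hi => ?_, fun h hi => ?_⟩ <;>
    simpa [getElem?_eq_getElem hi, getElem?_eq_getElem (Nat.lt_of_succ_lt hi)] using h hi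

theorem isChain_append_cons_iff_of_forall_lt {l₁ l₂ : List ℕ} {M : ℕ} (hM : ∀ y ∈ l₂, y < M)
    (h : (l₁ ++ l₂).IsChain (fun a b => b ≠ a + 1)) :
    (l₁ ++ M :: l₂).IsChain (fun a b => b ≠ a + 1) ↔ ∀ x ∈ l₁.getLast?, M ≠ x + 1 := by
  rw [isChain_append] at h ⊢
  obtain ⟨h₁, h₂, -⟩ := h
  have hM₂ : (M :: l₂).IsChain (fun a b => b ≠ a + 1) :=
    isChain_cons.2 ⟨fun y hy => by have := hM y (mem_of_mem_head? hy); omega, h₂⟩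
  simp [h₁, hM₂]

theorem desList_cons_cons (a b : ℕ) (t : List ℕ) :
    desList (a :: b :: t) = (if b < a then 1 else 0) + desList (b :: t) := by
  simp only [desList, length_cons, Nat.add_sub_cancel, range_succ_eq_map, countP_cons,
    countP_map]
  rw [add_comm]
  congr 1
  split_ifs <;> simp_all

theorem desList_append_cons (l₁ : List ℕ) (c : ℕ) (l₂ : List ℕ) :
    desList (l₁ ++ c :: l₂) = desList (l₁ ++ [c]) + desList (c :: l₂) := by
  induction l₁ using twoStepInduction with
  | nil => simp [desList]
  | singleton a => rw [singleton_append, desList_cons_cons]; simp [desList]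
  | cons_cons a b t _ ih =>
    simp only [cons_append] at ih ⊢
    rw [desList_cons_cons, desList_cons_cons, ih]
    omega

theorem desList_concat (l : List ℕ) (y : ℕ) :
    desList (l ++ [y]) = desList l + if ∃ x ∈ l.getLast?, y < x then 1 else 0 := by
  induction l using twoStepInduction with
  | nil => simp [desList]
  | singleton a => rw [singleton_append, desList_cons_cons]; simp [desList]
  | cons_cons a b t _ ih =>
    simp only [cons_append] at ih ⊢
    rw [desList_cons_cons, desList_cons_cons, ih, getLast?_cons_cons]
    omega

theorem desList_append_cons_of_forall_lt {l₁ l₂ : List ℕ} {M : ℕ}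
    (hM : ∀ y ∈ l₁ ++ l₂, y < M) :
    desList (l₁ ++ M :: l₂) = desList (l₁ ++ l₂) +
      if l₂ = [] ∨ ∃ x ∈ l₁.getLast?, ∃ y ∈ l₂.head?, y < x then 0 else 1 := by
  have hM₁ : ¬ ∃ x ∈ l₁.getLast?, M < x := fun ⟨x, hx, hlt⟩ =>
    (hM x (mem_append_left _ (mem_of_getLast? hx))).not_gt hlt
  rw [desList_append_cons, desList_concat, if_neg hM₁]
  cases l₂ with
  | nil => simp [desList]
  | cons y t =>
    have hy : y < M := hM y (by simp)
    rw [desList_append_cons, desList_concat, desList_cons_cons, if_pos hy]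
    simp only [head?_cons, Option.mem_def, Option.some.injEq, exists_eq_left', reduceCtorEq,
      false_or]
    split_ifs <;> omega

theorem desList_le (w : List ℕ) : desList w ≤ w.length - 1 :=
  countP_le_length.trans_eq length_range

theorem desList_eq_card_filter (v : List ℕ) :
    desList v = ((Finset.range (v.length - 1)).filter
      fun i => v.getD (i + 1) 0 < v.getD i 0).card := by
  rw [desList, countP_eq_length_filter]
  rfl

theorem insertIdx_eq_take_append_cons_drop {α : Type*} {l : List α} {j : ℕ}
    (hj : j ≤ l.length) (a : α) : l.insertIdx j a = l.take j ++ a :: l.drop j := by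
  induction l generalizing j with
  | nil => simp_all
  | cons b l ih =>
    cases j with
    | zero => rfl
    | succ j => simp [insertIdx_succ_cons, ih (Nat.le_of_succ_le_succ hj)]

theorem idxOf_insertIdx {v : List ℕ} {M j : ℕ} (hM : M ∉ v) (hj : j ≤ v.length) :
    (v.insertIdx j M).idxOf M = j := by
  rw [insertIdx_eq_take_append_cons_drop hj,
    idxOf_append_of_notMem fun h => hM (mem_of_mem_take h), idxOf_cons_self, length_take]
  omega

theorem isChain_insertIdx_iff {v : List ℕ} {m j : ℕ} (hmax : ∀ y ∈ v, y ≤ m)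
    (hj : j ≤ v.length) (hv : v.IsChain (fun a b => b ≠ a + 1)) (hnd : v.Nodup) :
    (v.insertIdx j (m + 1)).IsChain (fun a b => b ≠ a + 1) ↔ j ≠ v.idxOf m + 1 := by
  rw [insertIdx_eq_take_append_cons_drop hj, isChain_append_cons_iff_of_forall_lt
    (fun y hy => Nat.lt_succ_of_le (hmax y (mem_of_mem_drop hy))) (by rwa [take_append_drop])]
  rcases Nat.eq_zero_or_pos j with rfl | hj₀
  · simp
  have hj' : j - 1 < v.length := by omega
  simp only [getLast?_take, if_neg hj₀.ne', getElem?_eq_getElem hj', Option.some_or,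
    Option.mem_def, Option.some.injEq, forall_eq', ne_eq, Nat.succ_inj]
  constructor
  · rintro h rfl
    exact h (by simp only [Nat.add_sub_cancel, getElem_idxOf])
  · rintro h he
    have := hnd.idxOf_getElem _ hj'
    rw [← he] at this
    omega

/-- Slot `j` of `v` is the gap between `v.take j` and `v.drop j`. -/
def descentSlots (v : List ℕ) : Finset ℕ :=
  (Finset.range (v.length + 1)).filter fun j =>
    v.drop j = [] ∨ ∃ x ∈ (v.take j).getLast?, ∃ y ∈ (v.drop j).head?, y < x

theorem descentSlots_subset_range (v : List ℕ) :
    descentSlots v ⊆ Finset.range (v.length + 1) :=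
  Finset.filter_subset _ _

theorem card_descentSlots (v : List ℕ) : (descentSlots v).card = desList v + 1 := by
  have hslots : descentSlots v = insert v.length (((Finset.range (v.length - 1)).filter
      fun i => v.getD (i + 1) 0 < v.getD i 0).map (addRightEmbedding 1)) := by
    ext j
    cases j with
    | zero => simp [descentSlots, eq_comm]
    | succ i =>
      by_cases hi : i + 1 < v.length
      · simp [descentSlots, getLast?_take, getElem?_eq_getElem hi, hi.le, hi.ne, hi.not_ge,
          getElem?_eq_getElem (Nat.lt_of_succ_lt hi), Nat.lt_sub_iff_add_lt.2 hi,
          Nat.not_le.2 (Nat.lt_of_succ_lt hi)]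
      · have hL : i < v.length ↔ i + 1 = v.length := by omega
        simp [descentSlots, Nat.not_lt.1 hi, hL]
  rw [hslots, Finset.card_insert_of_notMem, Finset.card_map, desList_eq_card_filter]
  intro h
  obtain ⟨i, hi, he⟩ := Finset.mem_map.1 h
  simp only [Finset.mem_filter, Finset.mem_range] at hi
  simp only [addRightEmbedding_apply] at he
  omega

theorem desList_insertIdx_of_forall_lt {v : List ℕ} {M j : ℕ} (hM : ∀ y ∈ v, y < M)
    (hj : j ≤ v.length) :
    desList (v.insertIdx j M) = desList v + if j ∈ descentSlots v then 0 else 1 := by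
  rw [insertIdx_eq_take_append_cons_drop hj,
    desList_append_cons_of_forall_lt (by rwa [take_append_drop]), take_append_drop]
  simp [descentSlots, Nat.lt_succ_of_le hj]

theorem idxOf_add_one_mem_descentSlots {v : List ℕ} {m : ℕ} (hm : m ∈ v)
    (hmax : ∀ y ∈ v, y ≤ m) (hv : v.Nodup) : v.idxOf m + 1 ∈ descentSlots v := by
  have hi : v.idxOf m < v.length := idxOf_lt_length_iff.2 hm
  simp only [descentSlots, Finset.mem_filter, Finset.mem_range, getLast?_take, head?_drop,
    Nat.add_sub_cancel, getElem?_eq_getElem hi, getElem_idxOf hi]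
  refine ⟨by omega, ?_⟩
  by_cases hlast : v.idxOf m + 1 < v.length
  · have hne : v[v.idxOf m + 1] ≠ m := fun h => by
      have := hv.idxOf_getElem _ hlast
      rw [h] at this
      omega
    right
    simpa [getElem?_eq_getElem hlast] using lt_of_le_of_ne (hmax _ (getElem_mem hlast)) hne
  · left
    simp only [drop_eq_nil_iff]
    omega

def permWords (m : ℕ) : Finset (List ℕ) := (range' 1 m).permutations.toFinset

variable {m k : ℕ} {v w : List ℕ}

theorem mem_permWords : w ∈ permWords m ↔ w ~ range' 1 m := by
  simp [permWords, mem_permutations]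

theorem mem_iff_of_mem_permWords (hw : w ∈ permWords m) {x : ℕ} : x ∈ w ↔ 1 ≤ x ∧ x ≤ m := by
  rw [(mem_permWords.1 hw).mem_iff, mem_range'_1]
  omega

theorem le_of_mem_permWords (hw : w ∈ permWords m) {x : ℕ} (hx : x ∈ w) : x ≤ m :=
  ((mem_iff_of_mem_permWords hw).1 hx).2

theorem length_of_mem_permWords (hw : w ∈ permWords m) : w.length = m := by
  simpa using (mem_permWords.1 hw).length_eq

theorem idxOf_lt_of_mem_permWords (hw : w ∈ permWords m) (hm : 1 ≤ m) : w.idxOf m < m := by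
  have := idxOf_lt_length_iff.2 ((mem_iff_of_mem_permWords hw).2 ⟨hm, le_rfl⟩)
  rwa [length_of_mem_permWords hw] at this

theorem nodup_of_mem_permWords (hw : w ∈ permWords m) : w.Nodup :=
  (mem_permWords.1 hw).nodup_iff.2 nodup_range'

theorem idxOf_add_one_mem_descentSlots_of_mem_permWords (hv : v ∈ permWords m) (hm : 1 ≤ m) :
    v.idxOf m + 1 ∈ descentSlots v :=
  idxOf_add_one_mem_descentSlots ((mem_iff_of_mem_permWords hv).2 ⟨hm, le_rfl⟩)
    (fun _ => le_of_mem_permWords hv) (nodup_of_mem_permWords hv)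

theorem permWord_mem_permWords (π : Equiv.Perm (Fin m)) : permWord π ∈ permWords m := by
  rw [mem_permWords, permWord, perm_ext_iff_of_nodup
    (nodup_ofFn.2 fun i j h => π.injective (Fin.ext (by simpa using h))) nodup_range']
  intro x
  simp only [mem_ofFn, mem_range'_1]
  refine ⟨by rintro ⟨i, rfl⟩; omega, fun hx => ⟨π.symm ⟨x - 1, by omega⟩, ?_⟩⟩
  simp only [Equiv.apply_symm_apply]
  omega

theorem permWord_injective : Function.Injective (permWord (n := m)) := fun π σ h =>
  Equiv.ext fun i => Fin.ext (by simpa using congrFun (ofFn_injective h) i)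

theorem image_permWord_univ :
    (Finset.univ : Finset (Equiv.Perm (Fin m))).image permWord = permWords m := by
  refine Finset.eq_of_subset_of_card_le
    (Finset.image_subset_iff.2 fun π _ => permWord_mem_permWords π) ?_
  rw [Finset.card_image_of_injective _ permWord_injective, Finset.card_univ, Fintype.card_perm,
    Fintype.card_fin, permWords, toFinset_card_of_nodup (nodup_permutations _ nodup_range'),
    length_permutations, length_range']

theorem restrict_eq_self (h : ∀ x ∈ w, x ≤ k) : restrict w k = w :=
  filter_eq_self.2 fun x hx => by simpa using h x hx

theorem restrict_of_mem_permWords (hw : w ∈ permWords m) : restrict w m = w :=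
  restrict_eq_self fun _ => le_of_mem_permWords hw

theorem restrict_restrict (k c : ℕ) : restrict (restrict w k) c = restrict w (min c k) := by
  simp only [restrict, filter_filter]
  exact filter_congr fun x _ => by simp [Bool.and_comm]

theorem restrict_mem_permWords (hw : w ∈ permWords (m + 1)) : restrict w m ∈ permWords m := by
  have hrange : (range' 1 (m + 1)).filter (· ≤ m) = range' 1 m := by
    rw [range'_1_concat, filter_append, filter_eq_self.2 fun x hx => by
      simp only [mem_range'_1] at hx; simp only [decide_eq_true_eq]; omega]
    simp
  rw [mem_permWords] at hw ⊢
  simpa only [restrict, hrange] using hw.filter (· ≤ m)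

theorem insertIdx_mem_permWords (hv : v ∈ permWords m) {j : ℕ} (hj : j ≤ m) :
    v.insertIdx j (m + 1) ∈ permWords (m + 1) := by
  rw [mem_permWords] at hv ⊢
  calc v.insertIdx j (m + 1) ~ (m + 1) :: v := perm_insertIdx _ _ (hv.length_eq ▸ by simpa)
    _ ~ v ++ [m + 1] := (perm_append_singleton _ _).symm
    _ ~ range' 1 m ++ [1 + m] := by rw [Nat.add_comm]; exact hv.append_right _
    _ = range' 1 (m + 1) := range'_1_concat.symm

theorem restrict_insertIdx {j c : ℕ} (hc : c ≤ m) :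
    restrict (v.insertIdx j (m + 1)) c = restrict v c := by
  rcases le_or_gt j v.length with hj | hj
  · rw [insertIdx_eq_take_append_cons_drop hj]
    conv_rhs => rw [← take_append_drop j v]
    simp only [restrict, filter_append, filter_cons, decide_eq_false (by omega : ¬ m + 1 ≤ c)]
    rfl
  · rw [insertIdx_of_length_lt hj]

theorem insertIdx_idxOf_restrict (hw : w ∈ permWords (m + 1)) :
    (restrict w m).insertIdx (w.idxOf (m + 1)) (m + 1) = w := by
  have hi : w.idxOf (m + 1) < w.length := by
    rw [length_of_mem_permWords hw]
    exact idxOf_lt_of_mem_permWords hw (by omega)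
  have herase : restrict w m = w.eraseIdx (w.idxOf (m + 1)) := by
    rw [← erase_eq_eraseIdx_of_idxOf rfl, (nodup_of_mem_permWords hw).erase_eq_filter]
    refine filter_congr fun x hx => ?_
    have := (mem_iff_of_mem_permWords hw).1 hx
    rw [Bool.eq_iff_iff]
    simp only [decide_eq_true_eq, bne_iff_ne]
    omega
  conv_rhs => rw [← insertIdx_eraseIdx_getElem hi]
  rw [herase, getElem_idxOf]

def AvoidsSimsun (w : List ℕ) : Prop := ∀ k, ¬ hasSuccession (restrict w k)

theorem AvoidsSimsun.restrict (hw : AvoidsSimsun w) (k : ℕ) : AvoidsSimsun (restrict w k) :=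
  fun c => by rw [restrict_restrict]; exact hw _

theorem avoidsSimsun_insertIdx_iff (hv : v ∈ permWords m) (hav : AvoidsSimsun v) {j : ℕ}
    (hj : j ≤ m) : AvoidsSimsun (v.insertIdx j (m + 1)) ↔ j ≠ v.idxOf m + 1 := by
  have hle : ∀ x ∈ v, x ≤ m := fun _ => le_of_mem_permWords hv
  have hle' : ∀ x ∈ v.insertIdx j (m + 1), x ≤ m + 1 :=
    fun _ => le_of_mem_permWords (insertIdx_mem_permWords hv hj)
  have hchain : v.IsChain (fun a b => b ≠ a + 1) := by
    simpa [restrict_eq_self hle, not_hasSuccession_iff_isChain] using hav m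
  have hfull : AvoidsSimsun (v.insertIdx j (m + 1)) ↔
      ¬ hasSuccession (v.insertIdx j (m + 1)) := by
    refine ⟨fun h => by simpa [restrict_eq_self hle'] using h (m + 1), fun h c => ?_⟩
    rcases le_or_gt c m with hc | hc
    · rw [restrict_insertIdx hc]; exact hav c
    · rwa [restrict_eq_self fun x hx => (hle' x hx).trans hc]
  rw [hfull, not_hasSuccession_iff_isChain, isChain_insertIdx_iff hle
    (by rw [length_of_mem_permWords hv]; exact hj) hchain (nodup_of_mem_permWords hv)]

/-- The words of the permutations in `AS_m` with `k` descents. -/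
noncomputable def asWords (m k : ℕ) : Finset (List ℕ) :=
  (permWords m).filter fun w => AvoidsSimsun w ∧ desList w = k

theorem mem_asWords : w ∈ asWords m k ↔ w ∈ permWords m ∧ AvoidsSimsun w ∧ desList w = k :=
  Finset.mem_filter

noncomputable def extensionSlots (m k : ℕ) (v : List ℕ) : Finset ℕ :=
  (Finset.range (m + 1)).filter fun j =>
    AvoidsSimsun (v.insertIdx j (m + 1)) ∧ desList (v.insertIdx j (m + 1)) = k

theorem card_filter_restrict_eq_card_extensionSlots (hv : v ∈ permWords m) (k : ℕ) :
    ((asWords (m + 1) k).filter (restrict · m = v)).card = (extensionSlots m k v).card := by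
  have hlen := length_of_mem_permWords hv
  refine Finset.card_nbij' (fun w => w.idxOf (m + 1)) (fun j => v.insertIdx j (m + 1))
    ?_ ?_ ?_ ?_
  · rintro w hw
    simp only [Finset.mem_coe, Finset.mem_filter, mem_asWords] at hw
    obtain ⟨⟨hwP, hwA, hwD⟩, rfl⟩ := hw
    simp only [extensionSlots, Finset.mem_coe, Finset.mem_filter, Finset.mem_range,
      insertIdx_idxOf_restrict hwP]
    exact ⟨idxOf_lt_of_mem_permWords hwP (by omega), hwA, hwD⟩
  · rintro j hj
    simp only [extensionSlots, Finset.mem_coe, Finset.mem_filter, Finset.mem_range] at hj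
    simp only [Finset.mem_coe, Finset.mem_filter, mem_asWords, restrict_insertIdx le_rfl,
      restrict_of_mem_permWords hv]
    exact ⟨⟨insertIdx_mem_permWords hv (by omega), hj.2⟩, trivial⟩
  · rintro w hw
    simp only [Finset.mem_coe, Finset.mem_filter, mem_asWords] at hw
    obtain ⟨⟨hwP, -, -⟩, rfl⟩ := hw
    exact insertIdx_idxOf_restrict hwP
  · rintro j hj
    simp only [extensionSlots, Finset.mem_coe, Finset.mem_filter, Finset.mem_range] at hj
    exact idxOf_insertIdx (fun h => by have := le_of_mem_permWords hv h; omega) (by omega)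

theorem extensionSlots_eq (hv : v ∈ permWords m) (hav : AvoidsSimsun v) (k : ℕ) :
    extensionSlots m k v = (Finset.range (m + 1)).filter fun j =>
      j ≠ v.idxOf m + 1 ∧ desList v + (if j ∈ descentSlots v then 0 else 1) = k := by
  have hlen := length_of_mem_permWords hv
  refine Finset.filter_congr fun j hj => ?_
  rw [Finset.mem_range] at hj
  rw [avoidsSimsun_insertIdx_iff hv hav (by omega), desList_insertIdx_of_forall_lt
    (fun _ hy => Nat.lt_succ_of_le (le_of_mem_permWords hv hy)) (by omega)]

theorem card_extensionSlots_desList (hv : v ∈ permWords m) (hav : AvoidsSimsun v)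
    (hm : 1 ≤ m) : (extensionSlots m (desList v) v).card = desList v := by
  have hlen := length_of_mem_permWords hv
  have hslot := idxOf_add_one_mem_descentSlots_of_mem_permWords hv hm
  have hslots : extensionSlots m (desList v) v = (descentSlots v).erase (v.idxOf m + 1) := by
    rw [extensionSlots_eq hv hav]
    ext j
    have := @descentSlots_subset_range v j
    by_cases h : j ∈ descentSlots v <;> simp_all
  rw [hslots, Finset.card_erase_of_mem hslot, card_descentSlots, Nat.add_sub_cancel]

theorem card_extensionSlots_desList_add_one (hv : v ∈ permWords m) (hav : AvoidsSimsun v)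
    (hm : 1 ≤ m) : (extensionSlots m (desList v + 1) v).card = m - desList v := by
  have hlen := length_of_mem_permWords hv
  have hslot := idxOf_add_one_mem_descentSlots_of_mem_permWords hv hm
  have hslots : extensionSlots m (desList v + 1) v = Finset.range (m + 1) \ descentSlots v := by
    rw [extensionSlots_eq hv hav]
    ext j
    by_cases h : j ∈ descentSlots v
    · simp [h]
    · simp only [Finset.mem_filter, Finset.mem_sdiff, h, if_false, not_false_eq_true, and_true]
      exact and_iff_left_of_imp fun _ he => h (he ▸ hslot)
  rw [hslots, Finset.card_sdiff_of_subset (hlen ▸ descentSlots_subset_range v),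
    card_descentSlots, Finset.card_range]
  omega

theorem restrict_mem_asWords (hw : w ∈ asWords (m + 1) k) :
    restrict w m ∈ asWords m k ∪ asWords m (k - 1) := by
  obtain ⟨hwP, hwA, hwD⟩ := mem_asWords.1 hw
  have hvP := restrict_mem_permWords hwP
  have hidx : w.idxOf (m + 1) ≤ (restrict w m).length := by
    rw [length_of_mem_permWords hvP]
    exact Nat.lt_succ_iff.1 (idxOf_lt_of_mem_permWords hwP (by omega))
  have hdes := desList_insertIdx_of_forall_lt (M := m + 1)
    (fun _ hy => Nat.lt_succ_of_le (le_of_mem_permWords hvP hy)) hidx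
  rw [insertIdx_idxOf_restrict hwP, hwD] at hdes
  simp only [Finset.mem_union, mem_asWords, hvP, hwA.restrict, true_and]
  split_ifs at hdes <;> omega

theorem card_asWords_succ (hm : 1 ≤ m) (hk : 1 ≤ k) :
    ((asWords (m + 1) k).card : ℤ) =
      k * (asWords m k).card + ((m : ℤ) + 1 - k) * (asWords m (k - 1)).card := by
  have hdisj : Disjoint (asWords m k) (asWords m (k - 1)) :=
    Finset.disjoint_left.2 fun w h₁ h₂ => by
      have := (mem_asWords.1 h₁).2.2.symm.trans (mem_asWords.1 h₂).2.2
      omega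
  have hkeep : ∀ v ∈ asWords m k,
      (((asWords (m + 1) k).filter (restrict · m = v)).card : ℤ) = k := by
    intro v hv
    obtain ⟨hvP, hvA, rfl⟩ := mem_asWords.1 hv
    rw [card_filter_restrict_eq_card_extensionSlots hvP, card_extensionSlots_desList hvP hvA hm]
  have hraise : ∀ v ∈ asWords m (k - 1),
      (((asWords (m + 1) k).filter (restrict · m = v)).card : ℤ) = m + 1 - k := by
    intro v hv
    obtain ⟨hvP, hvA, hvD⟩ := mem_asWords.1 hv
    have hle := desList_le v
    rw [length_of_mem_permWords hvP] at hle
    rw [card_filter_restrict_eq_card_extensionSlots hvP, show k = desList v + 1 by omega,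
      card_extensionSlots_desList_add_one hvP hvA hm]
    push_cast [show desList v ≤ m by omega]
    ring
  rw [Finset.card_eq_sum_card_fiberwise fun w => restrict_mem_asWords, Nat.cast_sum,
    Finset.sum_union hdisj, Finset.sum_congr rfl hkeep, Finset.sum_congr rfl hraise,
    Finset.sum_const, Finset.sum_const, nsmul_eq_mul, nsmul_eq_mul]
  ring

theorem ncard_eq_card_asWords (m k : ℕ) :
    {π : Equiv.Perm (Fin m) | InAS π ∧ desList (permWord π) = k}.ncard = (asWords m k).card := by
  rw [asWords, ← image_permWord_univ, Finset.filter_image,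
    Finset.card_image_of_injective _ permWord_injective, ← Set.ncard_coe_finset,
    Finset.coe_filter]
  simp [InAS, AvoidsSimsun]

theorem asWords_eq_empty (hmk : m ≤ k) (hk : 1 ≤ k) : asWords m k = ∅ :=
  Finset.eq_empty_of_forall_notMem fun w hw => by
    obtain ⟨hwP, -, rfl⟩ := mem_asWords.1 hw
    have := desList_le w
    rw [length_of_mem_permWords hwP] at this
    omega

theorem asWords_one_zero : asWords 1 0 = {[1]} := by
  have hAS : AvoidsSimsun [1] := fun c => by
    rw [not_hasSuccession_iff_isChain]
    by_cases hc : 1 ≤ c <;> simp [restrict, hc]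
  rw [asWords, show permWords 1 = {[1]} by simp [permWords, permutations],
    Finset.filter_singleton, if_pos ⟨hAS, rfl⟩]

end SimsunSuccession

open SimsunSuccession

/-- the numbers `a(n,k) = #{π ∈ AS_{n+1} : des(π) = k}` satisfy
`a(n+1,k) = k·a(n,k) + (n-k+2)·a(n,k-1)` for `n, k ≥ 1`, with `a(1,1) = 1` and
`a(1,k) = 0` for `k ≥ 2`. -/
theorem stmt7 (a : ℕ → ℕ → ℕ)
    (ha : ∀ n k : ℕ, a n k =
      {π : Equiv.Perm (Fin (n + 1)) | InAS π ∧ desList (permWord π) = k}.ncard) :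
    (∀ n k : ℕ, 1 ≤ n → 1 ≤ k →
      (a (n + 1) k : ℤ) = k * a n k + ((n : ℤ) - k + 2) * a n (k - 1)) ∧
    a 1 1 = 1 ∧ (∀ k : ℕ, 2 ≤ k → a 1 k = 0) := by
  have hcard : ∀ n k, a n k = (asWords (n + 1) k).card := fun n k => by
    rw [ha, ncard_eq_card_asWords]
  refine ⟨fun n k _ hk => ?_, ?_, fun k hk => ?_⟩
  · rw [hcard, hcard, hcard, card_asWords_succ (by omega) hk]
    push_cast
    ring
  · have h := card_asWords_succ (m := 1) (k := 1) le_rfl le_rfl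
    rw [asWords_eq_empty le_rfl le_rfl, asWords_one_zero, Finset.card_empty,
      Finset.card_singleton] at h
    rw [hcard, ← Nat.cast_inj (R := ℤ), h]
    norm_num
  · rw [hcard, asWords_eq_empty (by omega) (by omega), Finset.card_empty]
end

section
/- For n ≥ 1, the bivariate generating functions satisfy: the sum over all permutations π of [n] of x^{exc(π)}·q^{cyc(π)+1} equals the sum over all σ ∈ CS_{n+1} of x^{exc(σ)}·q^{cyc(σ)}. -/
open scoped Classical

/-- The number of excedances of `π`: indices `i` with `π(i) > i`. -/
def excPerm {n : ℕ} (π : Equiv.Perm (Fin n)) : ℕ :=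
  (Finset.univ.filter fun i : Fin n => i < π i).card

/-- The number of cycles of `π`, counting fixed points as cycles. -/
def cycPerm {n : ℕ} (π : Equiv.Perm (Fin n)) : ℕ :=
  Multiset.card π.cycleType + (Finset.univ.filter fun i : Fin n => π i = i).card

/-- The word of the cycle of `π` containing `s`, starting at `s` (1-based values). -/
noncomputable def cycleWord {n : ℕ} (π : Equiv.Perm (Fin n)) (s : Fin n) : List ℕ :=
  (List.range (orderOf (π.cycleOf s))).map fun i => (((π ^ i) s : ℕ) + 1)

/-- `s` is the smallest entry of its cycle. -/
def IsCycleMin {n : ℕ} (π : Equiv.Perm (Fin n)) (s : Fin n) : Prop :=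
  ∀ i : ℕ, s ≤ (π ^ i) s

/-- `CS_n`: permutations avoiding simsun cycle successions, i.e. for every `k`,
deleting the entries `> k` from each cycle of the standard cycle form leaves no cycle
containing two adjacent entries `j, j+1` in that order. -/
def InCS {n : ℕ} (π : Equiv.Perm (Fin n)) : Prop :=
  ∀ k : ℕ, ∀ s : Fin n, IsCycleMin π s →
    ¬ hasSuccession ((cycleWord π s).filter (fun x => x ≤ k))

/-!
Every permutation of `[n + 1]` arises in exactly one way from a permutation `τ` of `[n]` by
inserting the letter `n + 1` into its standard cycle form, either as a new fixed point or right
after a letter `a`. A new fixed point adds a cycle and no excedance; insertion after `a` keeps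
the cycles and adds an excedance unless `a` was one. The restrictions to `[k]`, `k ≤ n`, do not
change, and the full cycle word only gains the adjacency `a, n + 1`: the result lies in `CS`
iff `τ` does and `a ≠ n`. As `n` is never an excedance, `CS_{n+1} → CS_{n+2}` obeys the same
recurrence for `∑ g(exc, cyc)` as `S_n → S_{n+1}`, the new fixed point accounting for the
shift `q^{cyc + 1}`; induction on `n`, for all weights `g` at once, gives the identity.
-/

namespace SimsunCycle

open Equiv Equiv.Perm MulAction Finset

section Period

variable {α : Type*} (π : Perm α) (s : α)

theorem pow_apply_eq_self_iff_period_dvd {n : ℕ} : (π ^ n) s = s ↔ period π s ∣ n :=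
  pow_smul_eq_iff_period_dvd (m := π)

theorem pow_mod_period_apply (n : ℕ) : (π ^ (n % period π s)) s = (π ^ n) s :=
  pow_mod_period_smul (m := π) n

theorem period_eq_of_pow_apply_eq_self_iff {β : Type*} (σ : Perm β) (t : β)
    (h : ∀ n : ℕ, (π ^ n) s = s ↔ (σ ^ n) t = t) : period π s = period σ t :=
  Nat.dvd_right_iff_eq.1 fun n => by
    rw [← pow_apply_eq_self_iff_period_dvd, ← pow_apply_eq_self_iff_period_dvd, h]

theorem pow_apply_ne_self_of_lt_period {k : ℕ} (hk : 0 < k) (hkp : k < period π s) :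
    (π ^ k) s ≠ s :=
  pow_smul_ne_of_lt_period (m := π) hk hkp

variable {π s} in
theorem pow_apply_injOn_lt_period {i k : ℕ} (hi : i < period π s) (hk : k < period π s)
    (h : (π ^ i) s = (π ^ k) s) : i = k := by
  wlog hik : i ≤ k generalizing i k
  · exact (this hk hi h.symm (by omega)).symm
  by_contra hne
  refine pow_apply_ne_self_of_lt_period π s (k := k - i) (by omega) (by omega) ?_
  apply (π ^ i).injective
  rw [← mul_apply, ← pow_add, Nat.add_sub_cancel' hik, h]

variable [Finite α]

theorem period_pos : 0 < period π s :=
  period_pos_of_orderOf_pos (orderOf_pos π) s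

variable {π s} in
theorem exists_lt_period_pow_apply_eq {t : α} (h : π.SameCycle s t) :
    ∃ d < period π s, (π ^ d) s = t := by
  obtain ⟨i, -, hi⟩ := h.exists_pow_eq'
  exact ⟨i % period π s, Nat.mod_lt _ (period_pos π s), by rw [pow_mod_period_apply, hi]⟩

theorem orderOf_cycleOf [DecidableRel π.SameCycle] : orderOf (π.cycleOf s) = period π s := by
  refine Nat.dvd_right_iff_eq.1 fun n => ?_
  rw [orderOf_dvd_iff_pow_eq_one, ← pow_apply_eq_self_iff_period_dvd, ← cycleOf_pow_apply_self]
  by_cases hs : π s = s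
  · simp [(cycleOf_eq_one_iff π).2 hs]
  · exact (isCycle_cycleOf π hs).pow_eq_one_iff' (by rwa [cycleOf_apply_self])

end Period

section CycleWord

variable {n : ℕ} (π : Perm (Fin n)) (s : Fin n)

theorem cycleWord_eq :
    cycleWord π s = (List.range (period π s)).map fun i => ((π ^ i) s : ℕ) + 1 := by
  rw [cycleWord, orderOf_cycleOf]

theorem length_cycleWord : (cycleWord π s).length = period π s := by
  simp [cycleWord_eq]

theorem getElem_cycleWord {i : ℕ} (hi : i < (cycleWord π s).length) :
    (cycleWord π s)[i] = ((π ^ i) s : ℕ) + 1 := by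
  simp [cycleWord_eq]

variable {π s}

theorem mem_cycleWord {x : ℕ} : x ∈ cycleWord π s ↔ ∃ i : ℕ, ((π ^ i) s : ℕ) + 1 = x := by
  simp only [cycleWord_eq, List.mem_map, List.mem_range]
  refine ⟨fun ⟨i, _, hi⟩ => ⟨i, hi⟩, fun ⟨i, hi⟩ => ⟨i % period π s, ?_, ?_⟩⟩
  · exact Nat.mod_lt _ (period_pos π s)
  · rw [pow_mod_period_apply, hi]

theorem le_of_mem_cycleWord {x : ℕ} (hx : x ∈ cycleWord π s) : x ≤ n := by
  obtain ⟨i, rfl⟩ := mem_cycleWord.1 hx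
  exact ((π ^ i) s).isLt

theorem isCycleMin_iff_forall_mem_cycleWord :
    IsCycleMin π s ↔ ∀ x ∈ cycleWord π s, (s : ℕ) + 1 ≤ x := by
  simp only [IsCycleMin, mem_cycleWord, forall_exists_index, forall_apply_eq_imp_iff,
    Fin.le_iff_val_le_val, Nat.add_le_add_iff_right]

theorem isCycleMin_of_apply_eq_self (h : π s = s) : IsCycleMin π s := fun i =>
  (pow_apply_eq_self_of_apply_eq_self h i).ge

theorem exists_isCycleMin_sameCycle (π : Perm (Fin n)) (x : Fin n) :
    ∃ s, IsCycleMin π s ∧ π.SameCycle s x := by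
  let orbit := univ.filter (π.SameCycle x)
  have hx : x ∈ orbit := mem_filter.2 ⟨mem_univ x, SameCycle.refl π x⟩
  have hmin : π.SameCycle x (orbit.min' ⟨x, hx⟩) := by
    simpa [orbit] using orbit.min'_mem ⟨x, hx⟩
  refine ⟨orbit.min' ⟨x, hx⟩, fun i => orbit.min'_le _ ?_, hmin.symm⟩
  simpa [orbit] using hmin.trans ⟨i, rfl⟩

theorem IsCycleMin.eq_of_sameCycle {t : Fin n} (hs : IsCycleMin π s) (ht : IsCycleMin π t)
    (h : π.SameCycle s t) : s = t := by
  obtain ⟨i, -, rfl⟩ := h.exists_pow_eq'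
  obtain ⟨j, -, hj⟩ := h.symm.exists_pow_eq'
  exact le_antisymm (hs i) ((ht j).trans_eq hj)

theorem cycPerm_eq_card_isCycleMin (π : Perm (Fin n)) :
    cycPerm π = #(univ.filter (IsCycleMin π)) := by
  have hfixed : (univ.filter (IsCycleMin π)).filter (fun s => π s = s)
      = univ.filter (fun s => π s = s) := by
    ext s
    simpa using isCycleMin_of_apply_eq_self
  have hmoved : #((univ.filter (IsCycleMin π)).filter (fun s => ¬π s = s))
      = #π.cycleFactorsFinset := by
    refine card_bij (fun s _ => π.cycleOf s) (fun s hs => ?_) (fun s hs t ht hst => ?_)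
      (fun c hc => ?_)
    · simp only [mem_filter, mem_univ, true_and] at hs
      exact cycleOf_mem_cycleFactorsFinset_iff.2 (mem_support.2 hs.2)
    · simp only [mem_filter, mem_univ, true_and] at hs ht
      exact IsCycleMin.eq_of_sameCycle hs.1 ht.1
        ((sameCycle_iff_cycleOf_eq_of_mem_support (mem_support.2 hs.2) (mem_support.2 ht.2)).2 hst)
    · obtain ⟨x, hx⟩ := (mem_cycleFactorsFinset_iff.1 hc).1.nonempty_support
      obtain ⟨s, hs, hsx⟩ := exists_isCycleMin_sameCycle π x
      have hcs : c = π.cycleOf s := (cycle_is_cycleOf hx hc).trans hsx.cycleOf_eq.symm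
      refine ⟨s, ?_, hcs.symm⟩
      simpa [hs] using mem_support.1 (mem_support_cycleOf_iff.1 (hcs ▸ hx)).2
  conv_rhs => rw [← card_filter_add_card_filter_not (fun s => π s = s), hfixed, hmoved]
  rw [cycPerm, cycleType_def, Multiset.card_map, add_comm]
  rfl

end CycleWord

section Succession

theorem mem_append_cons_iff {α : Type*} {l₁ l₂ : List α} {x y : α} :
    x ∈ l₁ ++ y :: l₂ ↔ x = y ∨ x ∈ l₁ ++ l₂ := by
  simp only [List.mem_append, List.mem_cons]
  tauto

def AvoidsSimsunSuccessions (w : List ℕ) : Prop :=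
  ∀ k : ℕ, ¬hasSuccession (w.filter fun x => x ≤ k)

theorem not_hasSuccession_iff_isChain {w : List ℕ} :
    ¬hasSuccession w ↔ w.IsChain fun x y => y ≠ x + 1 := by
  simp only [hasSuccession, List.isChain_iff_getElem, not_exists, not_and]
  refine forall_congr' fun i => ⟨fun h hi => ?_, fun h hi => ?_⟩ <;>
    simpa [List.getElem?_eq_getElem hi, List.getElem?_eq_getElem (Nat.lt_of_succ_lt hi)] using h hi

theorem filter_le_of_forall_le {w : List ℕ} {k : ℕ} (h : ∀ x ∈ w, x ≤ k) :
    (w.filter fun x => x ≤ k) = w :=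
  List.filter_eq_self.2 fun x hx => decide_eq_true (h x hx)

theorem filter_le_append_cons_of_lt (w₁ w₂ : List ℕ) {y k : ℕ} (hk : k < y) :
    ((w₁ ++ y :: w₂).filter fun x => x ≤ k) = (w₁ ++ w₂).filter fun x => x ≤ k := by
  simp [List.filter_append, hk.not_ge]

theorem avoidsSimsunSuccessions_singleton (x : ℕ) : AvoidsSimsunSuccessions [x] := by
  rintro k ⟨i, hi, -⟩
  have : ([x].filter fun y => y ≤ k).length ≤ 1 := List.length_filter_le _ _
  omega

theorem avoidsSimsunSuccessions_append_cons_iff {w₁ w₂ : List ℕ} {M x : ℕ}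
    (hw : ∀ y ∈ w₁ ++ w₂, y ≤ M) (hx : w₁.getLast? = some x) :
    AvoidsSimsunSuccessions (w₁ ++ (M + 1) :: w₂) ↔ AvoidsSimsunSuccessions (w₁ ++ w₂) ∧ x ≠ M := by
  have hfull : ∀ k, M < k → ((w₁ ++ (M + 1) :: w₂).filter fun y => y ≤ k) = w₁ ++ (M + 1) :: w₂ :=
    fun k hk => filter_le_of_forall_le fun y hy => by
      rcases mem_append_cons_iff.1 hy with rfl | h
      · exact hk
      · exact (hw y h).trans hk.le
  have hlow : ∀ k, ((w₁ ++ w₂).filter fun y => y ≤ k)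
      = (w₁ ++ (M + 1) :: w₂).filter fun y => y ≤ min k M := by
    intro k
    rw [filter_le_append_cons_of_lt _ _ (by omega : min k M < M + 1)]
    exact List.filter_congr fun y hy => by have := hw y hy; simp only [decide_eq_decide]; omega
  constructor
  · intro h
    refine ⟨fun k => by rw [hlow]; exact h _, fun hxM => h (M + 1) ?_⟩
    rw [hfull _ M.lt_succ_self, ← not_not (a := hasSuccession _), not_hasSuccession_iff_isChain,
      List.isChain_append]
    exact fun hc => hc.2.2 x (by simp [hx]) (M + 1) (by simp) (by omega)
  · rintro ⟨h, hxM⟩ k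
    by_cases hk : k ≤ M
    · rw [filter_le_append_cons_of_lt _ _ (by omega)]
      exact h k
    have hchain := not_hasSuccession_iff_isChain.1 (filter_le_of_forall_le hw ▸ h M)
    rw [List.isChain_append] at hchain
    rw [hfull k (by omega), not_hasSuccession_iff_isChain, List.isChain_append, List.isChain_cons]
    refine ⟨hchain.1, ⟨fun y hy => ?_, hchain.2.1⟩, ?_⟩
    · have := hw y (List.mem_append_right _ (List.mem_of_mem_head? hy))
      omega
    · simp only [hx, Option.mem_def, Option.some.injEq, List.head?_cons, forall_eq']
      omega

end Succession

section InsertMax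

variable {M : ℕ}

def extendLast (τ : Perm (Fin M)) : Perm (Fin (M + 1)) :=
  finSuccEquivLast.symm.permCongr τ.optionCongr

/-- Insert the new largest point `M + 1` (that is, `Fin.last M`) into the cycle form of `τ`:
as a fixed point for `none`, right after `a` for `some a`. -/
def insertMax (τ : Perm (Fin M)) (o : Option (Fin M)) : Perm (Fin (M + 1)) :=
  extendLast τ * swap (finSuccEquivLast.symm o) (Fin.last M)

variable (τ : Perm (Fin M)) (a : Fin M)

@[simp] theorem extendLast_castSucc (j : Fin M) : extendLast τ j.castSucc = (τ j).castSucc := by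
  simp [extendLast, permCongr_apply]

@[simp] theorem extendLast_last : extendLast τ (Fin.last M) = Fin.last M := by
  simp [extendLast, permCongr_apply]

@[simp] theorem insertMax_none : insertMax τ none = extendLast τ := by
  simp [insertMax, ← Perm.one_def]

@[simp] theorem insertMax_some_castSucc_self : insertMax τ (some a) a.castSucc = Fin.last M := by
  simp [insertMax]

@[simp] theorem insertMax_some_last : insertMax τ (some a) (Fin.last M) = (τ a).castSucc := by
  simp [insertMax, swap_apply_right]

theorem insertMax_some_castSucc_of_ne {j : Fin M} (h : j ≠ a) :
    insertMax τ (some a) j.castSucc = (τ j).castSucc := by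
  rw [insertMax, mul_apply, finSuccEquivLast_symm_some,
    swap_apply_of_ne_of_ne (by simpa using h) (Fin.castSucc_lt_last j).ne, extendLast_castSucc]

theorem insertMax_symm_last (o : Option (Fin M)) :
    (insertMax τ o).symm (Fin.last M) = finSuccEquivLast.symm o := by
  rw [symm_apply_eq, insertMax, mul_apply, swap_apply_left, extendLast_last]

theorem insertMax_bijective :
    Function.Bijective fun p : Perm (Fin M) × Option (Fin M) => insertMax p.1 p.2 := by
  refine (Fintype.bijective_iff_injective_and_card _).2 ⟨fun ⟨τ, o⟩ ⟨τ', o'⟩ h => ?_, ?_⟩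
  · have ho : o = o' := finSuccEquivLast.symm.injective <| by
      rw [← insertMax_symm_last τ o, ← insertMax_symm_last τ' o']
      exact congrArg (fun σ : Perm _ => σ.symm (Fin.last M)) h
    subst ho
    have hext : extendLast τ = extendLast τ' := mul_right_cancel h
    rw [optionCongr_injective (finSuccEquivLast.symm.permCongr.injective hext)]
  · simp [Fintype.card_perm, Nat.factorial_succ, mul_comm]

theorem pow_apply_castSucc_of_forall_lt {σ : Perm (Fin (M + 1))} {j : Fin M} {n : ℕ}
    (h : ∀ i < n, σ ((τ ^ i) j).castSucc = ((τ ^ (i + 1)) j).castSucc) :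
    (σ ^ n) j.castSucc = ((τ ^ n) j).castSucc := by
  induction n with
  | zero => rfl
  | succ n ih => rw [pow_succ', mul_apply, ih fun i hi => h i (by omega), h n n.lt_succ_self]

theorem cycleWord_castSucc_of_forall_pow {σ : Perm (Fin (M + 1))} {j : Fin M}
    (h : ∀ n : ℕ, (σ ^ n) j.castSucc = ((τ ^ n) j).castSucc) :
    cycleWord σ j.castSucc = cycleWord τ j := by
  have hp : period σ j.castSucc = period τ j :=
    period_eq_of_pow_apply_eq_self_iff _ _ _ _ fun n => by rw [h, Fin.castSucc_inj]
  simp [cycleWord_eq, hp, h]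

theorem isCycleMin_castSucc_iff_of_cycleWord {σ : Perm (Fin (M + 1))} {j : Fin M}
    (h : cycleWord σ j.castSucc = cycleWord τ j) : IsCycleMin σ j.castSucc ↔ IsCycleMin τ j := by
  simp [isCycleMin_iff_forall_mem_cycleWord, h]

theorem cycleWord_extendLast_castSucc (j : Fin M) :
    cycleWord (extendLast τ) j.castSucc = cycleWord τ j :=
  cycleWord_castSucc_of_forall_pow τ fun _ =>
    pow_apply_castSucc_of_forall_lt τ fun i _ => by rw [extendLast_castSucc, pow_succ', mul_apply]

theorem cycleWord_extendLast_last : cycleWord (extendLast τ) (Fin.last M) = [M + 1] := by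
  have : period (extendLast τ) (Fin.last M) = 1 := period_eq_one_iff.2 (extendLast_last τ)
  simp [cycleWord_eq, this]

theorem isCycleMin_extendLast_castSucc_iff (j : Fin M) :
    IsCycleMin (extendLast τ) j.castSucc ↔ IsCycleMin τ j :=
  isCycleMin_castSucc_iff_of_cycleWord τ (cycleWord_extendLast_castSucc τ j)

theorem cycPerm_extendLast : cycPerm (extendLast τ) = cycPerm τ + 1 := by
  rw [cycPerm_eq_card_isCycleMin, cycPerm_eq_card_isCycleMin, card_filter, card_filter,
    Fin.sum_univ_castSucc]
  simp [isCycleMin_extendLast_castSucc_iff, isCycleMin_of_apply_eq_self (extendLast_last τ)]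

theorem excPerm_extendLast : excPerm (extendLast τ) = excPerm τ := by
  rw [excPerm, excPerm, card_filter, card_filter, Fin.sum_univ_castSucc]
  simp

theorem cycleWord_insertMax_some_of_not_sameCycle {j : Fin M} (h : ¬τ.SameCycle j a) :
    cycleWord (insertMax τ (some a)) j.castSucc = cycleWord τ j :=
  cycleWord_castSucc_of_forall_pow τ fun _ =>
    pow_apply_castSucc_of_forall_lt τ fun i _ => by
      rw [insertMax_some_castSucc_of_ne τ a fun hi => h ⟨i, by rwa [zpow_natCast]⟩, pow_succ',
        mul_apply]

section SameCycle

variable {τ a} {j : Fin M} {d : ℕ} (hd : d < period τ j) (hda : (τ ^ d) j = a)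
include hd hda

theorem insertMax_some_pow_castSucc_of_le {i : ℕ} (hi : i ≤ d) :
    (insertMax τ (some a) ^ i) j.castSucc = ((τ ^ i) j).castSucc :=
  pow_apply_castSucc_of_forall_lt τ fun k hk => by
    have hne : (τ ^ k) j ≠ a := fun h =>
      (Nat.ne_of_lt (by omega)) (pow_apply_injOn_lt_period (by omega) hd (h.trans hda.symm))
    rw [insertMax_some_castSucc_of_ne τ a hne, pow_succ', mul_apply]

theorem insertMax_some_pow_succ_castSucc :
    (insertMax τ (some a) ^ (d + 1)) j.castSucc = Fin.last M := by
  rw [pow_succ', mul_apply, insertMax_some_pow_castSucc_of_le hd hda le_rfl, hda,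
    insertMax_some_castSucc_self]

theorem insertMax_some_pow_succ_castSucc_of_lt {i : ℕ} (hdi : d < i) (hi : i ≤ period τ j) :
    (insertMax τ (some a) ^ (i + 1)) j.castSucc = ((τ ^ i) j).castSucc := by
  induction i, hdi using Nat.le_induction with
  | base =>
    rw [pow_succ', mul_apply, insertMax_some_pow_succ_castSucc hd hda, insertMax_some_last,
      ← hda, ← mul_apply, ← pow_succ']
  | succ i hdi ih =>
    have hne : (τ ^ i) j ≠ a := fun h =>
      (Nat.ne_of_gt (by omega)) (pow_apply_injOn_lt_period (by omega) hd (h.trans hda.symm))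
    rw [pow_succ', mul_apply, ih (by omega), insertMax_some_castSucc_of_ne τ a hne,
      ← mul_apply, ← pow_succ']

theorem period_insertMax_some : period (insertMax τ (some a)) j.castSucc = period τ j + 1 := by
  have hfix : (insertMax τ (some a) ^ (period τ j + 1)) j.castSucc = j.castSucc := by
    rw [insertMax_some_pow_succ_castSucc_of_lt hd hda hd le_rfl,
      (pow_apply_eq_self_iff_period_dvd τ j).2 dvd_rfl]
  refine le_antisymm (Nat.le_of_dvd (by omega) ((pow_apply_eq_self_iff_period_dvd _ _).1 hfix))
    (le_period (period_pos _ _) fun m hm hmp heq => ?_)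
  change (insertMax τ (some a) ^ m) j.castSucc = j.castSucc at heq
  rcases lt_trichotomy m (d + 1) with hmd | rfl | hmd
  · rw [insertMax_some_pow_castSucc_of_le hd hda (by omega), Fin.castSucc_inj] at heq
    exact pow_apply_ne_self_of_lt_period τ j hm (by omega) heq
  · rw [insertMax_some_pow_succ_castSucc hd hda] at heq
    exact (Fin.castSucc_lt_last j).ne' heq
  · obtain ⟨i, rfl⟩ : ∃ i, m = i + 1 := ⟨m - 1, by omega⟩
    rw [insertMax_some_pow_succ_castSucc_of_lt hd hda (by omega) (by omega), Fin.castSucc_inj]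
      at heq
    exact pow_apply_ne_self_of_lt_period τ j (by omega) (by omega) heq

theorem cycleWord_insertMax_some :
    cycleWord (insertMax τ (some a)) j.castSucc
      = (cycleWord τ j).take (d + 1) ++ (M + 1) :: (cycleWord τ j).drop (d + 1) := by
  have hlen := length_cycleWord τ j
  refine List.ext_getElem ?_ fun i h₁ h₂ => ?_
  · simp only [length_cycleWord, period_insertMax_some hd hda, List.length_append,
      List.length_take, List.length_cons, List.length_drop]
    omega
  rw [length_cycleWord, period_insertMax_some hd hda] at h₁
  have htake : ((cycleWord τ j).take (d + 1)).length = d + 1 := by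
    rw [List.length_take]; omega
  rw [getElem_cycleWord]
  rcases lt_trichotomy i (d + 1) with hid | rfl | hid
  · rw [List.getElem_append_left (by omega), List.getElem_take, getElem_cycleWord,
      insertMax_some_pow_castSucc_of_le hd hda (by omega), Fin.val_castSucc]
  · simp [List.getElem_append_right, htake, insertMax_some_pow_succ_castSucc hd hda]
  · obtain ⟨t, rfl⟩ : ∃ t, i = d + 1 + t + 1 := ⟨i - (d + 2), by omega⟩
    rw [insertMax_some_pow_succ_castSucc_of_lt hd hda (by omega) (by omega),
      List.getElem_append_right (by omega)]
    simp only [htake, show d + 1 + t + 1 - (d + 1) = t + 1 by omega, List.getElem_cons_succ,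
      List.getElem_drop, getElem_cycleWord, Fin.val_castSucc]

end SameCycle

theorem isCycleMin_insertMax_some_castSucc_iff (j : Fin M) :
    IsCycleMin (insertMax τ (some a)) j.castSucc ↔ IsCycleMin τ j := by
  by_cases h : τ.SameCycle j a
  · obtain ⟨d, hd, hda⟩ := exists_lt_period_pow_apply_eq h
    simp only [isCycleMin_iff_forall_mem_cycleWord, cycleWord_insertMax_some hd hda,
      mem_append_cons_iff, List.take_append_drop, forall_eq_or_imp, Fin.val_castSucc,
      and_iff_right_iff_imp]
    exact fun _ => by omega
  · exact isCycleMin_castSucc_iff_of_cycleWord τ (cycleWord_insertMax_some_of_not_sameCycle τ a h)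

theorem not_isCycleMin_insertMax_some_last : ¬IsCycleMin (insertMax τ (some a)) (Fin.last M) :=
  fun h => (Fin.castSucc_lt_last (τ a)).not_ge (by simpa using h 1)

theorem cycPerm_insertMax_some : cycPerm (insertMax τ (some a)) = cycPerm τ := by
  rw [cycPerm_eq_card_isCycleMin, cycPerm_eq_card_isCycleMin, card_filter, card_filter,
    Fin.sum_univ_castSucc]
  simp [isCycleMin_insertMax_some_castSucc_iff, not_isCycleMin_insertMax_some_last]

theorem excPerm_insertMax_some :
    excPerm (insertMax τ (some a)) = if a < τ a then excPerm τ else excPerm τ + 1 := by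
  have hrest : ∀ j ∈ univ.erase a, (if j.castSucc < insertMax τ (some a) j.castSucc then 1 else 0)
      = if j < τ j then 1 else 0 := fun j hj => by
    simp [insertMax_some_castSucc_of_ne τ a (ne_of_mem_erase hj)]
  rw [excPerm, excPerm, card_filter, card_filter, Fin.sum_univ_castSucc,
    ← sum_erase_add _ _ (mem_univ a), ← sum_erase_add _ _ (mem_univ a), sum_congr rfl hrest]
  by_cases h : a < τ a <;> simp [Fin.castSucc_lt_last, (Fin.castSucc_lt_last _).le, h]

end InsertMax

section InCS

variable {M : ℕ} (τ : Perm (Fin M)) (a : Fin M)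

theorem inCS_iff_forall_isCycleMin {n : ℕ} (π : Perm (Fin n)) :
    InCS π ↔ ∀ s, IsCycleMin π s → AvoidsSimsunSuccessions (cycleWord π s) :=
  ⟨fun h s hs k => h k s hs, fun h k s hs => h s hs k⟩

theorem inCS_extendLast_iff : InCS (extendLast τ) ↔ InCS τ := by
  simp [inCS_iff_forall_isCycleMin, Fin.forall_fin_succ', isCycleMin_extendLast_castSucc_iff,
    cycleWord_extendLast_castSucc, cycleWord_extendLast_last, avoidsSimsunSuccessions_singleton]

theorem avoidsSimsunSuccessions_cycleWord_insertMax_some_iff (s : Fin M) :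
    AvoidsSimsunSuccessions (cycleWord (insertMax τ (some a)) s.castSucc)
      ↔ AvoidsSimsunSuccessions (cycleWord τ s) ∧ (τ.SameCycle s a → (a : ℕ) + 1 ≠ M) := by
  by_cases h : τ.SameCycle s a
  · obtain ⟨d, hd, hda⟩ := exists_lt_period_pow_apply_eq h
    have hlast : ((cycleWord τ s).take (d + 1)).getLast? = some ((a : ℕ) + 1) := by
      simp [List.getLast?_take, getElem_cycleWord, hda, length_cycleWord, hd]
    rw [cycleWord_insertMax_some hd hda, avoidsSimsunSuccessions_append_cons_iff _ hlast,
      List.take_append_drop]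
    · simp [h]
    · rw [List.take_append_drop]
      exact fun y hy => le_of_mem_cycleWord hy
  · simp [cycleWord_insertMax_some_of_not_sameCycle τ a h, h]

theorem inCS_insertMax_some_iff :
    InCS (insertMax τ (some a)) ↔ InCS τ ∧ (a : ℕ) + 1 ≠ M := by
  simp only [inCS_iff_forall_isCycleMin, Fin.forall_fin_succ',
    isCycleMin_insertMax_some_castSucc_iff,
    avoidsSimsunSuccessions_cycleWord_insertMax_some_iff, not_isCycleMin_insertMax_some_last,
    false_imp_iff, and_true]
  obtain ⟨s, hs, hsa⟩ := exists_isCycleMin_sameCycle τ a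
  exact ⟨fun h => ⟨fun t ht => (h t ht).1, (h s hs).2 hsa⟩,
    fun h t ht => ⟨h.1 t ht, fun _ => h.2⟩⟩

end InCS

section Counting

variable {M : ℕ}

/-- `∑ g (exc, cyc)` over the insertions of a new maximum into a permutation with `e`
excedances and `c` cycles, when `m` letters (among them all `e` excedances) may precede it:
the new fixed point adds a cycle, insertion after an excedance changes nothing, and insertion
after any of the other `m - e` letters adds an excedance. -/
def insertionStep (m : ℕ) (g : ℕ → ℕ → ℝ) (e c : ℕ) : ℝ :=
  g e (c + 1) + e * g e c + (m - e : ℕ) * g (e + 1) c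

theorem sum_perm_succ (F : Perm (Fin (M + 1)) → ℝ) :
    ∑ σ, F σ = ∑ τ : Perm (Fin M), (F (extendLast τ) + ∑ a, F (insertMax τ (some a))) := by
  rw [← Fintype.sum_bijective _ insertMax_bijective _ F fun _ => rfl, Fintype.sum_prod_type]
  simp only [Fintype.sum_option, insertMax_none]

theorem sum_ite_lt_apply (τ : Perm (Fin M)) (s : Finset (Fin M)) (hs : ∀ a, a < τ a → a ∈ s)
    (u v : ℝ) : ∑ a ∈ s, (if a < τ a then u else v) = excPerm τ * u + (#s - excPerm τ : ℕ) * v := by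
  have hexc : s.filter (fun a => a < τ a) = univ.filter (fun a => a < τ a) := by
    ext a
    simpa using hs a
  have := card_filter_add_card_filter_not (s := s) (fun a => a < τ a)
  rw [hexc, ← excPerm] at this
  rw [sum_ite, sum_const, sum_const, hexc, nsmul_eq_mul, nsmul_eq_mul, ← excPerm, ← this,
    Nat.add_sub_cancel_left]

theorem sum_insertMax_some (τ : Perm (Fin M)) (s : Finset (Fin M)) (hs : ∀ a, a < τ a → a ∈ s)
    (g : ℕ → ℕ → ℝ) :
    ∑ a ∈ s, g (excPerm (insertMax τ (some a))) (cycPerm (insertMax τ (some a)))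
      = excPerm τ * g (excPerm τ) (cycPerm τ)
        + (#s - excPerm τ : ℕ) * g (excPerm τ + 1) (cycPerm τ) := by
  rw [← sum_ite_lt_apply τ s hs]
  refine sum_congr rfl fun a _ => ?_
  rw [excPerm_insertMax_some, cycPerm_insertMax_some]
  split_ifs <;> rfl

theorem sum_perm_succ_eq_sum_insertionStep (g : ℕ → ℕ → ℝ) :
    ∑ σ : Perm (Fin (M + 1)), g (excPerm σ) (cycPerm σ)
      = ∑ τ : Perm (Fin M), insertionStep M g (excPerm τ) (cycPerm τ) := by
  rw [sum_perm_succ]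
  refine sum_congr rfl fun τ _ => ?_
  rw [sum_insertMax_some τ univ (fun a _ => mem_univ a), excPerm_extendLast, cycPerm_extendLast,
    card_univ, Fintype.card_fin, insertionStep, add_assoc]

theorem sum_inCS_succ_eq_sum_insertionStep {m : ℕ} (g : ℕ → ℕ → ℝ) :
    ∑ σ ∈ univ.filter (fun σ : Perm (Fin (m + 2)) => InCS σ), g (excPerm σ) (cycPerm σ)
      = ∑ τ ∈ univ.filter (fun τ : Perm (Fin (m + 1)) => InCS τ),
          insertionStep m g (excPerm τ) (cycPerm τ) := by
  rw [sum_filter, sum_perm_succ, sum_filter]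
  refine sum_congr rfl fun τ _ => ?_
  simp only [inCS_extendLast_iff, inCS_insertMax_some_iff]
  by_cases h : InCS τ
  · have hpos : univ.filter (fun a : Fin (m + 1) => (a : ℕ) + 1 ≠ m + 1)
        = univ.erase (Fin.last m) := by
      ext a
      simp [Fin.ext_iff]
    have hexc : ∀ a, a < τ a → a ∈ univ.erase (Fin.last m) := fun a ha =>
      mem_erase.2 ⟨(ha.trans_le (Fin.le_last _)).ne, mem_univ a⟩
    simp only [h, true_and, if_true]
    rw [← sum_filter, hpos, sum_insertMax_some τ _ hexc, excPerm_extendLast, cycPerm_extendLast,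
      card_erase_of_mem (mem_univ _), card_univ, Fintype.card_fin, Nat.add_sub_cancel,
      insertionStep, add_assoc]
  · simp [h]

theorem sum_perm_eq_sum_inCS_succ (n : ℕ) (g : ℕ → ℕ → ℝ) :
    ∑ π : Perm (Fin n), g (excPerm π) (cycPerm π + 1)
      = ∑ σ ∈ univ.filter (fun σ : Perm (Fin (n + 1)) => InCS σ), g (excPerm σ) (cycPerm σ) := by
  induction n generalizing g with
  | zero =>
    have hCS : ∀ τ : Perm (Fin 0), InCS τ := fun _ _ s => s.elim0
    rw [sum_filter, sum_perm_succ]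
    simp [inCS_extendLast_iff, hCS, excPerm_extendLast, cycPerm_extendLast]
  | succ n ih =>
    calc ∑ π : Perm (Fin (n + 1)), g (excPerm π) (cycPerm π + 1)
        = ∑ τ : Perm (Fin n), insertionStep n g (excPerm τ) (cycPerm τ + 1) :=
          sum_perm_succ_eq_sum_insertionStep fun e c => g e (c + 1)
      _ = _ := ih _
      _ = _ := (sum_inCS_succ_eq_sum_insertionStep g).symm

end Counting

end SimsunCycle

theorem stmt8_general (n : ℕ) (x q : ℝ) :
    ∑ π : Equiv.Perm (Fin n), x ^ excPerm π * q ^ (cycPerm π + 1) =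
    ∑ σ ∈ Finset.univ.filter (fun σ : Equiv.Perm (Fin (n + 1)) => InCS σ),
      x ^ excPerm σ * q ^ cycPerm σ :=
  SimsunCycle.sum_perm_eq_sum_inCS_succ n fun e c => x ^ e * q ^ c

/-- for `n ≥ 1`,
`∑_{π ∈ S_n} x^{exc(π)} q^{cyc(π)+1} = ∑_{σ ∈ CS_{n+1}} x^{exc(σ)} q^{cyc(σ)}`. -/
theorem stmt8 (n : ℕ) (hn : 1 ≤ n) (x q : ℝ) :
    ∑ π : Equiv.Perm (Fin n), x ^ excPerm π * q ^ (cycPerm π + 1) =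
    ∑ σ ∈ Finset.univ.filter (fun σ : Equiv.Perm (Fin (n + 1)) => InCS σ),
      x ^ excPerm σ * q ^ cycPerm σ :=
  stmt8_general n x q
end

section
/- For all n ≥ 1 and all k, ℓ ≥ 0, the number of permutations π of [n] with exc(π) = k and cyc(π) = ℓ equals the number of permutations σ ∈ CS_{n+1} with exc(σ) = k and cyc(σ) = ℓ+1. -/
open scoped Classical

open Equiv Equiv.Perm Finset

set_option linter.unusedSectionVars false
set_option linter.unusedVariables false
set_option linter.unreachableTactic false
set_option linter.unusedTactic false
set_option maxHeartbeats 1000000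

namespace CSAux

variable {N : ℕ}

/-- Insert the new largest element `Fin.last N` into the cycle structure of `π`. -/
noncomputable def ins (π : Perm (Fin N)) (x : Option (Fin N)) : Perm (Fin (N + 1)) :=
  finSuccEquivLast.symm.permCongr (Equiv.Perm.decomposeOption.symm (x.map π, π))

@[simp] lemma ins_none_castSucc (π : Perm (Fin N)) (i : Fin N) :
    ins π none (i.castSucc) = (π i).castSucc := by
  simp [ins, Equiv.permCongr_apply]

@[simp] lemma ins_none_last (π : Perm (Fin N)) :
    ins π none (Fin.last N) = Fin.last N := by
  simp [ins, Equiv.permCongr_apply]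

lemma ins_some_castSucc (π : Perm (Fin N)) (j i : Fin N) :
    ins π (some j) (i.castSucc) = if i = j then Fin.last N else (π i).castSucc := by
  simp only [ins, Equiv.permCongr_apply, finSuccEquivLast_castSucc, Option.map_some,
    Equiv.Perm.decomposeOption_symm_apply]
  by_cases h : i = j
  · subst h
    simp [Equiv.swap_apply_of_ne_of_ne]
  · have : π i ≠ π j := fun hc => h (π.injective hc)
    simp [Equiv.swap_apply_of_ne_of_ne, this, h]

@[simp] lemma ins_some_castSucc_self (π : Perm (Fin N)) (j : Fin N) :
    ins π (some j) (j.castSucc) = Fin.last N := by simp [ins_some_castSucc]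

@[simp] lemma ins_some_castSucc_ne (π : Perm (Fin N)) {j i : Fin N} (h : i ≠ j) :
    ins π (some j) (i.castSucc) = (π i).castSucc := by simp [ins_some_castSucc, h]

@[simp] lemma ins_some_last (π : Perm (Fin N)) (j : Fin N) :
    ins π (some j) (Fin.last N) = (π j).castSucc := by
  simp [ins, Equiv.permCongr_apply]

noncomputable def twist : Perm (Fin N) × Option (Fin N) ≃ Option (Fin N) × Perm (Fin N) where
  toFun p := (p.2.map p.1, p.1)
  invFun q := (q.2, q.1.map q.2.symm)
  left_inv := by rintro ⟨π, _ | j⟩ <;> simp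
  right_inv := by rintro ⟨_ | b, π⟩ <;> simp

noncomputable def insEquiv : Perm (Fin N) × Option (Fin N) ≃ Perm (Fin (N + 1)) :=
  twist.trans (Equiv.Perm.decomposeOption.symm.trans finSuccEquivLast.symm.permCongr)


section Period

variable {α : Type*} [DecidableEq α] [Fintype α]

lemma pow_apply_eq_self_iff_dvd (f : Perm α) (x : α) (m : ℕ) :
    (f ^ m) x = x ↔ orderOf (f.cycleOf x) ∣ m := by
  constructor
  · intro h
    by_cases hx : f x = x
    · have : f.cycleOf x = 1 := (Equiv.Perm.cycleOf_eq_one_iff f).2 hx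
      simp [this]
    · have hc : (f.cycleOf x).IsCycle := f.isCycle_cycleOf hx
      have hxs : x ∈ (f.cycleOf x).support := by
        rw [Equiv.Perm.mem_support_cycleOf_iff]
        exact ⟨Equiv.Perm.SameCycle.refl _ _, Equiv.Perm.mem_support.2 hx⟩
      have : ((f.cycleOf x) ^ m) x = x := by
        rw [Equiv.Perm.cycleOf_pow_apply_self]; exact h
      have h1 : (f.cycleOf x) ^ m = 1 := (hc.pow_eq_one_iff' (Equiv.Perm.mem_support.1 hxs)).2 this
      exact orderOf_dvd_of_pow_eq_one h1
  · rintro ⟨q, rfl⟩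
    rw [← Equiv.Perm.cycleOf_pow_apply_self, pow_mul, pow_orderOf_eq_one, one_pow, Equiv.Perm.one_apply]

lemma orderOf_cycleOf_eq (f : Perm α) (x : α) {m : ℕ} (hm : 0 < m)
    (h1 : (f ^ m) x = x) (h2 : ∀ i, 0 < i → i < m → (f ^ i) x ≠ x) :
    orderOf (f.cycleOf x) = m := by
  have hd : orderOf (f.cycleOf x) ∣ m := (pow_apply_eq_self_iff_dvd f x m).1 h1
  have hpos : 0 < orderOf (f.cycleOf x) := by
    have : IsOfFinOrder (f.cycleOf x) := isOfFinOrder_of_finite _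
    exact this.orderOf_pos
  rcases lt_trichotomy (orderOf (f.cycleOf x)) m with h | h | h
  · exact absurd ((pow_apply_eq_self_iff_dvd f x _).2 dvd_rfl) (h2 _ hpos h)
  · exact h
  · exact absurd hd (Nat.not_dvd_of_pos_of_lt hm h)

lemma orderOf_cycleOf_pos (f : Perm α) (x : α) : 0 < orderOf (f.cycleOf x) :=
  (isOfFinOrder_of_finite _).orderOf_pos

lemma pow_orderOf_cycleOf_apply (f : Perm α) (x : α) :
    (f ^ (orderOf (f.cycleOf x))) x = x :=
  (pow_apply_eq_self_iff_dvd f x _).2 dvd_rfl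

end Period

lemma excPerm_eq_sum {M : ℕ} (f : Perm (Fin M)) :
    excPerm f = ∑ i : Fin M, if i < f i then 1 else 0 := Finset.card_filter _ _

lemma excPerm_ins_none (π : Perm (Fin N)) : excPerm (ins π none) = excPerm π := by
  rw [excPerm_eq_sum, excPerm_eq_sum, Fin.sum_univ_castSucc]
  simp [ins_none_castSucc, ins_none_last, Fin.castSucc_lt_castSucc_iff]

lemma excPerm_ins_some (π : Perm (Fin N)) (j : Fin N) :
    excPerm (ins π (some j)) = if j < π j then excPerm π else excPerm π + 1 := by
  rw [excPerm_eq_sum, excPerm_eq_sum, Fin.sum_univ_castSucc]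
  have hlast : ¬ (Fin.last N < ins π (some j) (Fin.last N)) := by
    rw [ins_some_last]; exact fun h => absurd h (not_lt_of_gt (Fin.castSucc_lt_last _))
  rw [if_neg hlast, add_zero]
  have hj : j ∈ (univ : Finset (Fin N)) := mem_univ j
  rw [← Finset.sum_erase_add _ _ hj, ← Finset.sum_erase_add _ _ hj]
  have he : ∀ i ∈ univ.erase j,
      (if i.castSucc < ins π (some j) i.castSucc then 1 else 0) = if i < π i then 1 else 0 := by
    intro i hi
    have hij : i ≠ j := (Finset.mem_erase.1 hi).1
    rw [ins_some_castSucc, if_neg hij]; simp [Fin.castSucc_lt_castSucc_iff]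
  rw [Finset.sum_congr rfl he]
  have hjterm : (if (j.castSucc : Fin (N+1)) < ins π (some j) j.castSucc then 1 else 0) = 1 := by
    rw [ins_some_castSucc, if_pos rfl, if_pos (Fin.castSucc_lt_last _)]
  rw [hjterm]
  by_cases h : j < π j <;> simp [h] <;> omega

noncomputable def minCnt {M : ℕ} (f : Perm (Fin M)) : ℕ :=
  (Finset.univ.filter fun u => IsCycleMin f u).card

lemma isCycleMin_of_fixed {M : ℕ} {f : Perm (Fin M)} {u : Fin M} (h : f u = u) :
    IsCycleMin f u := fun i => le_of_eq (Equiv.Perm.pow_apply_eq_self_of_apply_eq_self h i).symm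

lemma sameCycle_le_of_min {M : ℕ} {f : Perm (Fin M)} {u v : Fin M}
    (hu : IsCycleMin f u) (h : f.SameCycle u v) : u ≤ v := by
  obtain ⟨i, hi, rfl⟩ := h.exists_pow_eq'
  exact hu i

lemma cycPerm_eq_minCnt {M : ℕ} (f : Perm (Fin M)) : cycPerm f = minCnt f := by
  classical
  have hcard : Multiset.card f.cycleType = f.cycleFactorsFinset.card := by
    unfold Equiv.Perm.cycleType
    simp
  rw [cycPerm, hcard, minCnt]
  rw [← Finset.card_filter_add_card_filter_not
    (s := Finset.univ.filter fun u => IsCycleMin f u) (p := fun u => f u = u)]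
  rw [Finset.filter_filter, Finset.filter_filter]
  have h1 : (Finset.univ.filter fun u => IsCycleMin f u ∧ f u = u)
      = Finset.univ.filter fun u : Fin M => f u = u := by
    ext u
    simp only [Finset.mem_filter, Finset.mem_univ, true_and]
    exact ⟨fun h => h.2, fun h => ⟨isCycleMin_of_fixed h, h⟩⟩
  have h2 : (Finset.univ.filter fun u => IsCycleMin f u ∧ ¬ f u = u).card
      = f.cycleFactorsFinset.card := by
    apply Finset.card_bij (fun u _ => f.cycleOf u)
    · intro u hu
      rw [Finset.mem_filter] at hu
      exact Equiv.Perm.cycleOf_mem_cycleFactorsFinset_iff.2 (Equiv.Perm.mem_support.2 hu.2.2)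
    · intro u hu v hv heq
      rw [Finset.mem_filter] at hu hv
      have hvs : v ∈ (f.cycleOf v).support := by
        rw [Equiv.Perm.mem_support_cycleOf_iff]
        exact ⟨Equiv.Perm.SameCycle.refl _ _, Equiv.Perm.mem_support.2 hv.2.2⟩
      have : v ∈ (f.cycleOf u).support := heq ▸ hvs
      have hsc : f.SameCycle u v := (Equiv.Perm.mem_support_cycleOf_iff.1 this).1
      exact le_antisymm (sameCycle_le_of_min hu.2.1 hsc) (sameCycle_le_of_min hv.2.1 hsc.symm)
    · intro γ hγ
      have hne : γ.support.Nonempty :=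
        (Equiv.Perm.mem_cycleFactorsFinset_iff.1 hγ).1.nonempty_support
      set u := γ.support.min' hne with hu
      have hus : u ∈ γ.support := γ.support.min'_mem hne
      have hγu : γ = f.cycleOf u := Equiv.Perm.cycle_is_cycleOf hus hγ
      have hufne : f u ≠ u := by
        have := Equiv.Perm.mem_support_cycleOf_iff.1 (hγu ▸ hus)
        exact Equiv.Perm.mem_support.1 this.2
      have hmin : IsCycleMin f u := by
        intro i
        by_cases h : (f ^ i) u = u
        · exact le_of_eq h.symm
        · have hsc : f.SameCycle u ((f ^ i) u) := ⟨(i : ℤ), by simp⟩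
          have : (f ^ i) u ∈ (f.cycleOf u).support := by
            rw [Equiv.Perm.mem_support_cycleOf_iff]
            exact ⟨hsc, Equiv.Perm.mem_support.2 hufne⟩
          exact Finset.min'_le _ _ (hγu ▸ this)
      exact ⟨u, Finset.mem_filter.2 ⟨Finset.mem_univ _, hmin, hufne⟩, hγu.symm⟩
  rw [h1, h2]
  ring

lemma pow_apply_ins_none (π : Perm (Fin N)) (s : Fin N) (i : ℕ) :
    ((ins π none) ^ i) s.castSucc = ((π ^ i) s).castSucc := by
  induction i with
  | zero => simp
  | succ i ih => rw [pow_succ', pow_succ', Equiv.Perm.mul_apply, ih,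
      Equiv.Perm.mul_apply, ins_none_castSucc]

lemma pow_apply_ins_none_last (π : Perm (Fin N)) (i : ℕ) :
    ((ins π none) ^ i) (Fin.last N) = Fin.last N := by
  induction i with
  | zero => simp
  | succ i ih => rw [pow_succ', Equiv.Perm.mul_apply, ih, ins_none_last]

/-- B2: every iterate of `castSucc s` under `ins π (some j)` is `last` or in the π-orbit. -/
lemma pow_apply_ins_some_mem (π : Perm (Fin N)) (j s : Fin N) (i : ℕ) :
    (∃ i'', ((ins π (some j)) ^ i) s.castSucc = ((π ^ i'') s).castSucc) ∨
    (((ins π (some j)) ^ i) s.castSucc = Fin.last N ∧ ∃ t, (π ^ t) s = j) := by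
  induction i with
  | zero => exact Or.inl ⟨0, by simp⟩
  | succ i ih =>
    rcases ih with ⟨i'', hi⟩ | ⟨hi, t, ht⟩
    · by_cases h : (π ^ i'') s = j
      · exact Or.inr ⟨by rw [pow_succ', Equiv.Perm.mul_apply, hi, h, ins_some_castSucc, if_pos rfl],
          ⟨i'', h⟩⟩
      · exact Or.inl ⟨i'' + 1, by rw [pow_succ', Equiv.Perm.mul_apply, hi, ins_some_castSucc,
          if_neg h, pow_succ', Equiv.Perm.mul_apply]⟩
    · exact Or.inl ⟨t + 1, by rw [pow_succ', Equiv.Perm.mul_apply, hi, ins_some_last, ← ht,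
        pow_succ', Equiv.Perm.mul_apply]⟩

/-- B1: the π-orbit of `s` is hit (under castSucc) by the σ-orbit of `castSucc s`. -/
lemma exists_pow_apply_ins_some (π : Perm (Fin N)) (j s : Fin N) (i : ℕ) :
    ∃ i', ((ins π (some j)) ^ i') s.castSucc = ((π ^ i) s).castSucc := by
  induction i with
  | zero => exact ⟨0, by simp⟩
  | succ i ih =>
    obtain ⟨i', hi⟩ := ih
    by_cases h : (π ^ i) s = j
    · refine ⟨i' + 2, ?_⟩
      rw [pow_succ', Equiv.Perm.mul_apply, pow_succ', Equiv.Perm.mul_apply, hi, h,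
        ins_some_castSucc, if_pos rfl, ins_some_last, ← h, pow_succ', Equiv.Perm.mul_apply]
    · refine ⟨i' + 1, ?_⟩
      rw [pow_succ', Equiv.Perm.mul_apply, hi, ins_some_castSucc, if_neg h,
        pow_succ', Equiv.Perm.mul_apply]

lemma isCycleMin_ins_none_iff (π : Perm (Fin N)) (s : Fin N) :
    IsCycleMin (ins π none) s.castSucc ↔ IsCycleMin π s := by
  constructor
  · intro h i
    have := h i
    rw [pow_apply_ins_none] at this
    exact Fin.castSucc_le_castSucc_iff.1 this
  · intro h i
    rw [pow_apply_ins_none]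
    exact Fin.castSucc_le_castSucc_iff.2 (h i)

lemma isCycleMin_ins_none_last (π : Perm (Fin N)) :
    IsCycleMin (ins π none) (Fin.last N) := by
  intro i; rw [pow_apply_ins_none_last]

lemma isCycleMin_ins_some_iff (π : Perm (Fin N)) (j s : Fin N) :
    IsCycleMin (ins π (some j)) s.castSucc ↔ IsCycleMin π s := by
  constructor
  · intro h i
    obtain ⟨i', hi⟩ := exists_pow_apply_ins_some π j s i
    have := h i'
    rw [hi] at this
    exact Fin.castSucc_le_castSucc_iff.1 this
  · intro h i
    rcases pow_apply_ins_some_mem π j s i with ⟨i'', hi⟩ | ⟨hi, _⟩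
    · rw [hi]; exact Fin.castSucc_le_castSucc_iff.2 (h i'')
    · rw [hi]; exact Fin.le_last _
lemma not_isCycleMin_ins_some_last (π : Perm (Fin N)) (j : Fin N) :
    ¬ IsCycleMin (ins π (some j)) (Fin.last N) := by
  intro h
  have := h 1
  rw [pow_one, ins_some_last] at this
  exact absurd this (not_le_of_gt (Fin.castSucc_lt_last _))

lemma minCnt_eq_sum {M : ℕ} (f : Perm (Fin M)) :
    minCnt f = ∑ u : Fin M, if IsCycleMin f u then 1 else 0 := Finset.card_filter _ _

lemma minCnt_ins_none (π : Perm (Fin N)) : minCnt (ins π none) = minCnt π + 1 := by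
  rw [minCnt_eq_sum, minCnt_eq_sum, Fin.sum_univ_castSucc]
  congr 1
  · exact Finset.sum_congr rfl fun s _ => by rw [if_congr (isCycleMin_ins_none_iff π s) rfl rfl]
  · rw [if_pos (isCycleMin_ins_none_last π)]

lemma minCnt_ins_some (π : Perm (Fin N)) (j : Fin N) : minCnt (ins π (some j)) = minCnt π := by
  rw [minCnt_eq_sum, minCnt_eq_sum, Fin.sum_univ_castSucc,
    if_neg (not_isCycleMin_ins_some_last π j), add_zero]
  exact Finset.sum_congr rfl fun s _ => by rw [if_congr (isCycleMin_ins_some_iff π j s) rfl rfl]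

lemma cycPerm_ins_none (π : Perm (Fin N)) : cycPerm (ins π none) = cycPerm π + 1 := by
  rw [cycPerm_eq_minCnt, cycPerm_eq_minCnt, minCnt_ins_none]

lemma cycPerm_ins_some (π : Perm (Fin N)) (j : Fin N) :
    cycPerm (ins π (some j)) = cycPerm π := by
  rw [cycPerm_eq_minCnt, cycPerm_eq_minCnt, minCnt_ins_some]

lemma getD_map_range (G : ℕ → ℕ) {M i : ℕ} (h : i < M) :
    (((List.range M).map G).getD i 0) = G i := by
  rw [List.getD_eq_getElem _ _ (by simpa using h)]
  simp

lemma hasSuccession_map_range_iff (G : ℕ → ℕ) (M : ℕ) :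
    hasSuccession ((List.range M).map G) ↔ ∃ i, i + 1 < M ∧ G (i + 1) = G i + 1 := by
  unfold hasSuccession
  simp only [List.length_map, List.length_range]
  constructor
  · rintro ⟨i, hi, hs⟩
    refine ⟨i, hi, ?_⟩
    rwa [getD_map_range G hi, getD_map_range G (Nat.lt_of_succ_lt hi)] at hs
  · rintro ⟨i, hi, hs⟩
    refine ⟨i, hi, ?_⟩
    rwa [getD_map_range G hi, getD_map_range G (Nat.lt_of_succ_lt hi)]

lemma not_hasSuccession_short {w : List ℕ} (h : w.length ≤ 1) : ¬ hasSuccession w := by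
  rintro ⟨i, hi, -⟩
  omega

lemma hasSuccession_cycleWord_iff {M : ℕ} (f : Perm (Fin M)) (s : Fin M) :
    hasSuccession (cycleWord f s) ↔
      ∃ i, i + 1 < orderOf (f.cycleOf s) ∧ (((f ^ (i+1)) s : ℕ) + 1) = (((f ^ i) s : ℕ) + 1) + 1 :=
  hasSuccession_map_range_iff _ _

lemma pow_ne_self_of_lt {α : Type*} [DecidableEq α] [Fintype α] (f : Perm α) (x : α) {i : ℕ}
    (h0 : 0 < i) (h : i < orderOf (f.cycleOf x)) : (f ^ i) x ≠ x := fun hc =>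
  Nat.not_dvd_of_pos_of_lt h0 h ((pow_apply_eq_self_iff_dvd f x i).1 hc)

lemma cycleWord_eq_of_pow_eq (σ : Perm (Fin (N+1))) (π : Perm (Fin N)) (s : Fin N)
    (h : ∀ i, (σ ^ i) s.castSucc = ((π ^ i) s).castSucc) :
    cycleWord σ s.castSucc = cycleWord π s := by
  have hord : orderOf (σ.cycleOf s.castSucc) = orderOf (π.cycleOf s) := by
    apply orderOf_cycleOf_eq σ _ (orderOf_cycleOf_pos π s)
    · rw [h, pow_orderOf_cycleOf_apply]
    · intro i h0 hi hc
      rw [h] at hc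
      exact pow_ne_self_of_lt π s h0 hi (Fin.castSucc_injective N hc)
  unfold cycleWord
  rw [hord]
  exact List.map_congr_left fun i _ => by rw [h, Fin.coe_castSucc]

lemma cycleWord_ins_none (π : Perm (Fin N)) (s : Fin N) :
    cycleWord (ins π none) s.castSucc = cycleWord π s :=
  cycleWord_eq_of_pow_eq _ _ _ (pow_apply_ins_none π s)

lemma cycleWord_ins_none_last (π : Perm (Fin N)) :
    cycleWord (ins π none) (Fin.last N) = [N + 1] := by
  have h1 : (ins π none).cycleOf (Fin.last N) = 1 :=
    (Equiv.Perm.cycleOf_eq_one_iff _).2 (ins_none_last π)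
  unfold cycleWord
  rw [h1, orderOf_one]
  have : List.range 1 = [0] := rfl
  rw [this, List.map_cons, List.map_nil, pow_zero]
  simp

lemma pow_apply_ins_some_notmem (π : Perm (Fin N)) (j s : Fin N)
    (hj : ∀ i, (π ^ i) s ≠ j) (i : ℕ) :
    ((ins π (some j)) ^ i) s.castSucc = ((π ^ i) s).castSucc := by
  induction i with
  | zero => simp
  | succ i ih =>
    rw [pow_succ', Equiv.Perm.mul_apply, ih, ins_some_castSucc, if_neg (hj i),
      pow_succ', Equiv.Perm.mul_apply]

lemma cycleWord_ins_some_notmem (π : Perm (Fin N)) (j s : Fin N)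
    (hj : ∀ i, (π ^ i) s ≠ j) :
    cycleWord (ins π (some j)) s.castSucc = cycleWord π s :=
  cycleWord_eq_of_pow_eq _ _ _ (pow_apply_ins_some_notmem π j s hj)

section Special

variable (π : Perm (Fin N)) (j s : Fin N) (t : ℕ)
  (ht : (π ^ t) s = j) (htmin : ∀ i, i < t → (π ^ i) s ≠ j)
  (htm : t < orderOf (π.cycleOf s))

local notation "σ" => ins π (some j)
local notation "m" => orderOf (π.cycleOf s)

include ht htmin in
lemma powD1 : ∀ i, i ≤ t → (σ ^ i) s.castSucc = ((π ^ i) s).castSucc := by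
  intro i hi
  induction i with
  | zero => simp
  | succ i ih =>
    rw [pow_succ', Equiv.Perm.mul_apply, ih (Nat.le_of_succ_le hi), ins_some_castSucc,
      if_neg (htmin i hi), pow_succ', Equiv.Perm.mul_apply]

include ht htmin in
lemma powD2 : (σ ^ (t + 1)) s.castSucc = Fin.last N := by
  rw [pow_succ', Equiv.Perm.mul_apply, powD1 π j s t ht htmin t le_rfl, ht,
    ins_some_castSucc, if_pos rfl]

include ht htmin in
lemma powD3 : ∀ q, t + 1 + q ≤ m → (σ ^ (t + 2 + q)) s.castSucc = ((π ^ (t + 1 + q)) s).castSucc := by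
  intro q hq
  induction q with
  | zero =>
    have : t + 2 = (t + 1) + 1 := rfl
    rw [this, pow_succ', Equiv.Perm.mul_apply, powD2 π j s t ht htmin, ins_some_last, ← ht,
      add_zero, pow_succ', Equiv.Perm.mul_apply]
  | succ q ih =>
    have hq' : t + 1 + q ≤ m := by omega
    have hne : (π ^ (t + 1 + q)) s ≠ j := by
      intro hc
      have hj : (π ^ (q + 1)) j = j := by
        rw [← ht, ← Equiv.Perm.mul_apply, ← pow_add]
        have : q + 1 + t = t + 1 + q := by omega
        rw [this, hc, ← ht]
      have hdvd : orderOf (π.cycleOf j) ∣ q + 1 := (pow_apply_eq_self_iff_dvd π j _).1 hj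
      have hOrd : π.cycleOf j = π.cycleOf s := by
        rw [← ht]; exact Equiv.Perm.cycleOf_self_apply_pow π t s
      rw [hOrd] at hdvd
      exact Nat.not_dvd_of_pos_of_lt (Nat.succ_pos q) (by omega) hdvd
    have e1 : t + 2 + (q + 1) = (t + 2 + q) + 1 := by omega
    have e2 : t + 1 + (q + 1) = (t + 1 + q) + 1 := by omega
    rw [e1, e2, pow_succ', Equiv.Perm.mul_apply, ih hq', ins_some_castSucc, if_neg hne,
      pow_succ', Equiv.Perm.mul_apply]

include ht htmin htm in
lemma powD4 : orderOf (Equiv.Perm.cycleOf σ s.castSucc) = m + 1 := by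
  apply orderOf_cycleOf_eq σ _ (Nat.succ_pos m)
  · show (ins π (some j) ^ (orderOf (π.cycleOf s) + 1)) s.castSucc = s.castSucc
    have e : m + 1 = t + 2 + (m - t - 1) := by omega
    have e2 : t + 1 + (m - t - 1) = m := by omega
    rw [e, powD3 π j s t ht htmin _ (by omega), e2, pow_orderOf_cycleOf_apply]
  · intro i h0 hi hc
    rcases Nat.lt_or_ge i (t + 1) with h | h
    · rw [powD1 π j s t ht htmin i (by omega)] at hc
      exact pow_ne_self_of_lt π s h0 (by omega) (Fin.castSucc_injective N hc)
    · rcases Nat.eq_or_lt_of_le h with h' | h'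
      · rw [← h', powD2 π j s t ht htmin] at hc
        exact absurd hc.symm (Fin.ne_of_lt (Fin.castSucc_lt_last s))
      · have e : i = t + 2 + (i - t - 2) := by omega
        have e2 : t + 1 + (i - t - 2) = i - 1 := by omega
        rw [e, powD3 π j s t ht htmin _ (by omega), e2] at hc
        exact pow_ne_self_of_lt π s (by omega) (by omega) (Fin.castSucc_injective N hc)

/-- value functions -/
noncomputable def hv (i : ℕ) : ℕ := ((π ^ i) s : ℕ) + 1
noncomputable def gv (i : ℕ) : ℕ := ((σ ^ i) s.castSucc : ℕ) + 1

lemma hv_le (i : ℕ) : hv π s i ≤ N := by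
  have := ((π ^ i) s).is_lt
  unfold hv; omega

lemma word_pi : cycleWord π s = (List.range m).map (hv π s) := rfl

include ht htmin htm in
lemma word_sigma : cycleWord σ s.castSucc = (List.range (m + 1)).map (gv π j s) := by
  unfold cycleWord
  rw [powD4 π j s t ht htmin htm]
  rfl

include ht htmin htm in
lemma gv_eq_low : ∀ i, i ≤ t → gv π j s i = hv π s i := by
  intro i hi
  unfold gv hv
  rw [powD1 π j s t ht htmin i hi, Fin.coe_castSucc]

include ht htmin in
lemma gv_eq_mid : gv π j s (t + 1) = N + 1 := by
  unfold gv
  rw [powD2 π j s t ht htmin, Fin.val_last]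

include ht htmin in
lemma gv_eq_high : ∀ i, t + 2 ≤ i → i ≤ m + 1 → gv π j s i = hv π s (i - 1) := by
  intro i h2 hm'
  have e : t + 2 + (i - t - 2) = i := by omega
  have e2 : t + 1 + (i - t - 2) = i - 1 := by omega
  have h3 := powD3 π j s t ht htmin (i - t - 2) (by omega)
  rw [e, e2] at h3
  unfold gv hv
  rw [h3, Fin.coe_castSucc]

lemma map_range_split (G : ℕ → ℕ) (a b : ℕ) :
    (List.range (a + b)).map G = (List.range a).map G ++ (List.range b).map (fun q => G (a + q)) := by
  rw [List.range_add, List.map_append, List.map_map]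
  rfl

include ht htmin htm in
lemma word_decomp :
    cycleWord σ s.castSucc =
      ((List.range (t+1)).map (hv π s)) ++ (N + 1) ::
        ((List.range (m - (t+1))).map fun q => hv π s (t + 1 + q)) := by
  rw [word_sigma π j s t ht htmin htm]
  have e : m + 1 = (t + 1) + (1 + (m - (t + 1))) := by omega
  rw [e, map_range_split (gv π j s) (t + 1) (1 + (m - (t + 1))),
    map_range_split (fun q => gv π j s (t + 1 + q)) 1 (m - (t + 1))]
  have h1 : (List.range 1).map (fun q => gv π j s (t + 1 + q)) = [N + 1] := by
    have : List.range 1 = [0] := rfl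
    rw [this, List.map_cons, List.map_nil, add_zero, gv_eq_mid π j s t ht htmin]
  rw [h1, List.singleton_append]
  congr 1
  · exact List.map_congr_left fun i hi =>
      gv_eq_low π j s t ht htmin htm i (by
        have := List.mem_range.1 hi; omega)
  · congr 1
    refine List.map_congr_left fun q hq => ?_
    have hq' : q < m - (t + 1) := List.mem_range.1 hq
    have e1 : t + 1 + (1 + q) = t + 2 + q := by omega
    rw [e1, gv_eq_high π j s t ht htmin (t + 2 + q) (by omega) (by omega)]
    congr 1
    omega

include ht htmin htm in
lemma word_pi_decomp :
    cycleWord π s =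
      ((List.range (t+1)).map (hv π s)) ++
        ((List.range (m - (t+1))).map fun q => hv π s (t + 1 + q)) := by
  rw [word_pi]
  have e : m = (t + 1) + (m - (t + 1)) := by omega
  nth_rewrite 1 [e]
  rw [map_range_split (hv π s) (t + 1) (m - (t + 1))]

include ht htmin htm in
lemma filter_word_eq {k : ℕ} (hk : k ≤ N) :
    (cycleWord σ s.castSucc).filter (fun x => x ≤ k) =
      (cycleWord π s).filter (fun x => x ≤ k) := by
  rw [word_decomp π j s t ht htmin htm, word_pi_decomp π j s t ht htmin htm,
    List.filter_append, List.filter_append, List.filter_cons]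
  simp only [decide_eq_true_eq]
  rw [if_neg (by omega)]

include ht htmin htm in
lemma hasSuccession_transfer :
    hasSuccession (cycleWord σ s.castSucc) →
      hasSuccession (cycleWord π s) ∨ (j : ℕ) + 1 = N := by
  rw [word_sigma π j s t ht htmin htm, word_pi]
  rw [hasSuccession_map_range_iff, hasSuccession_map_range_iff]
  rintro ⟨i, hi, hsucc⟩
  rcases Nat.lt_or_ge (i + 1) (t + 1) with h | h
  · left
    refine ⟨i, by omega, ?_⟩
    rwa [gv_eq_low π j s t ht htmin htm _ (by omega),
      gv_eq_low π j s t ht htmin htm _ (by omega)] at hsucc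
  · rcases Nat.eq_or_lt_of_le h with h' | h'
    · -- i = t
      right
      have hit : i = t := by omega
      rw [hit, gv_eq_mid π j s t ht htmin, gv_eq_low π j s t ht htmin htm _ le_rfl] at hsucc
      have : hv π s t = ((π ^ t) s : ℕ) + 1 := rfl
      rw [this, ht] at hsucc
      omega
    · rcases Nat.eq_or_lt_of_le h' with h'' | h''
      · -- i = t + 1
        exfalso
        have hit : i = t + 1 := by omega
        rw [hit, gv_eq_high π j s t ht htmin (t + 2) (by omega) (by omega),
          gv_eq_mid π j s t ht htmin] at hsucc
        have := hv_le π s (t + 2 - 1)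
        omega
      · -- i ≥ t + 2
        left
        refine ⟨i - 1, by omega, ?_⟩
        rw [gv_eq_high π j s t ht htmin (i+1) (by omega) (by omega),
          gv_eq_high π j s t ht htmin i (by omega) (by omega)] at hsucc
        have e : i + 1 - 1 = (i - 1) + 1 := by omega
        rwa [e] at hsucc

include ht htmin htm in
lemma hasSuccession_of_bad (hbad : (j : ℕ) + 1 = N) :
    hasSuccession (cycleWord σ s.castSucc) := by
  rw [word_sigma π j s t ht htmin htm, hasSuccession_map_range_iff]
  refine ⟨t, by omega, ?_⟩
  rw [gv_eq_mid π j s t ht htmin, gv_eq_low π j s t ht htmin htm _ le_rfl]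
  have : hv π s t = ((π ^ t) s : ℕ) + 1 := rfl
  rw [this, ht]
  omega

end Special

lemma mem_cycleWord_le {M : ℕ} (f : Perm (Fin M)) (s : Fin M) :
    ∀ e ∈ cycleWord f s, e ≤ M := by
  intro e he
  unfold cycleWord at he
  obtain ⟨i, -, rfl⟩ := List.mem_map.1 he
  have := ((f ^ i) s).is_lt
  omega

lemma filter_eq_self_of_le {w : List ℕ} {K k : ℕ} (h : ∀ e ∈ w, e ≤ K) (hK : K ≤ k) :
    w.filter (fun x => x ≤ k) = w :=
  List.filter_eq_self.2 fun a ha => decide_eq_true (le_trans (h a ha) hK)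

lemma filter_min_eq {w : List ℕ} {K : ℕ} (h : ∀ e ∈ w, e ≤ K) (k : ℕ) :
    w.filter (fun x => x ≤ k) = w.filter (fun x => x ≤ min k K) :=
  List.filter_congr fun x hx => by
    have := h x hx
    exact decide_eq_decide.2 (by omega)

lemma exists_min_in_orbit {M : ℕ} (π : Perm (Fin M)) (j : Fin M) :
    ∃ s, IsCycleMin π s ∧ ∃ b, (π ^ b) s = j := by
  set O : Finset (Fin M) := Finset.univ.filter fun v => π.SameCycle j v with hO
  have hjO : j ∈ O := Finset.mem_filter.2 ⟨Finset.mem_univ _, Equiv.Perm.SameCycle.refl _ _⟩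
  have hne : O.Nonempty := ⟨j, hjO⟩
  set s := O.min' hne with hs
  have hsO : s ∈ O := O.min'_mem hne
  have hsc : π.SameCycle j s := (Finset.mem_filter.1 hsO).2
  refine ⟨s, ?_, ?_⟩
  · intro i
    have hmem : (π ^ i) s ∈ O := by
      refine Finset.mem_filter.2 ⟨Finset.mem_univ _, ?_⟩
      exact hsc.trans ⟨(i : ℤ), by simp⟩
    exact O.min'_le _ hmem
  · obtain ⟨b, -, hb⟩ := hsc.symm.exists_pow_eq'
    exact ⟨b, hb⟩

lemma exists_min_t {M : ℕ} (π : Perm (Fin M)) (j s : Fin M) (h : ∃ i, (π ^ i) s = j) :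
    ∃ t, (π ^ t) s = j ∧ (∀ i, i < t → (π ^ i) s ≠ j) ∧ t < orderOf (π.cycleOf s) := by
  obtain ⟨i, hi⟩ := h
  have hm : 0 < orderOf (π.cycleOf s) := orderOf_cycleOf_pos π s
  have h' : (π ^ (i % orderOf (π.cycleOf s))) s = j := by
    rw [Equiv.Perm.pow_mod_orderOf_cycleOf_apply]; exact hi
  have hex : ∃ t, (π ^ t) s = j := ⟨_, h'⟩
  refine ⟨Nat.find hex, Nat.find_spec hex, fun i' hi' => Nat.find_min hex hi', ?_⟩
  have : Nat.find hex ≤ i % orderOf (π.cycleOf s) := Nat.find_min' hex h'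
  have := Nat.mod_lt i hm
  omega

lemma inCS_ins_none (π : Perm (Fin N)) : InCS (ins π none) ↔ InCS π := by
  constructor
  · intro h k s hmin
    have := h k s.castSucc ((isCycleMin_ins_none_iff π s).2 hmin)
    rwa [cycleWord_ins_none] at this
  · intro h k u humin
    induction u using Fin.lastCases with
    | last =>
      rw [cycleWord_ins_none_last]
      exact not_hasSuccession_short (le_trans (List.length_filter_le _ _) (by simp))
    | cast s =>
      rw [cycleWord_ins_none]
      exact h k s ((isCycleMin_ins_none_iff π s).1 humin)

lemma inCS_ins_some (π : Perm (Fin N)) (j : Fin N) :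
    InCS (ins π (some j)) ↔ (InCS π ∧ (j : ℕ) + 1 ≠ N) := by
  constructor
  · intro hσ
    constructor
    · intro k s hmin
      by_cases horb : ∃ i, (π ^ i) s = j
      · obtain ⟨t, ht, htmin, htm⟩ := exists_min_t π j s horb
        have hcsmin : IsCycleMin (ins π (some j)) s.castSucc :=
          (isCycleMin_ins_some_iff π j s).2 hmin
        rw [filter_min_eq (mem_cycleWord_le π s) k,
          ← filter_word_eq π j s t ht htmin htm (min_le_right k N)]
        exact hσ (min k N) s.castSucc hcsmin
      · push_neg at horb
        rw [← cycleWord_ins_some_notmem π j s horb]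
        exact hσ k s.castSucc ((isCycleMin_ins_some_iff π j s).2 hmin)
    · intro hbad
      obtain ⟨s₀, hmin₀, b, hb⟩ := exists_min_in_orbit π j
      obtain ⟨t, ht, htmin, htm⟩ := exists_min_t π j s₀ ⟨b, hb⟩
      have hsucc := hasSuccession_of_bad π j s₀ t ht htmin htm hbad
      have := hσ (N + 1) s₀.castSucc ((isCycleMin_ins_some_iff π j s₀).2 hmin₀)
      rw [filter_eq_self_of_le (mem_cycleWord_le (ins π (some j)) s₀.castSucc) le_rfl] at this
      exact this hsucc
  · rintro ⟨hπ, hne⟩ k u humin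
    induction u using Fin.lastCases with
    | last => exact absurd humin (not_isCycleMin_ins_some_last π j)
    | cast s =>
      have hmin : IsCycleMin π s := (isCycleMin_ins_some_iff π j s).1 humin
      by_cases horb : ∃ i, (π ^ i) s = j
      · obtain ⟨t, ht, htmin, htm⟩ := exists_min_t π j s horb
        rcases le_or_gt k N with hk | hk
        · rw [filter_word_eq π j s t ht htmin htm hk]
          exact hπ k s hmin
        · rw [filter_eq_self_of_le (mem_cycleWord_le (ins π (some j)) s.castSucc) hk]
          intro hsucc
          rcases hasSuccession_transfer π j s t ht htmin htm hsucc with hw | hbad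
          · have := hπ N s hmin
            rw [filter_eq_self_of_le (mem_cycleWord_le π s) le_rfl] at this
            exact this hw
          · exact hne hbad
      · push_neg at horb
        rw [cycleWord_ins_some_notmem π j s horb]
        exact hπ k s hmin

/-- the two counting functions -/
noncomputable def Fc (M k l : ℕ) : ℕ :=
  (Finset.univ.filter fun π : Perm (Fin M) => excPerm π = k ∧ cycPerm π = l).card

noncomputable def Gc (M k l : ℕ) : ℕ :=
  (Finset.univ.filter fun σ : Perm (Fin M) => InCS σ ∧ excPerm σ = k ∧ cycPerm σ = l).card

lemma card_filter_succ (Q : Perm (Fin (N + 1)) → Prop) [DecidablePred Q] :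
    (Finset.univ.filter Q).card =
      ∑ π : Perm (Fin N), ((if Q (ins π none) then 1 else 0) +
        ∑ j : Fin N, if Q (ins π (some j)) then 1 else 0) := by
  rw [Finset.card_filter]
  rw [← Equiv.sum_comp (insEquiv (N := N)) (fun σ => if Q σ then 1 else 0)]
  rw [Fintype.sum_prod_type]
  refine Finset.sum_congr rfl fun π _ => ?_
  rw [Fintype.sum_option]
  rfl

/-- generic inner sum computation -/
lemma inner_sum {M : ℕ} (π : Perm (Fin M)) (C : Fin M → Prop) (hC : ∀ j, j < π j → C j)
    (k : ℕ) (X : Prop) :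
    (∑ j : Fin M, if (C j ∧ ((if j < π j then excPerm π else excPerm π + 1) = k ∧ X))
        then 1 else 0) =
      (if (excPerm π = k ∧ X) then excPerm π else 0) +
        (if (excPerm π + 1 = k ∧ X) then (Finset.univ.filter fun j => ¬ j < π j ∧ C j).card
          else 0) := by
  rw [← Finset.sum_filter_add_sum_filter_not Finset.univ (fun j => j < π j)]
  congr 1
  · have h1 : ∀ j ∈ Finset.univ.filter (fun j => j < π j),
        (if (C j ∧ ((if j < π j then excPerm π else excPerm π + 1) = k ∧ X)) then 1 else 0)
          = (if (excPerm π = k ∧ X) then 1 else 0) := by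
      intro j hj
      have hj' : j < π j := (Finset.mem_filter.1 hj).2
      rw [if_pos hj']
      exact if_congr (by tauto) rfl rfl
    rw [Finset.sum_congr rfl h1, Finset.sum_const, smul_eq_mul]
    have : (Finset.univ.filter fun j => j < π j).card = excPerm π := rfl
    rw [this]
    split_ifs <;> omega
  · have h1 : ∀ j ∈ Finset.univ.filter (fun j => ¬ j < π j),
        (if (C j ∧ ((if j < π j then excPerm π else excPerm π + 1) = k ∧ X)) then 1 else 0)
          = (if (excPerm π + 1 = k ∧ X) then 1 else 0) * (if C j then 1 else 0) := by
      intro j hj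
      have hj' : ¬ j < π j := (Finset.mem_filter.1 hj).2
      rw [if_neg hj']
      split_ifs <;> tauto
    rw [Finset.sum_congr rfl h1, ← Finset.mul_sum]
    rw [← Finset.card_filter, Finset.filter_filter]
    have : (Finset.univ.filter fun j => ¬ j < π j ∧ C j).card
        = (Finset.univ.filter fun a => ¬ a < π a ∧ C a).card := rfl
    rw [this]
    split_ifs <;> omega

lemma card_nonexc {M : ℕ} (π : Perm (Fin M)) :
    (Finset.univ.filter fun j => ¬ j < π j ∧ True).card = M - excPerm π := by
  have h0 : (Finset.univ.filter fun j => ¬ j < π j ∧ True)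
      = Finset.univ.filter fun j : Fin M => ¬ j < π j := by
    apply Finset.filter_congr; intro j _; simp
  rw [h0]
  have := Finset.card_filter_add_card_filter_not (s := (Finset.univ : Finset (Fin M)))
    (p := fun j => j < π j)
  have hcard : (Finset.univ : Finset (Fin M)).card = M := by simp
  have h2 : excPerm π + (Finset.univ.filter fun j : Fin M => ¬ j < π j).card = M := by
    rw [hcard] at this; exact this
  omega

lemma card_nonexc_G {M : ℕ} (π : Perm (Fin (M + 1))) :
    (Finset.univ.filter fun j => ¬ j < π j ∧ (j : ℕ) + 1 ≠ M + 1).card = M - excPerm π := by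
  have hlast : ¬ (Fin.last M) < π (Fin.last M) := by
    intro h
    have := (π (Fin.last M)).le_last
    exact absurd (lt_of_lt_of_le h this) (lt_irrefl _)
  have h0 : (Finset.univ.filter fun j => ¬ j < π j ∧ (j : ℕ) + 1 ≠ M + 1)
      = (Finset.univ.filter fun j : Fin (M+1) => ¬ j < π j).erase (Fin.last M) := by
    ext j
    simp only [Finset.mem_filter, Finset.mem_univ, true_and, Finset.mem_erase]
    constructor
    · rintro ⟨h1, h2⟩
      refine ⟨fun hc => h2 ?_, h1⟩
      rw [hc, Fin.val_last]
    · rintro ⟨h1, h2⟩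
      refine ⟨h2, fun hc => h1 ?_⟩
      have : (j : ℕ) = M := by omega
      exact Fin.ext (by rw [this, Fin.val_last])
  have hmem : Fin.last M ∈ Finset.univ.filter fun j : Fin (M+1) => ¬ j < π j :=
    Finset.mem_filter.2 ⟨Finset.mem_univ _, hlast⟩
  rw [h0, Finset.card_erase_of_mem hmem]
  have := Finset.card_filter_add_card_filter_not (s := (Finset.univ : Finset (Fin (M+1))))
    (p := fun j => j < π j)
  have hcard : (Finset.univ : Finset (Fin (M+1))).card = M + 1 := by simp
  have h2 : excPerm π + (Finset.univ.filter fun j : Fin (M+1) => ¬ j < π j).card = M + 1 := by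
    rw [hcard] at this; exact this
  have hE : excPerm π ≤ M := by
    -- since last is not an excedance
    have hsub : (Finset.univ.filter fun j : Fin (M+1) => j < π j)
        ⊆ Finset.univ.erase (Fin.last M) := by
      intro j hj
      rcases Finset.mem_filter.1 hj with ⟨-, hj'⟩
      refine Finset.mem_erase.2 ⟨fun hc => ?_, Finset.mem_univ _⟩
      subst hc; exact hlast hj'
    have := Finset.card_le_card hsub
    rw [Finset.card_erase_of_mem (Finset.mem_univ _), hcard] at this
    exact this
  omega

lemma ite_congr_prop {p q : Prop} {h1 : Decidable p} {h2 : Decidable q} (h : p ↔ q) (a b : ℕ) :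
    (@ite _ p h1 a b) = (@ite _ q h2 a b) := by
  rcases Classical.em p with hp | hp
  · rw [if_pos hp, if_pos (h.1 hp)]
  · rw [if_neg hp, if_neg (fun hq => hp (h.2 hq))]

lemma ite_mul_form {p : Prop} {h1 h2 : Decidable p} (E k : ℕ) (h : p → E = k) :
    (@ite _ p h1 E 0) = k * (@ite _ p h2 1 0) := by
  rcases Classical.em p with hp | hp
  · rw [if_pos hp, if_pos hp, h hp]; ring
  · rw [if_neg hp, if_neg hp]; ring

lemma recF (N k l : ℕ) : Fc (N+1) k (l+1) = Fc N k l + k * Fc N k (l+1) +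
    ∑ π : Perm (Fin N), (if (excPerm π + 1 = k ∧ cycPerm π = l + 1) then N - excPerm π else 0) := by
  have h0 : Fc (N+1) k (l+1) =
      (Finset.univ.filter fun σ : Perm (Fin (N+1)) => excPerm σ = k ∧ cycPerm σ = l + 1).card := rfl
  rw [h0, card_filter_succ]
  have key : ∀ π : Perm (Fin N),
      ((if (excPerm (ins π none) = k ∧ cycPerm (ins π none) = l + 1) then 1 else 0) +
        ∑ j : Fin N, if (excPerm (ins π (some j)) = k ∧ cycPerm (ins π (some j)) = l + 1)
          then 1 else 0) =
      (if (excPerm π = k ∧ cycPerm π = l) then 1 else 0) +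
        (k * (if (excPerm π = k ∧ cycPerm π = l + 1) then 1 else 0) +
          (if (excPerm π + 1 = k ∧ cycPerm π = l + 1) then N - excPerm π else 0)) := by
    intro π
    have hsum := inner_sum π (fun _ => True) (fun _ _ => trivial) k (cycPerm π = l + 1)
    refine congrArg₂ (· + ·) ?_ (Eq.trans (Finset.sum_congr rfl fun j _ => ?_)
      (Eq.trans hsum (congrArg₂ (· + ·) ?_ ?_)))
    · refine if_congr ?_ rfl rfl
      rw [excPerm_ins_none, cycPerm_ins_none]
      constructor <;> rintro ⟨u1, u2⟩ <;> exact ⟨u1, by omega⟩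
    · refine ite_congr_prop ?_ _ _
      rw [excPerm_ins_some, cycPerm_ins_some]
      tauto
    · exact ite_mul_form _ _ (fun hp => hp.1)
    · rcases Classical.em (excPerm π + 1 = k ∧ cycPerm π = l + 1) with hp | hp
      · rw [if_pos hp, if_pos hp]
        have h2 := card_nonexc π
        convert h2 using 2
        exact (Finset.filter_congr_decidable _ _ _).trans
          (Finset.filter_congr_decidable _ _ _).symm
      · rw [if_neg hp, if_neg hp]
  rw [Finset.sum_congr rfl (fun π _ => key π), Finset.sum_add_distrib, Finset.sum_add_distrib,
    ← Finset.mul_sum]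
  have e1 : Fc N k l = ∑ π : Perm (Fin N),
      (if (excPerm π = k ∧ cycPerm π = l) then 1 else 0) := Finset.card_filter _ _
  have e2 : Fc N k (l+1) = ∑ π : Perm (Fin N),
      (if (excPerm π = k ∧ cycPerm π = l + 1) then 1 else 0) := Finset.card_filter _ _
  rw [e1, e2]
  ring

lemma recG (N k l : ℕ) : Gc (N+2) k (l+1) = Gc (N+1) k l + k * Gc (N+1) k (l+1) +
    ∑ π : Perm (Fin (N+1)),
      (if (InCS π ∧ excPerm π + 1 = k ∧ cycPerm π = l + 1) then N - excPerm π else 0) := by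
  have h0 : Gc (N+2) k (l+1) =
      (Finset.univ.filter fun σ : Perm (Fin (N+2)) =>
        InCS σ ∧ excPerm σ = k ∧ cycPerm σ = l + 1).card := rfl
  rw [h0, card_filter_succ]
  have key : ∀ π : Perm (Fin (N+1)),
      ((if (InCS (ins π none) ∧ excPerm (ins π none) = k ∧ cycPerm (ins π none) = l + 1)
          then 1 else 0) +
        ∑ j : Fin (N+1), if (InCS (ins π (some j)) ∧ excPerm (ins π (some j)) = k ∧
          cycPerm (ins π (some j)) = l + 1) then 1 else 0) =
      (if (InCS π ∧ excPerm π = k ∧ cycPerm π = l) then 1 else 0) +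
        (k * (if (InCS π ∧ excPerm π = k ∧ cycPerm π = l + 1) then 1 else 0) +
          (if (InCS π ∧ excPerm π + 1 = k ∧ cycPerm π = l + 1) then N - excPerm π else 0)) := by
    intro π
    have hC : ∀ j : Fin (N+1), j < π j → (j : ℕ) + 1 ≠ N + 1 := by
      intro j hj
      have h2 : (j : ℕ) < (π j : ℕ) := hj
      have h3 : (π j : ℕ) < N + 1 := (π j).is_lt
      omega
    have hsum := inner_sum π (fun j => (j : ℕ) + 1 ≠ N + 1) hC k (InCS π ∧ cycPerm π = l + 1)
    refine congrArg₂ (· + ·) ?_ (Eq.trans (Finset.sum_congr rfl fun j _ => ?_)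
      (Eq.trans hsum (congrArg₂ (· + ·) ?_ ?_)))
    · refine if_congr ?_ rfl rfl
      rw [inCS_ins_none, excPerm_ins_none, cycPerm_ins_none]
      constructor <;> rintro ⟨u1, u2, u3⟩ <;> exact ⟨u1, u2, by omega⟩
    · refine ite_congr_prop ?_ _ _
      rw [inCS_ins_some, excPerm_ins_some, cycPerm_ins_some]
      tauto
    · rcases Classical.em (excPerm π = k ∧ (InCS π ∧ cycPerm π = l + 1)) with hp | hp
      · rw [if_pos hp, if_pos ⟨hp.2.1, hp.1, hp.2.2⟩, hp.1]; ring
      · rw [if_neg hp, if_neg (fun hq => hp ⟨hq.2.1, hq.1, hq.2.2⟩)]; ring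
    · rcases Classical.em (excPerm π + 1 = k ∧ (InCS π ∧ cycPerm π = l + 1)) with hp | hp
      · rw [if_pos hp, if_pos ⟨hp.2.1, hp.1, hp.2.2⟩]
        have h2 := card_nonexc_G π
        convert h2 using 2
        exact (Finset.filter_congr_decidable _ _ _).trans
          (Finset.filter_congr_decidable _ _ _).symm
      · rw [if_neg hp, if_neg (fun hq => hp ⟨hq.2.1, hq.1, hq.2.2⟩)]
  rw [Finset.sum_congr rfl (fun π _ => key π), Finset.sum_add_distrib, Finset.sum_add_distrib,
    ← Finset.mul_sum]
  have e1 : Gc (N+1) k l = ∑ π : Perm (Fin (N+1)),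
      (if (InCS π ∧ excPerm π = k ∧ cycPerm π = l) then 1 else 0) := Finset.card_filter _ _
  have e2 : Gc (N+1) k (l+1) = ∑ π : Perm (Fin (N+1)),
      (if (InCS π ∧ excPerm π = k ∧ cycPerm π = l + 1) then 1 else 0) := Finset.card_filter _ _
  rw [e1, e2]
  ring

-- specializations
lemma recF0 (N l : ℕ) : Fc (N+1) 0 (l+1) = Fc N 0 l := by
  rw [recF]
  have h1 : ∀ π : Perm (Fin N),
      (if (excPerm π + 1 = 0 ∧ cycPerm π = l + 1) then N - excPerm π else 0) = 0 := by
    intro π; rw [if_neg]; rintro ⟨h, -⟩; omega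
  rw [Finset.sum_congr rfl fun π _ => h1 π]
  simp

lemma recFs (N k l : ℕ) : Fc (N+1) (k+1) (l+1) =
    Fc N (k+1) l + (k+1) * Fc N (k+1) (l+1) + (N - k) * Fc N k (l+1) := by
  rw [recF]
  congr 1
  have h1 : ∀ π : Perm (Fin N),
      (if (excPerm π + 1 = k + 1 ∧ cycPerm π = l + 1) then N - excPerm π else 0) =
      (N - k) * (if (excPerm π = k ∧ cycPerm π = l + 1) then 1 else 0) := by
    intro π
    split_ifs with h h' h'
    · obtain ⟨ha, -⟩ := h
      rw [show excPerm π = k by omega]; ring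
    · obtain ⟨ha, hb⟩ := h
      exact absurd ⟨by omega, hb⟩ h'
    · obtain ⟨ha, hb⟩ := h'
      exact absurd ⟨by omega, hb⟩ h
    · ring
  rw [Finset.sum_congr rfl fun π _ => h1 π, ← Finset.mul_sum, Fc, Finset.card_filter]

lemma recG0 (N l : ℕ) : Gc (N+2) 0 (l+1) = Gc (N+1) 0 l := by
  rw [recG]
  have h1 : ∀ π : Perm (Fin (N+1)),
      (if (InCS π ∧ excPerm π + 1 = 0 ∧ cycPerm π = l + 1) then N - excPerm π else 0) = 0 := by
    intro π; rw [if_neg]; rintro ⟨-, h, -⟩; omega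
  rw [Finset.sum_congr rfl fun π _ => h1 π]
  simp

lemma recGs (N k l : ℕ) : Gc (N+2) (k+1) (l+1) =
    Gc (N+1) (k+1) l + (k+1) * Gc (N+1) (k+1) (l+1) + (N - k) * Gc (N+1) k (l+1) := by
  rw [recG]
  congr 1
  have h1 : ∀ π : Perm (Fin (N+1)),
      (if (InCS π ∧ excPerm π + 1 = k + 1 ∧ cycPerm π = l + 1) then N - excPerm π else 0) =
      (N - k) * (if (InCS π ∧ excPerm π = k ∧ cycPerm π = l + 1) then 1 else 0) := by
    intro π
    split_ifs with h h' h'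
    · obtain ⟨-, ha, -⟩ := h
      rw [show excPerm π = k by omega]; ring
    · obtain ⟨hc, ha, hb⟩ := h
      exact absurd ⟨hc, by omega, hb⟩ h'
    · obtain ⟨hc, ha, hb⟩ := h'
      exact absurd ⟨hc, by omega, hb⟩ h
    · ring
  rw [Finset.sum_congr rfl fun π _ => h1 π, ← Finset.mul_sum, Gc, Finset.card_filter]

-- positivity of cycPerm for nonempty
lemma isCycleMin_zero {M : ℕ} (f : Perm (Fin (M+1))) : IsCycleMin f 0 :=
  fun _ => Fin.zero_le _

lemma cycPerm_pos {M : ℕ} (f : Perm (Fin (M+1))) : 0 < cycPerm f := by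
  rw [cycPerm_eq_minCnt]
  exact Finset.card_pos.2 ⟨0, Finset.mem_filter.2 ⟨Finset.mem_univ _, isCycleMin_zero f⟩⟩

lemma Fc_cyc_zero (M k : ℕ) : Fc (M+1) k 0 = 0 := by
  rw [Fc, Finset.card_eq_zero, Finset.filter_eq_empty_iff]
  rintro π - ⟨-, h2⟩
  exact absurd h2 (by have := cycPerm_pos π; omega)

lemma Gc_cyc_zero (M k : ℕ) : Gc (M+1) k 0 = 0 := by
  rw [Gc, Finset.card_eq_zero, Finset.filter_eq_empty_iff]
  rintro π - ⟨-, -, h2⟩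
  exact absurd h2 (by have := cycPerm_pos π; omega)

-- base cases
lemma perm_fin_zero_eq (π : Perm (Fin 0)) : π = 1 := Equiv.ext fun x => x.elim0

lemma excPerm_fin_zero (π : Perm (Fin 0)) : excPerm π = 0 := by
  rw [excPerm]
  simp [Finset.filter_eq_empty_iff]

lemma cycPerm_fin_zero (π : Perm (Fin 0)) : cycPerm π = 0 := by
  rw [perm_fin_zero_eq π, cycPerm]
  simp [Equiv.Perm.cycleType_one]

lemma Fc_zero (k l : ℕ) : Fc 0 k l = if k = 0 ∧ l = 0 then 1 else 0 := by
  rw [Fc]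
  by_cases h : k = 0 ∧ l = 0
  · rw [if_pos h]
    rw [Finset.filter_true_of_mem (fun π _ => by
      rw [excPerm_fin_zero, cycPerm_fin_zero]; exact ⟨h.1.symm, h.2.symm⟩)]
    rw [Finset.card_univ]
    simp [Fintype.card_perm]
  · rw [if_neg h]
    rw [Finset.card_eq_zero, Finset.filter_eq_empty_iff]
    intro π _
    rw [excPerm_fin_zero, cycPerm_fin_zero]
    tauto

lemma perm_fin_one_eq (π : Perm (Fin 1)) : π = 1 := Equiv.ext fun x => Subsingleton.elim _ _

lemma inCS_one {M : ℕ} : InCS (1 : Perm (Fin M)) := by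
  intro k s _
  have h1 : (1 : Perm (Fin M)).cycleOf s = 1 := (Equiv.Perm.cycleOf_eq_one_iff _).2 rfl
  have h2 : cycleWord (1 : Perm (Fin M)) s = [(s : ℕ) + 1] := by
    unfold cycleWord
    rw [h1, orderOf_one]
    have : List.range 1 = [0] := rfl
    rw [this, List.map_cons, List.map_nil, pow_zero]
    rfl
  rw [h2]
  exact not_hasSuccession_short (le_trans (List.length_filter_le _ _) (by simp))

lemma excPerm_fin_one (π : Perm (Fin 1)) : excPerm π = 0 := by
  rw [perm_fin_one_eq π, excPerm]
  simp [Finset.filter_eq_empty_iff]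

lemma cycPerm_fin_one (π : Perm (Fin 1)) : cycPerm π = 1 := by
  rw [perm_fin_one_eq π, cycPerm]
  rw [Equiv.Perm.cycleType_one]
  simp

lemma Gc_one (k l : ℕ) : Gc 1 k l = if k = 0 ∧ l = 1 then 1 else 0 := by
  rw [Gc]
  by_cases h : k = 0 ∧ l = 1
  · rw [if_pos h]
    rw [Finset.filter_true_of_mem (fun π _ => by
      rw [perm_fin_one_eq π]
      refine ⟨inCS_one, ?_, ?_⟩
      · rw [← perm_fin_one_eq π, excPerm_fin_one]; exact h.1.symm
      · rw [← perm_fin_one_eq π, cycPerm_fin_one]; exact h.2.symm)]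
    rw [Finset.card_univ]
    simp [Fintype.card_perm]
  · rw [if_neg h]
    rw [Finset.card_eq_zero, Finset.filter_eq_empty_iff]
    intro π _
    rw [excPerm_fin_one, cycPerm_fin_one]
    tauto

lemma Gc_cyc_one : ∀ M k, Gc (M+2) k 1 = 0 := by
  intro M
  induction M with
  | zero =>
    intro k
    cases k with
    | zero =>
      have := recG0 0 0
      rw [this, Gc_one]
      simp
    | succ k =>
      have := recGs 0 k 0
      rw [this, Gc_one, Gc_one, Gc_one]
      simp
  | succ M ih =>
    intro k
    cases k with
    | zero =>
      rw [recG0 (M+1) 0, Gc_cyc_zero]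
    | succ k =>
      rw [recGs (M+1) k 0, Gc_cyc_zero, ih (k+1), ih k]
      ring

theorem main : ∀ (nn k l : ℕ), Fc nn k l = Gc (nn+1) k (l+1) := by
  intro nn
  induction nn with
  | zero =>
    intro k l
    rw [Fc_zero, Gc_one]
    refine if_congr ?_ rfl rfl
    constructor <;> rintro ⟨h1, h2⟩ <;> exact ⟨h1, by omega⟩
  | succ n ih =>
    intro k l
    cases l with
    | zero =>
      rw [Fc_cyc_zero, Gc_cyc_one]
    | succ l =>
      cases k with
      | zero =>
        rw [recF0, recG0, ih 0 l]
      | succ k =>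
        rw [recFs, recGs, ih (k+1) l, ih (k+1) (l+1), ih k (l+1)]

end CSAux

/-- for `n ≥ 1` and `k, ℓ ≥ 0`, the number of permutations `π` of `[n]`
with `exc(π) = k` and `cyc(π) = ℓ` equals the number of `σ ∈ CS_{n+1}` with
`exc(σ) = k` and `cyc(σ) = ℓ+1`. -/
theorem stmt9 (n k l : ℕ) (hn : 1 ≤ n) :
    {π : Equiv.Perm (Fin n) | excPerm π = k ∧ cycPerm π = l}.ncard =
    {σ : Equiv.Perm (Fin (n + 1)) | InCS σ ∧ excPerm σ = k ∧ cycPerm σ = l + 1}.ncard := by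
  have h := CSAux.main n k l
  rw [Set.ncard_eq_toFinset_card', Set.ncard_eq_toFinset_card', Set.toFinset_setOf,
    Set.toFinset_setOf]
  unfold CSAux.Fc CSAux.Gc at h
  convert h using 2
end

section
/- For all n ≥ 1 and all a, b, c, d ≥ 0, the number of permutations π ∈ SP_n(132) with des(π)+1 = a, rpk(π) = b, exddes(π) = c and inv(π) = d equals the number of set partitions p of [n] with block(p) = a, nsingleton(p) = b, singleton(p) = c and fr(p) = d. -/
open scoped Classical

/-- A word contains the pattern `τ` consecutively: some window of `τ.length` adjacent
entries is order-isomorphic to `τ`. -/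
def containsPattern (τ w : List ℕ) : Prop :=
  ∃ i, i + τ.length ≤ w.length ∧ ∀ a < τ.length, ∀ b < τ.length,
    (τ.getD a 0 < τ.getD b 0 ↔ w.getD (i + a) 0 < w.getD (i + b) 0)

/-- `SP_n(τ)`: permutations all of whose restrictions to `[k]` avoid the consecutive
pattern `τ`. -/
def AvoidsSP {n : ℕ} (τ : List ℕ) (π : Equiv.Perm (Fin n)) : Prop :=
  ∀ k, ¬ containsPattern τ (restrict (permWord π) k)

/-- The number of right peaks: indices `i ∈ {2,…,n}` (1-based) with
`w(i-1) < w(i) > w(i+1)`, where `w(n+1) = 0`. -/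
def rpkList (w : List ℕ) : ℕ :=
  (List.range w.length).countP fun i =>
    decide (1 ≤ i ∧ w.getD (i - 1) 0 < w.getD i 0 ∧ w.getD (i + 1) 0 < w.getD i 0)

/-- The number of exterior double descents: indices `i ∈ [n]` (1-based) with
`w(i-1) > w(i) > w(i+1)`, where `w(0) = +∞` and `w(n+1) = 0`. -/
def exddesList (w : List ℕ) : ℕ :=
  (List.range w.length).countP fun i =>
    decide ((i = 0 ∨ w.getD i 0 < w.getD (i - 1) 0) ∧ w.getD (i + 1) 0 < w.getD i 0)

/-- The number of inversions of a word. -/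
def invList (w : List ℕ) : ℕ :=
  ((Finset.range w.length ×ˢ Finset.range w.length).filter fun p =>
    p.1 < p.2 ∧ w.getD p.2 0 < w.getD p.1 0).card

/-- The minimum of a block (a finite set of naturals). -/
noncomputable def bmin (B : Finset ℕ) : ℕ := sInf (B : Set ℕ)

/-- The number of singleton blocks of a set partition of `[n] = {1,…,n}`. -/
def singletonCount {n : ℕ} (p : Finpartition (Finset.Icc 1 n)) : ℕ :=
  (p.parts.filter fun B => B.card = 1).card

/-- The number of non-singleton blocks of a set partition of `[n]`. -/
def nsingletonCount {n : ℕ} (p : Finpartition (Finset.Icc 1 n)) : ℕ :=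
  (p.parts.filter fun B => 2 ≤ B.card).card

/-- The number of free rises of a set partition of `[n]`: pairs `(c,d)` with `c < d`,
`c ∈ B_s`, `d ∈ B_t` and `s < t`, where the blocks are ordered by their minima. -/
noncomputable def frCount {n : ℕ} (p : Finpartition (Finset.Icc 1 n)) : ℕ :=
  (((Finset.Icc 1 n) ×ˢ (Finset.Icc 1 n)).filter fun cd =>
    cd.1 < cd.2 ∧ ∃ B ∈ p.parts, ∃ B' ∈ p.parts,
      cd.1 ∈ B ∧ cd.2 ∈ B' ∧ bmin B < bmin B').card


/-!
A partition `p` of `[n]` is sent to the word listing its blocks in decreasing order of their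
minima, each block written increasingly. In this word the descents sit exactly at the block
maxima, the right peaks at the maxima of the non-singleton blocks and the exterior double
descents at the singletons, while an inversion is a pair `d > c` with `d` in a block of larger
minimum, i.e. a free rise. Every restriction of such a word to `[k]` is again of this shape
(for the blocks of `p` cut down to `[k]`), which excludes a consecutive `132`.
Conversely, if no restriction of `π` contains `132`, each descent bottom of `π` is smaller
than everything before it, so the ascending runs of `π` have decreasing minima and `π` is the
word of its partition into runs.
-/

namespace SimsunPartition

open Finset

section ListLemmas

variable {α : Type*} {w : List α} {d : α} {i j : ℕ}

lemma getD_mem (hi : i < w.length) : w.getD i d ∈ w := by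
  rw [List.getD_eq_getElem _ _ hi]
  exact List.getElem_mem hi

lemma exists_getD_eq {x : α} (hx : x ∈ w) : ∃ i < w.length, w.getD i d = x := by
  obtain ⟨i, hi, rfl⟩ := List.getElem_of_mem hx
  exact ⟨i, hi, List.getD_eq_getElem _ _ hi⟩

lemma _root_.List.Nodup.getD_inj (hw : w.Nodup) (hi : i < w.length) (hj : j < w.length)
    (h : w.getD i d = w.getD j d) : i = j := by
  rw [List.getD_eq_getElem _ _ hi, List.getD_eq_getElem _ _ hj] at h
  exact hw.getElem_inj_iff.1 h

lemma countP_range_eq_card_filter (q : ℕ → Bool) (m : ℕ) :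
    (List.range m).countP q = #{i ∈ range m | q i} := by
  rw [List.countP_eq_length_filter, card_def, filter_val, range_val, Multiset.range,
    Multiset.filter_coe, Multiset.coe_card]
  simp

lemma getD_filter_countP_take (P : α → Bool) (hi : i < w.length) (hP : P (w.getD i d)) :
    (w.take i).countP P < (w.filter P).length ∧
      (w.filter P).getD ((w.take i).countP P) d = w.getD i d := by
  obtain ⟨A, B, hw, rfl⟩ : ∃ A B, w = A ++ w.getD i d :: B ∧ A.length = i :=
    ⟨w.take i, w.drop (i + 1), by
      rw [List.getD_eq_getElem _ _ hi, List.getElem_cons_drop, List.take_append_drop],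
      by simp; omega⟩
  set x := w.getD A.length d
  clear_value x
  subst hw
  simp [List.countP_eq_length_filter, hP]

lemma countP_take_eq_add_one (P : α → Bool) (hij : i < j) (hj : j ≤ w.length)
    (hPi : P (w.getD i d)) (hgap : ∀ t, i < t → t < j → P (w.getD t d) = false) :
    (w.take j).countP P = (w.take i).countP P + 1 := by
  induction j, hij using Nat.le_induction with
  | base =>
    rw [List.take_add_one, List.countP_append, List.getElem?_eq_getElem (by omega)]
    rw [List.getD_eq_getElem _ _ (by omega)] at hPi
    simp [hPi]
  | succ j hij ih =>
    have hPj := hgap j (by omega) (by omega)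
    rw [List.getD_eq_getElem _ _ (by omega)] at hPj
    rw [List.take_add_one, List.countP_append, List.getElem?_eq_getElem (by omega),
      ih (by omega) fun t ht ht' => hgap t ht (by omega)]
    simp [hPj]

lemma card_filter_range_getD [DecidableEq α] (hw : w.Nodup) (P : α → Prop) [DecidablePred P] :
    #{i ∈ range w.length | P (w.getD i d)} = #{x ∈ w.toFinset | P x} := by
  apply card_bij (fun i _ => w.getD i d)
  · intro i hi
    simp only [mem_filter, mem_range, List.mem_toFinset] at hi ⊢
    exact ⟨getD_mem hi.1, hi.2⟩
  · intro i hi j hj h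
    simp only [mem_filter, mem_range] at hi hj
    exact hw.getD_inj hi.1 hj.1 h
  · intro x hx
    simp only [mem_filter, List.mem_toFinset] at hx
    obtain ⟨i, hi, rfl⟩ := exists_getD_eq (d := d) hx.1
    exact ⟨i, mem_filter.2 ⟨mem_range.2 hi, hx.2⟩, rfl⟩

end ListLemmas

section Patterns

lemma containsPattern_132_iff (w : List ℕ) :
    containsPattern [1, 3, 2] w ↔ ∃ i, i + 3 ≤ w.length ∧
      w.getD i 0 < w.getD (i + 2) 0 ∧ w.getD (i + 2) 0 < w.getD (i + 1) 0 := by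
  constructor
  · rintro ⟨i, hlen, hiff⟩
    exact ⟨i, hlen, (hiff 0 (by simp) 2 (by simp)).1 (by decide),
      (hiff 2 (by simp) 1 (by simp)).1 (by decide)⟩
  · rintro ⟨i, hlen, h02, h21⟩
    refine ⟨i, hlen, fun a ha b hb => ?_⟩
    simp only [List.length_cons, List.length_nil] at ha hb
    interval_cases a <;> interval_cases b <;>
      simp only [List.getD_cons_zero, List.getD_cons_succ, Nat.add_zero] <;> omega

/-- The entries at positions `a`, `b`, `c` are adjacent in the restriction to `[w(b)]`. -/
lemma containsPattern_132_restrict {w : List ℕ} {a b c : ℕ} (hab : a < b) (hbc : b < c)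
    (hc : c < w.length) (h1 : w.getD a 0 < w.getD c 0) (h2 : w.getD c 0 < w.getD b 0)
    (hgap : ∀ t, a < t → t < c → t ≠ b → w.getD b 0 < w.getD t 0) :
    containsPattern [1, 3, 2] (restrict w (w.getD b 0)) := by
  set k := w.getD b 0
  set P : ℕ → Bool := fun z => decide (z ≤ k)
  have hP : ∀ z, P z = true ↔ z ≤ k := fun z => decide_eq_true_iff
  have hP' : ∀ z, P z = false ↔ k < z := fun z => by simp [P]
  have hab' := countP_take_eq_add_one P (d := 0) hab (by omega) ((hP _).2 (by omega))
    fun t h h' => (hP' _).2 (hgap t h (by omega) (by omega))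
  have hbc' := countP_take_eq_add_one P (d := 0) hbc (by omega) ((hP _).2 le_rfl)
    fun t h h' => (hP' _).2 (hgap t (by omega) h' (by omega))
  obtain ⟨-, ha⟩ := getD_filter_countP_take P (d := 0) (show a < w.length by omega)
    ((hP _).2 (by omega))
  obtain ⟨-, hb⟩ := getD_filter_countP_take P (d := 0) (show b < w.length by omega)
    ((hP _).2 le_rfl)
  obtain ⟨hlen, hc⟩ := getD_filter_countP_take P (d := 0) hc ((hP _).2 (by omega))
  rw [hbc', hab'] at hlen hc
  rw [hab'] at hb
  refine (containsPattern_132_iff _).2 ⟨(w.take a).countP P, hlen, ?_⟩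
  change (w.filter P).getD _ 0 < (w.filter P).getD _ 0 ∧
    (w.filter P).getD _ 0 < (w.filter P).getD _ 0
  rw [ha, hb, hc]
  exact ⟨h1, h2⟩

end Patterns

lemma bmin_mem {B : Finset ℕ} (hB : B.Nonempty) : bmin B ∈ B := by
  have := Nat.sInf_mem (s := (B : Set ℕ)) (by exact_mod_cast hB)
  exact_mod_cast this

lemma bmin_le {B : Finset ℕ} {y : ℕ} (hy : y ∈ B) : bmin B ≤ y :=
  Nat.sInf_le (by exact_mod_cast hy)

section BlockMin

variable {s : Finset ℕ} (p : Finpartition s) {x y : ℕ}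

noncomputable def blockMin (x : ℕ) : ℕ := bmin (p.part x)

def IsBlockMax (x : ℕ) : Prop := ∀ y ∈ p.part x, y ≤ x

lemma blockMin_mem_part (hx : x ∈ s) : blockMin p x ∈ p.part x :=
  bmin_mem ⟨x, p.mem_part hx⟩

lemma blockMin_le (hx : x ∈ s) : blockMin p x ≤ x := bmin_le (p.mem_part hx)

lemma blockMin_le_of_mem_part (hy : y ∈ p.part x) : blockMin p x ≤ y := bmin_le hy

lemma mem_of_mem_part (hy : y ∈ p.part x) : y ∈ s := p.part_subset x hy

lemma blockMin_mem (hx : x ∈ s) : blockMin p x ∈ s :=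
  mem_of_mem_part p (blockMin_mem_part p hx)

lemma part_eq_iff_blockMin_eq (hx : x ∈ s) (hy : y ∈ s) :
    p.part x = p.part y ↔ blockMin p x = blockMin p y := by
  refine ⟨fun h => by rw [blockMin, h, blockMin], fun h => ?_⟩
  have hmy : blockMin p x ∈ p.part y := h ▸ blockMin_mem_part p hy
  rw [← p.part_eq_of_mem (p.part_mem.2 hx) (blockMin_mem_part p hx),
    p.part_eq_of_mem (p.part_mem.2 hy) hmy]

lemma mem_part_iff_blockMin_eq (hx : x ∈ s) (hy : y ∈ s) :
    y ∈ p.part x ↔ blockMin p y = blockMin p x := by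
  rw [p.mem_part_iff_part_eq_part hy hx, part_eq_iff_blockMin_eq p hy hx]

lemma blockMin_eq_of_mem_part (hy : y ∈ p.part x) : blockMin p y = blockMin p x :=
  have hx : x ∈ s := p.part_nonempty.1 ⟨y, hy⟩
  (mem_part_iff_blockMin_eq p hx (mem_of_mem_part p hy)).1 hy

lemma blockMin_blockMin (hx : x ∈ s) : blockMin p (blockMin p x) = blockMin p x :=
  blockMin_eq_of_mem_part p (blockMin_mem_part p hx)

lemma card_filter_isBlockMax (Q : Finset ℕ → Prop) [DecidablePred Q] :
    #{x ∈ s | IsBlockMax p x ∧ Q (p.part x)} = #{B ∈ p.parts | Q B} := by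
  apply card_bij (fun x _ => p.part x)
  · intro x hx
    simp only [mem_filter] at hx ⊢
    exact ⟨p.part_mem.2 hx.1, hx.2.2⟩
  · intro x hx y hy h
    simp only [mem_filter] at hx hy
    have := hx.2.1 y (h ▸ p.mem_part hy.1)
    have := hy.2.1 x (h ▸ p.mem_part hx.1)
    omega
  · intro B hB
    rw [mem_filter] at hB
    have hne := p.nonempty_of_mem_parts hB.1
    have hmem := B.max'_mem hne
    have hpart : p.part (B.max' hne) = B := p.part_eq_of_mem hB.1 hmem
    refine ⟨B.max' hne, mem_filter.2 ⟨p.le hB.1 hmem, fun y hy => ?_, ?_⟩, hpart⟩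
    · exact B.le_max' y (hpart ▸ hy)
    · rw [hpart]
      exact hB.2

lemma card_filter_isBlockMax_eq_card_parts : #{x ∈ s | IsBlockMax p x} = #p.parts := by
  simpa using card_filter_isBlockMax p fun _ => True

lemma card_part_eq_one_iff (hx : x ∈ s) (hmax : IsBlockMax p x) :
    #(p.part x) = 1 ↔ blockMin p x = x := by
  constructor
  · intro h
    obtain ⟨z, hz⟩ := card_eq_one.1 h
    have hxz := hz ▸ p.mem_part hx
    have hmz := hz ▸ blockMin_mem_part p hx
    rw [mem_singleton] at hxz hmz
    rw [hmz, hxz]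
  · intro h
    refine card_eq_one.2 ⟨x, eq_singleton_iff_unique_mem.2 ⟨p.mem_part hx, fun y hy => ?_⟩⟩
    exact le_antisymm (hmax y hy) (h ▸ blockMin_le_of_mem_part p hy)

lemma one_le_card_part (hx : x ∈ s) : 1 ≤ #(p.part x) :=
  card_pos.2 ⟨x, p.mem_part hx⟩

lemma eq_of_blockMin_eq {p q : Finpartition s}
    (h : ∀ x ∈ s, blockMin p x = blockMin q x) : p = q := by
  have hpart : ∀ x ∈ s, p.part x = q.part x := fun x hx => by
    ext y
    constructor <;> intro hy
    · have hyI := mem_of_mem_part p hy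
      rw [mem_part_iff_blockMin_eq q hx hyI, ← h x hx, ← h y hyI]
      exact (mem_part_iff_blockMin_eq p hx hyI).1 hy
    · have hyI := mem_of_mem_part q hy
      rw [mem_part_iff_blockMin_eq p hx hyI, h x hx, h y hyI]
      exact (mem_part_iff_blockMin_eq q hx hyI).1 hy
  have hsub : ∀ {p q : Finpartition s}, (∀ x ∈ s, p.part x = q.part x) →
      p.parts ⊆ q.parts := fun {p q} h B hB => by
    obtain ⟨x, hx⟩ := p.nonempty_of_mem_parts hB
    rw [← p.part_eq_of_mem hB hx, h x (p.le hB hx)]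
    exact q.part_mem.2 (p.le hB hx)
  exact Finpartition.ext (Subset.antisymm (hsub hpart) (hsub fun x hx => (hpart x hx).symm))

end BlockMin

section PartitionWord

variable {n : ℕ} (p : Finpartition (Icc 1 n)) {u : List ℕ} {i j x y : ℕ}

/-- Encodes the order "decreasing block minimum, then increasing value" as the usual order
on `ℕ`; the value is recovered modulo `n + 1`. -/
noncomputable def sortKey (x : ℕ) : ℕ := (n - blockMin p x) * (n + 1) + x

lemma sortKey_lt_iff (hx : x ∈ Icc 1 n) (hy : y ∈ Icc 1 n) :
    sortKey p x < sortKey p y ↔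
      blockMin p y < blockMin p x ∨ (blockMin p x = blockMin p y ∧ x < y) := by
  have := mem_Icc.1 hx; have := mem_Icc.1 hy
  have := mem_Icc.1 (blockMin_mem p hx); have := mem_Icc.1 (blockMin_mem p hy)
  unfold sortKey
  rcases lt_trichotomy (blockMin p x) (blockMin p y) with h | h | h
  · have := Nat.mul_le_mul_right (n + 1) (show n - blockMin p y + 1 ≤ n - blockMin p x by omega)
    rw [Nat.succ_mul] at this
    constructor <;> intro hk <;> omega
  · rw [h]; omega
  · have := Nat.mul_le_mul_right (n + 1) (show n - blockMin p x + 1 ≤ n - blockMin p y by omega)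
    rw [Nat.succ_mul] at this
    constructor <;> intro hk <;> omega

lemma sortKey_mod (hx : x ∈ Icc 1 n) : sortKey p x % (n + 1) = x := by
  rw [sortKey, Nat.add_comm, Nat.add_mul_mod_self_right, Nat.mod_eq_of_lt]
  have := mem_Icc.1 hx
  omega

lemma sortKey_getD_lt (hu : u.Pairwise (sortKey p · < sortKey p ·)) (hij : i < j)
    (hj : j < u.length) : sortKey p (u.getD i 0) < sortKey p (u.getD j 0) := by
  rw [List.getD_eq_getElem _ _ (hij.trans hj), List.getD_eq_getElem _ _ hj]
  exact List.pairwise_iff_getElem.1 hu i j _ hj hij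

lemma lt_of_sortKey_getD_lt (hu : u.Pairwise (sortKey p · < sortKey p ·))
    (hi : i < u.length) (h : sortKey p (u.getD i 0) < sortKey p (u.getD j 0)) : i < j := by
  by_contra! hji
  rcases hji.lt_or_eq with hlt | rfl
  · exact absurd (sortKey_getD_lt p hu hlt hi) (by omega)
  · omega

/-- Otherwise the block minimum would have to sit strictly between this entry and its
predecessor. -/
lemma blockMin_getD_succ_eq_self (hu : u.Pairwise (sortKey p · < sortKey p ·))
    (hIcc : ∀ x ∈ u, x ∈ Icc 1 n) (hclosed : ∀ x ∈ u, blockMin p x ∈ u)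
    (hj : j + 1 < u.length)
    (h : blockMin p (u.getD (j + 1) 0) < blockMin p (u.getD j 0)) :
    blockMin p (u.getD (j + 1) 0) = u.getD (j + 1) 0 := by
  set y := u.getD (j + 1) 0
  have hx := hIcc _ (getD_mem (d := 0) (show j < u.length by omega))
  have hy := hIcc _ (getD_mem (d := 0) hj)
  have hm := blockMin_mem p hy
  by_contra hne
  have hlt : blockMin p y < y := lt_of_le_of_ne (blockMin_le p hy) hne
  obtain ⟨t, ht, hty⟩ := exists_getD_eq (d := 0) (hclosed y (getD_mem hj))
  have h1 : j < t := lt_of_sortKey_getD_lt p hu (by omega) <| by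
    rw [hty]; exact (sortKey_lt_iff p hx hm).2 (Or.inl (by rwa [blockMin_blockMin p hy]))
  have h2 : t < j + 1 := lt_of_sortKey_getD_lt p hu ht <| by
    rw [hty]; exact (sortKey_lt_iff p hm hy).2 (Or.inr ⟨blockMin_blockMin p hy, hlt⟩)
  omega

/-- The blocks of `p` in decreasing order of their minima, each written increasingly. -/
noncomputable def partitionWord : List ℕ :=
  (((Icc 1 n).image (sortKey p)).sort).map (· % (n + 1))

lemma mem_partitionWord : x ∈ partitionWord p ↔ x ∈ Icc 1 n := by
  simp only [partitionWord, List.mem_map, mem_sort, mem_image]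
  constructor
  · rintro ⟨_, ⟨y, hy, rfl⟩, rfl⟩
    rwa [sortKey_mod p hy]
  · exact fun hx => ⟨sortKey p x, ⟨x, hx, rfl⟩, sortKey_mod p hx⟩

lemma partitionWord_pairwise : (partitionWord p).Pairwise (sortKey p · < sortKey p ·) := by
  rw [partitionWord, List.pairwise_map]
  refine (sortedLT_sort _).pairwise.imp_of_mem fun ha hb hab => ?_
  rw [mem_sort, mem_image] at ha hb
  obtain ⟨x, hx, rfl⟩ := ha
  obtain ⟨y, hy, rfl⟩ := hb
  rwa [sortKey_mod p hx, sortKey_mod p hy]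

lemma partitionWord_nodup : (partitionWord p).Nodup :=
  (partitionWord_pairwise p).imp fun h heq => (heq ▸ h).false

lemma toFinset_partitionWord : (partitionWord p).toFinset = Icc 1 n := by
  ext x
  rw [List.mem_toFinset, mem_partitionWord]

lemma length_partitionWord : (partitionWord p).length = n := by
  rw [← List.toFinset_card_of_nodup (partitionWord_nodup p), toFinset_partitionWord,
    Nat.card_Icc, Nat.add_sub_cancel]

lemma getD_partitionWord_mem (hi : i < n) : (partitionWord p).getD i 0 ∈ Icc 1 n :=
  (mem_partitionWord p).1 (getD_mem (by rwa [length_partitionWord]))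

lemma exists_getD_partitionWord_eq (hx : x ∈ Icc 1 n) :
    ∃ i < n, (partitionWord p).getD i 0 = x := by
  simpa only [length_partitionWord] using exists_getD_eq (d := 0) ((mem_partitionWord p).2 hx)

lemma getD_partitionWord_eq_zero (hi : n ≤ i) : (partitionWord p).getD i 0 = 0 :=
  List.getD_eq_default _ _ (by rwa [length_partitionWord])

lemma blockMin_mem_partitionWord (hx : x ∈ partitionWord p) : blockMin p x ∈ partitionWord p :=
  (mem_partitionWord p).2 (blockMin_mem p ((mem_partitionWord p).1 hx))

lemma partitionWord_adjacent (hi : i + 1 < n) :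
    (blockMin p ((partitionWord p).getD (i + 1) 0) = blockMin p ((partitionWord p).getD i 0) ∧
      (partitionWord p).getD i 0 < (partitionWord p).getD (i + 1) 0) ∨
    (IsBlockMax p ((partitionWord p).getD i 0) ∧
      blockMin p ((partitionWord p).getD (i + 1) 0) = (partitionWord p).getD (i + 1) 0 ∧
      (partitionWord p).getD (i + 1) 0 < (partitionWord p).getD i 0) := by
  have hw := partitionWord_pairwise p
  have hlen := length_partitionWord p
  set x := (partitionWord p).getD i 0
  set y := (partitionWord p).getD (i + 1) 0
  have hx : x ∈ Icc 1 n := getD_partitionWord_mem p (by omega)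
  have hy : y ∈ Icc 1 n := getD_partitionWord_mem p hi
  rcases (sortKey_lt_iff p hx hy).1 (sortKey_getD_lt p hw (Nat.lt_succ_self i) (by omega))
    with hlt | ⟨heq, hxy⟩
  · have hmin : blockMin p y = y := blockMin_getD_succ_eq_self p hw
      (fun _ => (mem_partitionWord p).1) (fun _ => blockMin_mem_partitionWord p) (by omega) hlt
    refine Or.inr ⟨fun z hz => ?_, hmin, by have := blockMin_le p hx; omega⟩
    by_contra! hxz
    have hzI := mem_of_mem_part p hz
    have hzm := blockMin_eq_of_mem_part p hz
    obtain ⟨m, hm, rfl⟩ := exists_getD_partitionWord_eq p hzI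
    have h1 : i < m := lt_of_sortKey_getD_lt p hw (by omega) <|
      (sortKey_lt_iff p hx hzI).2 (Or.inr ⟨hzm.symm, hxz⟩)
    have h2 : m < i + 1 := lt_of_sortKey_getD_lt p hw (by omega) <|
      (sortKey_lt_iff p hzI hy).2 (Or.inl (hzm ▸ hlt))
    omega
  · exact Or.inl ⟨heq.symm, hxy⟩

lemma blockMin_getD_partitionWord_zero (hn : 0 < n) :
    blockMin p ((partitionWord p).getD 0 0) = (partitionWord p).getD 0 0 := by
  have hx := getD_partitionWord_mem p hn
  have hm := blockMin_mem p hx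
  by_contra hne
  obtain ⟨j, hj, hjm⟩ := exists_getD_partitionWord_eq p hm
  have := lt_of_sortKey_getD_lt p (partitionWord_pairwise p) (by rwa [length_partitionWord]) <|
    show sortKey p ((partitionWord p).getD j 0) < _ from hjm ▸ (sortKey_lt_iff p hm hx).2
      (Or.inr ⟨blockMin_blockMin p hx, lt_of_le_of_ne (blockMin_le p hx) hne⟩)
  omega

lemma isBlockMax_getD_partitionWord_last (hi : i + 1 = n) :
    IsBlockMax p ((partitionWord p).getD i 0) := by
  have hx := getD_partitionWord_mem p (i := i) (by omega)
  intro z hz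
  by_contra! hxz
  obtain ⟨m, hm, rfl⟩ := exists_getD_partitionWord_eq p (mem_of_mem_part p hz)
  have := lt_of_sortKey_getD_lt p (partitionWord_pairwise p)
    (by rw [length_partitionWord]; omega) <|
    (sortKey_lt_iff p hx (mem_of_mem_part p hz)).2
      (Or.inr ⟨(blockMin_eq_of_mem_part p hz).symm, hxz⟩)
  omega

lemma getD_partitionWord_succ_lt_iff (hi : i < n) :
    (partitionWord p).getD (i + 1) 0 < (partitionWord p).getD i 0 ↔
      IsBlockMax p ((partitionWord p).getD i 0) := by
  have hx := getD_partitionWord_mem p hi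
  by_cases hi1 : i + 1 < n
  · rcases partitionWord_adjacent p hi1 with ⟨heq, hlt⟩ | ⟨hmax, -, hlt⟩
    · have hy := (mem_part_iff_blockMin_eq p hx (getD_partitionWord_mem p hi1)).2 heq
      exact ⟨fun h => by omega, fun hmax => by have := hmax _ hy; omega⟩
    · exact iff_of_true hlt hmax
  · rw [getD_partitionWord_eq_zero p (by omega)]
    exact iff_of_true (mem_Icc.1 hx).1 (isBlockMax_getD_partitionWord_last p (by omega))

lemma blockMin_getD_partitionWord_eq_self_iff (hi : i < n) :
    blockMin p ((partitionWord p).getD i 0) = (partitionWord p).getD i 0 ↔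
      i = 0 ∨ (partitionWord p).getD i 0 < (partitionWord p).getD (i - 1) 0 := by
  cases i with
  | zero => exact iff_of_true (blockMin_getD_partitionWord_zero p hi) (Or.inl rfl)
  | succ i =>
    simp only [Nat.add_sub_cancel, Nat.succ_ne_zero, false_or]
    rcases partitionWord_adjacent p hi with ⟨heq, hlt⟩ | ⟨-, hmin, hlt⟩
    · have := blockMin_le p (getD_partitionWord_mem p (i := i) (by omega))
      exact iff_of_false (by omega) (by omega)
    · exact iff_of_true hmin hlt

lemma getD_partitionWord_pred_lt_iff (hi : i < n) :
    (1 ≤ i ∧ (partitionWord p).getD (i - 1) 0 < (partitionWord p).getD i 0) ↔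
      blockMin p ((partitionWord p).getD i 0) ≠ (partitionWord p).getD i 0 := by
  cases i with
  | zero => exact iff_of_false (by omega) (not_not.2 (blockMin_getD_partitionWord_zero p hi))
  | succ i =>
    simp only [Nat.add_sub_cancel]
    rcases partitionWord_adjacent p hi with ⟨heq, hlt⟩ | ⟨-, hmin, hlt⟩
    · have := blockMin_le p (getD_partitionWord_mem p (i := i) (by omega))
      exact iff_of_true ⟨by omega, hlt⟩ (by omega)
    · exact iff_of_false (by omega) (not_not.2 hmin)

lemma blockMin_getD_partitionWord_succ (hi : i + 1 < n)
    (h : blockMin p ((partitionWord p).getD (i + 1) 0) ≠ (partitionWord p).getD (i + 1) 0) :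
    blockMin p ((partitionWord p).getD (i + 1) 0) = blockMin p ((partitionWord p).getD i 0) := by
  rcases partitionWord_adjacent p hi with ⟨heq, -⟩ | ⟨-, hmin, -⟩
  · exact heq
  · exact absurd hmin h

lemma card_filter_range_partitionWord (P : ℕ → Prop) [DecidablePred P] :
    #{i ∈ range n | P ((partitionWord p).getD i 0)} = #{x ∈ Icc 1 n | P x} := by
  simpa only [length_partitionWord, toFinset_partitionWord] using
    card_filter_range_getD (d := 0) (partitionWord_nodup p) P

end PartitionWord

section Statistics

variable {n : ℕ} (p : Finpartition (Icc 1 n))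

theorem desList_partitionWord (hn : 1 ≤ n) : desList (partitionWord p) + 1 = #p.parts := by
  obtain ⟨m, rfl⟩ : ∃ m, n = m + 1 := ⟨n - 1, by omega⟩
  have hparts : #p.parts =
      #{i ∈ range (m + 1) | (partitionWord p).getD (i + 1) 0 < (partitionWord p).getD i 0} := by
    rw [filter_congr fun i hi => getD_partitionWord_succ_lt_iff p (mem_range.1 hi),
      ← card_filter_isBlockMax_eq_card_parts]
    exact (card_filter_range_partitionWord p (IsBlockMax p)).symm
  have hlast : (partitionWord p).getD (m + 1) 0 < (partitionWord p).getD m 0 := by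
    rw [getD_partitionWord_eq_zero p le_rfl]
    exact (mem_Icc.1 (getD_partitionWord_mem p (Nat.lt_succ_self m))).1
  rw [hparts, range_add_one, filter_insert, if_pos hlast, card_insert_of_notMem (by simp),
    desList, countP_range_eq_card_filter, length_partitionWord, Nat.add_sub_cancel]
  simp only [decide_eq_true_eq]

theorem rpkList_partitionWord : rpkList (partitionWord p) = nsingletonCount p := by
  rw [rpkList, nsingletonCount, countP_range_eq_card_filter, length_partitionWord,
    ← card_filter_isBlockMax, ← card_filter_range_partitionWord]
  refine congrArg card (filter_congr fun i hi => ?_)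
  have hi := mem_range.1 hi
  have hx := getD_partitionWord_mem p hi
  rw [decide_eq_true_eq, ← and_assoc, getD_partitionWord_pred_lt_iff p hi,
    getD_partitionWord_succ_lt_iff p hi]
  constructor
  · rintro ⟨hne, hmax⟩
    exact ⟨hmax, lt_of_le_of_ne (one_le_card_part p hx)
      fun h => hne ((card_part_eq_one_iff p hx hmax).1 h.symm)⟩
  · rintro ⟨hmax, hcard⟩
    exact ⟨fun h => by have := (card_part_eq_one_iff p hx hmax).2 h; omega, hmax⟩

theorem exddesList_partitionWord : exddesList (partitionWord p) = singletonCount p := by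
  rw [exddesList, singletonCount, countP_range_eq_card_filter, length_partitionWord,
    ← card_filter_isBlockMax, ← card_filter_range_partitionWord]
  refine congrArg card (filter_congr fun i hi => ?_)
  have hi := mem_range.1 hi
  have hx := getD_partitionWord_mem p hi
  rw [decide_eq_true_eq, ← blockMin_getD_partitionWord_eq_self_iff p hi,
    getD_partitionWord_succ_lt_iff p hi]
  constructor
  · rintro ⟨hmin, hmax⟩
    exact ⟨hmax, (card_part_eq_one_iff p hx hmax).2 hmin⟩
  · rintro ⟨hmax, hcard⟩
    exact ⟨(card_part_eq_one_iff p hx hmax).1 hcard, hmax⟩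

theorem invList_partitionWord : invList (partitionWord p) = frCount p := by
  have hw := partitionWord_pairwise p
  have hlen := length_partitionWord p
  rw [invList, frCount, hlen]
  apply card_bij fun ij _ => ((partitionWord p).getD ij.2 0, (partitionWord p).getD ij.1 0)
  · rintro ⟨i, j⟩ hij
    simp only [mem_filter, mem_product, mem_range] at hij ⊢
    obtain ⟨⟨hi, hj⟩, hij, hinv⟩ := hij
    have hx := getD_partitionWord_mem p hi
    have hy := getD_partitionWord_mem p hj
    have hlt :
        blockMin p ((partitionWord p).getD j 0) < blockMin p ((partitionWord p).getD i 0) := by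
      rcases (sortKey_lt_iff p hx hy).1 (sortKey_getD_lt p hw hij (by omega)) with h | ⟨-, h⟩
      · exact h
      · omega
    exact ⟨⟨hy, hx⟩, hinv, _, p.part_mem.2 hy, _, p.part_mem.2 hx, p.mem_part hy,
      p.mem_part hx, hlt⟩
  · rintro ⟨i, j⟩ hij ⟨i', j'⟩ hij' h
    simp only [mem_filter, mem_product, mem_range, Prod.mk.injEq] at hij hij' h ⊢
    exact ⟨(partitionWord_nodup p).getD_inj (by omega) (by omega) h.2,
      (partitionWord_nodup p).getD_inj (by omega) (by omega) h.1⟩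
  · rintro ⟨c, d⟩ hcd
    simp only [mem_filter, mem_product] at hcd
    obtain ⟨⟨hc, hd⟩, hcd, B, hB, B', hB', hcB, hdB', hBB'⟩ := hcd
    have hlt : blockMin p c < blockMin p d := by
      rwa [blockMin, blockMin, p.part_eq_of_mem hB hcB, p.part_eq_of_mem hB' hdB']
    obtain ⟨i, hi, rfl⟩ := exists_getD_partitionWord_eq p hd
    obtain ⟨j, hj, rfl⟩ := exists_getD_partitionWord_eq p hc
    have hij : i < j :=
      lt_of_sortKey_getD_lt p hw (by omega) ((sortKey_lt_iff p hd hc).2 (Or.inl hlt))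
    exact ⟨(i, j), by simpa [hi, hj] using ⟨hij, hcd⟩, rfl⟩

end Statistics

section Avoidance

variable {n : ℕ} (p : Finpartition (Icc 1 n))

/-- A restriction of the word keeps the key order and is closed under `blockMin`, so a
descent inside it starts a new block at that block's minimum, which rules out `132`. -/
theorem partitionWord_avoids (k : ℕ) :
    ¬ containsPattern [1, 3, 2] (restrict (partitionWord p) k) := by
  rw [containsPattern_132_iff]
  rintro ⟨i, hlen, h02, h21⟩
  set u := restrict (partitionWord p) k
  have hsub : u.Sublist (partitionWord p) := List.filter_sublist
  have hu := (partitionWord_pairwise p).sublist hsub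
  have hIcc : ∀ x ∈ u, x ∈ Icc 1 n := fun x hx => (mem_partitionWord p).1 (hsub.subset hx)
  have hclosed : ∀ x ∈ u, blockMin p x ∈ u := by
    intro x hx
    simp only [u, _root_.restrict, List.mem_filter, decide_eq_true_eq] at hx ⊢
    exact ⟨blockMin_mem_partitionWord p hx.1,
      (blockMin_le p ((mem_partitionWord p).1 hx.1)).trans hx.2⟩
  have hx0 := hIcc _ (getD_mem (d := 0) (show i < u.length by omega))
  have hx1 := hIcc _ (getD_mem (d := 0) (show i + 1 < u.length by omega))
  have hx2 := hIcc _ (getD_mem (d := 0) (show i + 2 < u.length by omega))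
  have hnew : blockMin p (u.getD (i + 2) 0) < blockMin p (u.getD (i + 1) 0) := by
    rcases (sortKey_lt_iff p hx1 hx2).1 (sortKey_getD_lt p hu (Nat.lt_succ_self _) (by omega))
      with h | ⟨-, h⟩
    · exact h
    · omega
  have hmin : blockMin p (u.getD (i + 2) 0) = u.getD (i + 2) 0 :=
    blockMin_getD_succ_eq_self p hu hIcc hclosed (j := i + 1) (by omega) hnew
  have := blockMin_le p hx0
  rcases (sortKey_lt_iff p hx0 hx2).1 (sortKey_getD_lt p hu (by omega : i < i + 2) (by omega))
    with h | ⟨h, -⟩ <;> omega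

end Avoidance

section Runs

variable {w : List ℕ} {i j : ℕ}

def NoDescentBetween (w : List ℕ) (i j : ℕ) : Prop :=
  ∀ t, min i j ≤ t → t < max i j → w.getD t 0 ≤ w.getD (t + 1) 0

lemma getD_le_getD_of_noDescentBetween (h : NoDescentBetween w i j) (hij : i ≤ j) :
    w.getD i 0 ≤ w.getD j 0 := by
  induction j, hij using Nat.le_induction with
  | base => exact le_rfl
  | succ j hij ih =>
    exact (ih fun t h1 h2 => h t (by omega) (by omega)).trans (h j (by omega) (by omega))

def runSetoid (w : List ℕ) : Setoid ℕ where
  r x y := NoDescentBetween w (w.idxOf x) (w.idxOf y)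
  iseqv :=
    { refl := fun _ _ h1 h2 => by omega
      symm := fun h => by rwa [NoDescentBetween, min_comm, max_comm]
      trans := fun {x y z} h1 h2 t ht1 ht2 => by
        by_cases h : min (w.idxOf x) (w.idxOf y) ≤ t ∧ t < max (w.idxOf x) (w.idxOf y)
        · exact h1 t h.1 h.2
        · exact h2 t (by omega) (by omega) }

/-- Otherwise let `a` be the last position before the descent carrying a value below the
descent bottom `x`, and `k` the least value strictly between position `a` and the descent;
restricted to `[k]`, the entries `w(a)`, `k`, `x` are adjacent and form a `132`. -/
lemma getD_succ_lt_of_descent (hw : w.Nodup)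
    (hav : ∀ k, ¬ containsPattern [1, 3, 2] (restrict w k)) (hji : j ≤ i)
    (hi : i + 1 < w.length) (hdes : w.getD (i + 1) 0 < w.getD i 0) :
    w.getD (i + 1) 0 < w.getD j 0 := by
  set x := w.getD (i + 1) 0
  have hne : ∀ t < w.length, t ≠ i + 1 → w.getD t 0 ≠ x := fun t ht hti h =>
    hti (hw.getD_inj ht hi h)
  by_contra! hxj
  set L : ℕ → Prop := fun t => w.getD t 0 < x
  set a := Nat.findGreatest L i
  have ha : w.getD a 0 < x :=
    Nat.findGreatest_spec (P := L) hji (lt_of_le_of_ne hxj (hne j (by omega) (by omega)))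
  have habove : ∀ t, a < t → t ≤ i → x < w.getD t 0 := fun t h1 h2 =>
    lt_of_le_of_ne (not_lt.1 (Nat.findGreatest_is_greatest (P := L) h1 h2))
      (hne t (by omega) (by omega)).symm
  have hai : a < i := lt_of_le_of_ne (Nat.findGreatest_le i) fun h => by rw [h] at ha; omega
  obtain ⟨b, hb, hmin⟩ := (Icc (a + 1) i).exists_min_image (w.getD · 0)
    ⟨i, mem_Icc.2 ⟨by omega, le_rfl⟩⟩
  rw [mem_Icc] at hb
  refine hav _ (containsPattern_132_restrict (c := i + 1) (by omega) (by omega) hi ha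
    (habove b (by omega) hb.2) fun t h1 h2 htb => ?_)
  exact lt_of_le_of_ne (hmin t (mem_Icc.2 ⟨h1, by omega⟩))
    fun h => htb (hw.getD_inj (by omega) (by omega) h).symm

end Runs

section RunPartition

variable {n : ℕ} {w : List ℕ} {i j : ℕ}

/-- The partition of `[n]` into the ascending runs of `w`. -/
noncomputable def runPartition (n : ℕ) (w : List ℕ) : Finpartition (Icc 1 n) :=
  Finpartition.ofSetSetoid (runSetoid w) (Icc 1 n)

lemma mem_part_runPartition_iff {x y : ℕ} :
    y ∈ (runPartition n w).part x ↔
      x ∈ Icc 1 n ∧ y ∈ Icc 1 n ∧ NoDescentBetween w (w.idxOf x) (w.idxOf y) :=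
  Finpartition.mem_part_ofSetSetoid_iff_rel _

lemma idxOf_getD (hw : w.Nodup) (hi : i < w.length) : w.idxOf (w.getD i 0) = i := by
  rw [List.getD_eq_getElem _ _ hi]
  exact hw.idxOf_getElem i hi

lemma getD_mem_part_runPartition (hw : w.Nodup) (hmem : ∀ x, x ∈ w ↔ x ∈ Icc 1 n)
    (hi : i < w.length) (hj : j < w.length) (h : NoDescentBetween w i j) :
    w.getD j 0 ∈ (runPartition n w).part (w.getD i 0) := by
  rw [mem_part_runPartition_iff, idxOf_getD hw hi, idxOf_getD hw hj]
  exact ⟨(hmem _).1 (getD_mem hi), (hmem _).1 (getD_mem hj), h⟩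

/-- The bottom of the last descent between positions `i` and `j` lies in the run of position
`j` and, being smaller than everything before it, is below every entry of the run of
position `i`. -/
lemma blockMin_runPartition_getD_lt (hw : w.Nodup) (hmem : ∀ x, x ∈ w ↔ x ∈ Icc 1 n)
    (hav : ∀ k, ¬ containsPattern [1, 3, 2] (restrict w k)) (hij : i < j) (hj : j < w.length)
    (hrun : ¬ NoDescentBetween w i j) :
    blockMin (runPartition n w) (w.getD j 0) < blockMin (runPartition n w) (w.getD i 0) := by
  set q := runPartition n w
  set D : ℕ → Prop := fun t => w.getD (t + 1) 0 < w.getD t 0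
  simp only [NoDescentBetween, min_eq_left hij.le, max_eq_right hij.le, not_forall, not_le,
    exists_prop] at hrun
  obtain ⟨t, ht1, ht2, hdes⟩ := hrun
  set d := Nat.findGreatest D (j - 1)
  have hdt : t ≤ d := Nat.le_findGreatest (by omega) hdes
  have hdj : d < j := by have := Nat.findGreatest_le (P := D) (j - 1); omega
  have hddes : D d := Nat.findGreatest_spec (by omega) hdes
  have hbelow : blockMin q (w.getD j 0) ≤ w.getD (d + 1) 0 := by
    refine blockMin_le_of_mem_part q
      (getD_mem_part_runPartition hw hmem hj (by omega) fun s h1 h2 => ?_)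
    exact not_lt.1 (Nat.findGreatest_is_greatest (P := D) (show d < s by omega)
      (show s ≤ j - 1 by omega))
  obtain ⟨-, hmI, hrel⟩ := mem_part_runPartition_iff.1
    (blockMin_mem_part q ((hmem _).1 (getD_mem (d := 0) (show i < w.length by omega))))
  rw [idxOf_getD hw (by omega)] at hrel
  have hpos := List.idxOf_lt_length_iff.2 ((hmem _).2 hmI)
  have hle : w.idxOf (blockMin q (w.getD i 0)) ≤ d := by
    by_contra! hd
    exact absurd (hrel d (by omega) (by omega)) (not_le.2 hddes)
  have := getD_succ_lt_of_descent hw hav hle (by omega) hddes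
  rw [List.getD_eq_getElem _ _ hpos, List.getElem_idxOf] at this
  omega

theorem sortKey_runPartition_getD_lt (hw : w.Nodup) (hmem : ∀ x, x ∈ w ↔ x ∈ Icc 1 n)
    (hav : ∀ k, ¬ containsPattern [1, 3, 2] (restrict w k)) (hij : i < j) (hj : j < w.length) :
    sortKey (runPartition n w) (w.getD i 0) < sortKey (runPartition n w) (w.getD j 0) := by
  set q := runPartition n w
  have hx := (hmem _).1 (getD_mem (d := 0) (show i < w.length by omega))
  have hy := (hmem _).1 (getD_mem (d := 0) hj)
  refine (sortKey_lt_iff q hx hy).2 ?_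
  by_cases hrun : NoDescentBetween w i j
  · refine Or.inr ⟨((mem_part_iff_blockMin_eq q hx hy).1
      (getD_mem_part_runPartition hw hmem (by omega) hj hrun)).symm, ?_⟩
    refine lt_of_le_of_ne (getD_le_getD_of_noDescentBetween hrun hij.le) fun h => ?_
    exact hij.ne (hw.getD_inj (by omega) hj h)
  · exact Or.inl (blockMin_runPartition_getD_lt hw hmem hav hij hj hrun)

theorem partitionWord_runPartition (hw : w.Nodup) (hmem : ∀ x, x ∈ w ↔ x ∈ Icc 1 n)
    (hav : ∀ k, ¬ containsPattern [1, 3, 2] (restrict w k)) :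
    partitionWord (runPartition n w) = w := by
  have : Std.Antisymm (sortKey (runPartition n w) · < sortKey (runPartition n w) ·) :=
    ⟨fun _ _ h1 h2 => absurd (h1.trans h2) (lt_irrefl _)⟩
  refine List.Perm.eq_of_pairwise' (partitionWord_pairwise _) ?_ ?_
  · rw [List.pairwise_iff_getElem]
    intro a b ha hb hab
    have := sortKey_runPartition_getD_lt hw hmem hav hab hb
    rwa [List.getD_eq_getElem _ _ ha, List.getD_eq_getElem _ _ hb] at this
  · refine List.perm_of_nodup_nodup_toFinset_eq (partitionWord_nodup _) hw ?_
    ext x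
    rw [List.mem_toFinset, List.mem_toFinset, mem_partitionWord, hmem]

end RunPartition

section Bijection

variable {n : ℕ}

/-- The word determines the blocks: block minima are read off as the entries at position `0`
and at descent bottoms, and every other entry shares the block of its predecessor. -/
theorem partitionWord_injective : Function.Injective (partitionWord (n := n)) := by
  intro p q h
  have hmin : ∀ i < n, blockMin p ((partitionWord p).getD i 0) =
      blockMin q ((partitionWord p).getD i 0) := by
    intro i
    induction i with
    | zero =>
      intro hi
      have hq := blockMin_getD_partitionWord_zero q hi
      rw [← h] at hq
      rw [blockMin_getD_partitionWord_zero p hi, hq]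
    | succ i ih =>
      intro hi
      have hpi := blockMin_getD_partitionWord_eq_self_iff p hi
      have hqi := blockMin_getD_partitionWord_eq_self_iff q hi
      rw [← h] at hqi
      by_cases hs :
          blockMin p ((partitionWord p).getD (i + 1) 0) = (partitionWord p).getD (i + 1) 0
      · rw [hs, hqi.2 (hpi.1 hs)]
      · have hq := blockMin_getD_partitionWord_succ q hi
        rw [← h] at hq
        rw [blockMin_getD_partitionWord_succ p hi hs, ih (by omega),
          hq fun hs' => hs (hpi.2 (hqi.1 hs'))]
  refine eq_of_blockMin_eq fun x hx => ?_
  obtain ⟨i, hi, rfl⟩ := exists_getD_partitionWord_eq p hx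
  exact hmin i hi

lemma length_permWord (π : Equiv.Perm (Fin n)) : (permWord π).length = n := by
  simp [permWord]

lemma permWord_nodup (π : Equiv.Perm (Fin n)) : (permWord π).Nodup :=
  List.nodup_ofFn.2 fun i j h => π.injective (Fin.ext (by simpa using h))

lemma mem_permWord (π : Equiv.Perm (Fin n)) (x : ℕ) : x ∈ permWord π ↔ x ∈ Icc 1 n := by
  rw [permWord, List.mem_ofFn, mem_Icc]
  constructor
  · rintro ⟨i, rfl⟩
    exact ⟨by omega, (π i).2⟩
  · rintro ⟨h1, h2⟩
    exact ⟨π.symm ⟨x - 1, by omega⟩, by simp; omega⟩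

lemma permWord_injective : Function.Injective (permWord (n := n)) := fun π σ h =>
  Equiv.ext fun i => Fin.ext (by simpa using congrFun (List.ofFn_injective h) i)

noncomputable def permOf (p : Finpartition (Icc 1 n)) : Equiv.Perm (Fin n) :=
  Equiv.ofBijective
    (fun i => ⟨(partitionWord p).getD i 0 - 1, by
      have := mem_Icc.1 (getD_partitionWord_mem p i.2); omega⟩)
    (Finite.injective_iff_bijective.1 fun i j h => by
      have := mem_Icc.1 (getD_partitionWord_mem p i.2)
      have := mem_Icc.1 (getD_partitionWord_mem p j.2)
      have hlen := length_partitionWord p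
      have h' := congrArg Fin.val h
      exact Fin.ext ((partitionWord_nodup p).getD_inj (d := 0) (by omega) (by omega)
        (by simp only at h'; omega)))

lemma permWord_permOf (p : Finpartition (Icc 1 n)) : permWord (permOf p) = partitionWord p := by
  refine List.ext_getElem (by rw [length_permWord, length_partitionWord]) fun i hi hi' => ?_
  have hin : i < n := by rwa [length_permWord] at hi
  have := mem_Icc.1 (getD_partitionWord_mem p hin)
  simp only [permWord, List.getElem_ofFn, permOf, Equiv.ofBijective_apply]
  rw [← List.getD_eq_getElem _ 0 hi']
  omega

lemma permOf_avoids (p : Finpartition (Icc 1 n)) : AvoidsSP [1, 3, 2] (permOf p) := by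
  intro k
  rw [permWord_permOf]
  exact partitionWord_avoids p k

lemma statistics_partitionWord_iff (hn : 1 ≤ n) (p : Finpartition (Icc 1 n)) (a b c d : ℕ) :
    (desList (partitionWord p) + 1 = a ∧ rpkList (partitionWord p) = b ∧
      exddesList (partitionWord p) = c ∧ invList (partitionWord p) = d) ↔
    (p.parts.card = a ∧ nsingletonCount p = b ∧ singletonCount p = c ∧ frCount p = d) := by
  rw [desList_partitionWord p hn, rpkList_partitionWord, exddesList_partitionWord,
    invList_partitionWord]

end Bijection

end SimsunPartition

open SimsunPartition

/-- for `n ≥ 1` and all `a, b, c, d ≥ 0`, the number of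
`π ∈ SP_n(132)` with `des(π)+1 = a`, `rpk(π) = b`, `exddes(π) = c`, `inv(π) = d`
equals the number of set partitions `p` of `[n]` with `block(p) = a`,
`nsingleton(p) = b`, `singleton(p) = c`, `fr(p) = d`. -/
theorem stmt10 (n a b c d : ℕ) (hn : 1 ≤ n) :
    {π : Equiv.Perm (Fin n) | AvoidsSP [1, 3, 2] π ∧
      desList (permWord π) + 1 = a ∧ rpkList (permWord π) = b ∧
      exddesList (permWord π) = c ∧ invList (permWord π) = d}.ncard =
    {p : Finpartition (Finset.Icc 1 n) | p.parts.card = a ∧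
      nsingletonCount p = b ∧ singletonCount p = c ∧ frCount p = d}.ncard := by
  symm
  refine Set.ncard_congr (fun p _ => permOf p)
    (fun p hp => ⟨permOf_avoids p, by rwa [permWord_permOf, statistics_partitionWord_iff hn]⟩)
    (fun p q _ _ h => partitionWord_injective (by rw [← permWord_permOf, h, permWord_permOf]))
    ?_
  rintro π ⟨hav, hstats⟩
  have hword := partitionWord_runPartition (permWord_nodup π) (mem_permWord π) hav
  refine ⟨runPartition n (permWord π), ?_, permWord_injective (by rw [permWord_permOf, hword])⟩
  rwa [← hword, statistics_partitionWord_iff hn] at hstats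
end

section
/- For all n ≥ 1 and all k ≥ 1 and ℓ ≥ 0, the number of permutations π ∈ SP_n(132) with des(π) = k−1 and inv(π) = ℓ equals the number of set partitions of [n] with exactly k blocks and exactly ℓ free rises. -/
open scoped Classical

/-!
A set partition `p` of `[n]` is sent to the permutation whose word lists the blocks of `p` by
decreasing minimum, each block in increasing order. Its descents are exactly the boundaries
between consecutive blocks, and its inversions `(i, j)` are exactly the free rises `(π(j), π(i))`.

The permutations obtained this way are those in which every descent bottom is smaller than
everything to its left; this is equivalent to avoiding the simsun pattern `132`. Indeed such a
word has no consecutive `132`, and the property survives restriction to `[m]`; conversely a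
violation `x ⋯ b c` with `x < c < b` can be pushed, by restricting to smaller and smaller
values, until a consecutive `132` appears. The inverse map groups the entries by the prefix
minimum at their position, which recovers the blocks as the ascending runs.
-/

theorem Tuple.eq_sort_of_strictMono {n : ℕ} {α : Type*} [LinearOrder α] {f : Fin n → α}
    {σ : Equiv.Perm (Fin n)} (h : StrictMono (f ∘ σ)) : σ = Tuple.sort f :=
  Tuple.eq_sort_iff.2 ⟨h.monotone, fun _ _ hij he => absurd he (h hij).ne⟩

theorem Finpartition.image_part {α : Type*} [DecidableEq α] {s : Finset α}
    (P : Finpartition s) : s.image P.part = P.parts := by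
  ext B
  simp only [Finset.mem_image]
  exact ⟨by rintro ⟨x, hx, rfl⟩; exact P.part_mem.2 hx, fun hB => P.part_surjOn hB⟩

theorem Finpartition.ext_of_part {α : Type*} [DecidableEq α] {s : Finset α}
    {P Q : Finpartition s} (h : ∀ x ∈ s, P.part x = Q.part x) : P = Q :=
  Finpartition.ext (by rw [← P.image_part, ← Q.image_part, Finset.image_congr h])

theorem AntitoneOn.card_image_range_succ {α : Type*} [LinearOrder α] {f : ℕ → α} {m : ℕ}
    (hf : AntitoneOn f (Set.Iic m)) :
    ((Finset.range (m + 1)).image f).card =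
      ((Finset.range m).filter fun i => f (i + 1) < f i).card + 1 := by
  induction m with
  | zero => simp
  | succ m ih =>
    have ih' := ih (hf.mono (Set.Iic_subset_Iic.2 m.le_succ))
    rw [Finset.range_add_one (n := m + 1), Finset.image_insert]
    by_cases hdrop : f (m + 1) < f m
    · rw [Finset.card_insert_of_notMem, ih', Finset.range_add_one (n := m), Finset.filter_insert,
        if_pos hdrop, Finset.card_insert_of_notMem (by simp)]
      simp only [Finset.mem_image, Finset.mem_range, not_exists, not_and]
      intro j hj he
      exact (he ▸ hf (by simp; omega) (by simp) (by omega : j ≤ m)).not_gt hdrop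
    · rw [Finset.insert_eq_of_mem, ih', Finset.range_add_one (n := m), Finset.filter_insert,
        if_neg hdrop]
      have : f (m + 1) = f m := (hf (by simp) (by simp) m.le_succ).antisymm (not_lt.1 hdrop)
      exact Finset.mem_image.2 ⟨m, by simp, this.symm⟩

namespace Simsun132

section PrefixMin

variable {α : Type*} [LinearOrder α] (w : ℕ → α)

def prefixMin (i : ℕ) : α := (Finset.range (i + 1)).inf' Finset.nonempty_range_add_one w

variable {w}

theorem le_prefixMin_iff {a : α} {i : ℕ} : a ≤ prefixMin w i ↔ ∀ t ≤ i, a ≤ w t := by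
  simp [prefixMin, Finset.le_inf'_iff]

theorem lt_prefixMin_iff {a : α} {i : ℕ} : a < prefixMin w i ↔ ∀ t ≤ i, a < w t := by
  simp [prefixMin, Finset.lt_inf'_iff]

theorem prefixMin_le {t i : ℕ} (h : t ≤ i) : prefixMin w i ≤ w t :=
  le_prefixMin_iff.1 le_rfl t h

theorem exists_eq_prefixMin (i : ℕ) : ∃ t ≤ i, w t = prefixMin w i := by
  obtain ⟨t, ht, he⟩ := Finset.exists_mem_eq_inf' Finset.nonempty_range_add_one w
  exact ⟨t, Nat.lt_succ_iff.1 (Finset.mem_range.1 ht), he.symm⟩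

theorem prefixMin_antitone : Antitone (prefixMin w) := fun _ _ hij =>
  le_prefixMin_iff.2 fun _ ht => prefixMin_le (ht.trans hij)

theorem prefixMin_succ_lt_iff {i : ℕ} :
    prefixMin w (i + 1) < prefixMin w i ↔ ∀ t ≤ i, w (i + 1) < w t := by
  rw [← lt_prefixMin_iff]
  refine ⟨fun h => ?_, (prefixMin_le le_rfl).trans_lt⟩
  obtain ⟨t, ht, he⟩ := exists_eq_prefixMin (w := w) (i + 1)
  rcases ht.lt_or_eq with ht | rfl
  · exact absurd ((prefixMin_le (Nat.le_of_lt_succ ht)).trans_eq he) (not_le.2 h)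
  · rwa [he]

theorem lt_of_prefixMin_eq {n : ℕ} (hw : Set.InjOn w (Set.Iio n))
    (hP : ∀ i, i + 1 < n → w (i + 1) < w i → ∀ t ≤ i, w (i + 1) < w t)
    {i j : ℕ} (hij : i < j) (hj : j < n) (h : prefixMin w i = prefixMin w j) : w i < w j := by
  have step : ∀ m, m + 1 < n → prefixMin w (m + 1) = prefixMin w m → w m < w (m + 1) := by
    intro m hm hpm
    refine lt_of_le_of_ne (not_lt.1 fun hdes => ?_) fun he => ?_
    · exact (prefixMin_succ_lt_iff.2 (hP m hm hdes)).ne hpm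
    · exact absurd (hw (by simp; omega) (by simp; omega) he) (by omega)
  induction j, hij using Nat.le_induction with
  | base => exact step i hj h.symm
  | succ j hij ih =>
    have hmid : prefixMin w j = prefixMin w i :=
      le_antisymm (prefixMin_antitone (by omega)) (h ▸ prefixMin_antitone (by omega))
    exact (ih (by omega) hmid.symm).trans (step j hj (h ▸ hmid).symm)

end PrefixMin

def DescentBottomsLRMin (v : List ℕ) : Prop :=
  ∀ u a b r, v = u ++ a :: b :: r → b < a → ∀ x ∈ u, b < x

theorem descentBottomsLRMin_iff {v : List ℕ} :
    DescentBottomsLRMin v ↔ ∀ i, i + 1 < v.length → v.getD (i + 1) 0 < v.getD i 0 →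
      ∀ t ≤ i, v.getD (i + 1) 0 < v.getD t 0 := by
  constructor
  · intro h i hi hdes t ht
    have hsplit : v = v.take i ++ v[i] :: v[i + 1] :: v.drop (i + 2) := by
      rw [← List.drop_eq_getElem_cons, ← List.drop_eq_getElem_cons, List.take_append_drop]
    rw [List.getD_eq_getElem _ _ hi, List.getD_eq_getElem _ _ (by omega)] at hdes ⊢
    rcases ht.lt_or_eq with ht | rfl
    · exact h _ _ _ _ hsplit hdes _ (List.mem_iff_getElem.2 ⟨t, by simp; omega, by simp⟩)
    · exact hdes
  · rintro h u a b r rfl hba x hx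
    obtain ⟨t, ht, rfl⟩ := List.mem_iff_getElem.1 hx
    have := h u.length (by simp) (by simpa [List.getD_append_right] using hba) t ht.le
    rwa [List.getD_append_right _ _ _ _ (by omega), List.getD_append _ _ _ _ ht,
      List.getD_eq_getElem _ _ ht, Nat.add_sub_cancel_left] at this

theorem DescentBottomsLRMin.restrict {v : List ℕ} (h : DescentBottomsLRMin v) (k : ℕ) :
    DescentBottomsLRMin (restrict v k) := by
  rintro u a b r huv hba x hx
  obtain ⟨V₁, V₂, rfl, hV₁, hV₂⟩ := List.filter_eq_append_iff.1 huv
  obtain ⟨A₁, A₂, rfl, -, -, hA₂⟩ := List.filter_eq_cons_iff.1 hV₂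
  obtain ⟨B₁, B₂, rfl, hB₁, hbk, -⟩ := List.filter_eq_cons_iff.1 hA₂
  have hxV₁ : x ∈ V₁ := List.mem_of_mem_filter (hV₁ ▸ hx)
  -- in `v`, the entry just before `b` is `a` or a deleted entry, which exceeds `k ≥ b`
  rcases B₁.eq_nil_or_concat' with rfl | ⟨B, c, rfl⟩
  · exact h (V₁ ++ A₁) a b B₂ (by simp) hba x (by simp [hxV₁])
  · have hbc : b < c := by
      have := hB₁ c (by simp)
      simp only [decide_eq_true_eq] at this hbk
      omega
    exact h (V₁ ++ A₁ ++ a :: B) c b B₂ (by simp) hbc x (by simp [hxV₁])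

theorem DescentBottomsLRMin.not_containsPattern_132 {v : List ℕ} (h : DescentBottomsLRMin v) :
    ¬ containsPattern [1, 3, 2] v := by
  rintro ⟨i, hlen, hiso⟩
  have h02 := (hiso 0 (by simp) 2 (by simp)).1 (by decide)
  have h21 := (hiso 2 (by simp) 1 (by simp)).1 (by decide)
  simp only [List.length_cons, List.length_nil] at hlen
  exact (descentBottomsLRMin_iff.1 h (i + 1) (by omega) h21 i (by omega)).not_gt h02

theorem containsPattern_132_of_eq_append {v u r : List ℕ} {a b c : ℕ}
    (h : v = u ++ a :: b :: c :: r) (hac : a < c) (hcb : c < b) :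
    containsPattern [1, 3, 2] v := by
  refine ⟨u.length, by simp [h], fun i hi j hj => ?_⟩
  simp only [List.length_cons, List.length_nil] at hi hj
  interval_cases i <;> interval_cases j <;> simp [h] <;> omega

theorem restrict_restrict (v : List ℕ) {k m : ℕ} (hkm : k ≤ m) :
    restrict (restrict v m) k = restrict v k := by
  simp only [restrict, List.filter_filter]
  exact List.filter_congr fun x _ => by by_cases hx : x ≤ k <;> simp [hx]; omega

/-- A violation `x ⋯ b c` (`x < c < b`, with `b c` adjacent) is pushed down: in the restriction
to `[b]` the entry `a` just before `b` is either below `c`, giving a consecutive `132`, or between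
`c` and `b`, and then `x ⋯ a c` is a violation with a smaller top. -/
theorem exists_containsPattern_132_restrict {v : List ℕ} (hv : v.Nodup)
    (h : ¬ DescentBottomsLRMin v) : ∃ k, containsPattern [1, 3, 2] (restrict v k) := by
  suffices key : ∀ b u c r x, restrict v b = u ++ b :: c :: r → c < b → x ∈ u → x < c →
      ∃ k, containsPattern [1, 3, 2] (restrict v k) by
    simp only [DescentBottomsLRMin, not_forall, not_lt] at h
    obtain ⟨u, a, b, r, rfl, hba, x, hxu, hbx⟩ := h
    have hxb : x ≠ b := by
      simp only [List.nodup_append, List.mem_cons] at hv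
      exact hv.2.2 x hxu b (by simp)
    refine key a (restrict u a) b (restrict r a) x ?_ hba ?_ (by omega)
    · simp [restrict, List.filter_append, hba.le]
    · simpa [restrict, hxu] using (by omega : x ≤ a)
  intro b
  induction b using Nat.strong_induction_on with
  | _ b ih =>
  intro u c r x huv hcb hxu hxc
  obtain ⟨u₀, a, rfl⟩ : ∃ u₀ a, u = u₀ ++ [a] := by
    rcases u.eq_nil_or_concat' with rfl | hu
    · simp at hxu
    · exact hu
  have hnd : (u₀ ++ [a] ++ b :: c :: r).Nodup := huv ▸ hv.filter _
  have hne : a ≠ b ∧ a ≠ c := by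
    simp only [List.nodup_append, List.mem_cons] at hnd
    exact ⟨hnd.2.2 a (by simp) b (by simp), hnd.2.2 a (by simp) c (by simp)⟩
  have hab : a ≤ b := by
    have : a ∈ restrict v b := by simp [huv]
    simpa [restrict] using (List.mem_filter.1 this).2
  rcases lt_or_gt_of_ne hne.2 with hac | hca
  · exact ⟨b, containsPattern_132_of_eq_append (u := u₀) (r := r) (by simp [huv]) hac hcb⟩
  · refine ih a (by omega) (restrict u₀ a) c (restrict r a) x ?_ hca ?_ hxc
    · rw [← restrict_restrict v hab, huv]
      simp [restrict, List.filter_append, hca.le, lt_of_le_of_ne hab hne.1]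
    · have hxu₀ : x ∈ u₀ := by simpa [show x ≠ a by omega] using hxu
      simpa [restrict, hxu₀] using (by omega : x ≤ a)

section Word

variable {n : ℕ} (π : Equiv.Perm (Fin n))

def entry (i : ℕ) : ℕ := (permWord π).getD i 0

def position (x : ℕ) : ℕ := (permWord π).idxOf x

variable {π}

theorem getD_permWord (i : ℕ) : (permWord π).getD i 0 = entry π i := rfl

theorem length_permWord : (permWord π).length = n := by simp [permWord]

theorem nodup_permWord : (permWord π).Nodup :=
  List.nodup_ofFn.2 fun i j hij => π.injective (Fin.ext (by simpa using hij))

theorem mem_permWord {x : ℕ} : x ∈ permWord π ↔ x ∈ Finset.Icc 1 n := by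
  simp only [permWord, List.mem_ofFn, Finset.mem_Icc]
  refine ⟨by rintro ⟨i, rfl⟩; omega, fun hx => ⟨π.symm ⟨x - 1, by omega⟩, by simp; omega⟩⟩

theorem entry_of_lt {i : ℕ} (hi : i < n) : entry π i = π ⟨i, hi⟩ + 1 := by
  simp [entry, permWord, hi]

theorem entry_mem_Icc {i : ℕ} (hi : i < n) : entry π i ∈ Finset.Icc 1 n := by
  rw [entry_of_lt hi, Finset.mem_Icc]
  omega

theorem position_entry {i : ℕ} (hi : i < n) : position π (entry π i) = i := by
  rw [entry, List.getD_eq_getElem _ _ (length_permWord.symm ▸ hi)]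
  exact nodup_permWord.idxOf_getElem _ _

theorem position_lt {x : ℕ} (hx : x ∈ Finset.Icc 1 n) : position π x < n := by
  simpa only [position, length_permWord] using List.idxOf_lt_length_iff.2 (mem_permWord.2 hx)

theorem entry_position {x : ℕ} (hx : x ∈ Finset.Icc 1 n) : entry π (position π x) = x := by
  rw [entry, List.getD_eq_getElem _ _ (length_permWord.symm ▸ position_lt hx)]
  exact List.getElem_idxOf _

theorem entry_injOn : Set.InjOn (entry π) (Set.Iio n) := fun i hi j hj h => by
  rw [← position_entry hi, h, position_entry hj]

theorem image_entry_range : (Finset.range n).image (entry π) = Finset.Icc 1 n := by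
  ext x
  simp only [Finset.mem_image, Finset.mem_range]
  exact ⟨by rintro ⟨i, hi, rfl⟩; exact entry_mem_Icc hi,
    fun hx => ⟨position π x, position_lt hx, entry_position hx⟩⟩

end Word

theorem avoidsSP_132_iff {n : ℕ} (π : Equiv.Perm (Fin n)) :
    AvoidsSP [1, 3, 2] π ↔ DescentBottomsLRMin (permWord π) := by
  refine ⟨fun hπ => ?_, fun h k => (h.restrict k).not_containsPattern_132⟩
  by_contra h
  obtain ⟨k, hk⟩ := exists_containsPattern_132_restrict nodup_permWord h
  exact hπ k hk

theorem bmin_eq {B : Finset ℕ} {a : ℕ} (ha : a ∈ B) (h : ∀ x ∈ B, a ≤ x) : bmin B = a :=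
  IsLeast.csInf_eq ⟨ha, h⟩

theorem bmin_mem {B : Finset ℕ} (hB : B.Nonempty) : bmin B ∈ B :=
  Nat.sInf_mem (s := (B : Set ℕ)) hB

section Partition

variable {s : Finset ℕ} (p : Finpartition s)

noncomputable def blockMin (x : ℕ) : ℕ := bmin (p.part x)

variable {p}

theorem blockMin_mem {x : ℕ} (hx : x ∈ s) : blockMin p x ∈ p.part x :=
  bmin_mem (p.part_nonempty.2 hx)

theorem blockMin_le {x : ℕ} (hx : x ∈ s) : blockMin p x ≤ x :=
  Nat.sInf_le (s := (p.part x : Set ℕ)) (p.mem_part hx)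

theorem part_eq_part_iff_blockMin_eq {x y : ℕ} (hx : x ∈ s) (hy : y ∈ s) :
    p.part x = p.part y ↔ blockMin p x = blockMin p y :=
  ⟨fun h => by rw [blockMin, h, blockMin], fun h => p.eq_of_mem_parts (p.part_mem.2 hx)
    (p.part_mem.2 hy) (blockMin_mem hx) (h ▸ blockMin_mem hy)⟩

theorem blockMin_blockMin {x : ℕ} (hx : x ∈ s) : blockMin p (blockMin p x) = blockMin p x := by
  rw [blockMin, p.part_eq_of_mem (p.part_mem.2 hx) (blockMin_mem hx), blockMin]

theorem card_image_bmin_parts : (p.parts.image bmin).card = p.parts.card :=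
  Finset.card_image_of_injOn fun _ hB _ hC h => p.eq_of_mem_parts hB hC
    (bmin_mem (p.nonempty_of_mem_parts hB)) (h ▸ bmin_mem (p.nonempty_of_mem_parts hC))

end Partition

theorem frCount_eq {n : ℕ} (p : Finpartition (Finset.Icc 1 n)) :
    frCount p = ((Finset.Icc 1 n ×ˢ Finset.Icc 1 n).filter fun cd =>
      cd.1 < cd.2 ∧ blockMin p cd.1 < blockMin p cd.2).card := by
  rw [frCount]
  congr 1
  refine Finset.filter_congr fun cd hcd => and_congr_right fun _ => ?_
  obtain ⟨hc, hd⟩ := Finset.mem_product.1 hcd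
  refine ⟨?_, fun h => ⟨_, p.part_mem.2 hc, _, p.part_mem.2 hd, p.mem_part hc, p.mem_part hd, h⟩⟩
  rintro ⟨B, hB, B', hB', hcB, hdB', hlt⟩
  rwa [blockMin, blockMin, p.part_eq_of_mem hB hcB, p.part_eq_of_mem hB' hdB']

section OfPartition

variable {n : ℕ} (p : Finpartition (Finset.Icc 1 n))

noncomputable def blockKey (j : Fin n) : ℕᵒᵈ ×ₗ ℕ :=
  toLex (OrderDual.toDual (blockMin p (j + 1)), (j : ℕ) + 1)

/-- The word of `permOfPartition p` lists the blocks of `p` by decreasing minimum, each block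
in increasing order. -/
noncomputable def permOfPartition : Equiv.Perm (Fin n) := Tuple.sort (blockKey p)

theorem blockKey_injective : Function.Injective (blockKey p) := fun i j h => by
  simpa [blockKey, Fin.ext_iff] using congrArg (fun k => (ofLex k).2) h

theorem entry_permOfPartition_lex {i j : ℕ} (hij : i < j) (hj : j < n) :
    blockMin p (entry (permOfPartition p) j) < blockMin p (entry (permOfPartition p) i) ∨
      blockMin p (entry (permOfPartition p) i) = blockMin p (entry (permOfPartition p) j) ∧
        entry (permOfPartition p) i < entry (permOfPartition p) j := by
  have hmono := (Tuple.monotone_sort (blockKey p)).strictMono_of_injective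
    ((blockKey_injective p).comp (Tuple.sort _).injective)
  have := hmono (show (⟨i, by omega⟩ : Fin n) < ⟨j, hj⟩ from hij)
  simpa [blockKey, permOfPartition, entry_of_lt, hj, hij.trans hj, Prod.Lex.toLex_lt_toLex,
    eq_comm] using this

theorem blockMin_entry_permOfPartition_antitone {i j : ℕ} (hij : i ≤ j) (hj : j < n) :
    blockMin p (entry (permOfPartition p) j) ≤ blockMin p (entry (permOfPartition p) i) := by
  rcases hij.lt_or_eq with hij | rfl
  · rcases entry_permOfPartition_lex p hij hj with h | h
    exacts [h.le, h.1.ge]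
  · exact le_rfl

theorem prefixMin_entry_permOfPartition {i : ℕ} (hi : i < n) :
    prefixMin (entry (permOfPartition p)) i = blockMin p (entry (permOfPartition p) i) := by
  set σ := permOfPartition p
  have hx := entry_mem_Icc (π := σ) hi
  refine le_antisymm ?_ (le_prefixMin_iff.2 fun t ht =>
    (blockMin_entry_permOfPartition_antitone p ht hi).trans (blockMin_le (entry_mem_Icc (by omega))))
  have hm : blockMin p (entry σ i) ∈ Finset.Icc 1 n := p.part_subset _ (blockMin_mem hx)
  have hs : position σ (blockMin p (entry σ i)) ≤ i := by
    by_contra! hlt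
    have hs := position_lt (π := σ) hm
    rcases entry_permOfPartition_lex p hlt hs with h | h <;>
      rw [entry_position hm, blockMin_blockMin hx] at h
    · exact h.false
    · exact h.2.not_ge (blockMin_le hx)
  simpa only [entry_position hm] using prefixMin_le (w := entry σ) hs

theorem entry_permOfPartition_succ_lt_iff {i : ℕ} (hi : i + 1 < n) :
    entry (permOfPartition p) (i + 1) < entry (permOfPartition p) i ↔
      blockMin p (entry (permOfPartition p) (i + 1)) < blockMin p (entry (permOfPartition p) i) := by
  refine ⟨fun h => (entry_permOfPartition_lex p i.lt_succ_self hi).resolve_right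
    fun h' => h'.2.not_gt h, fun h => ?_⟩
  rw [← prefixMin_entry_permOfPartition p hi, ← prefixMin_entry_permOfPartition p (by omega),
    prefixMin_succ_lt_iff] at h
  exact h i le_rfl

theorem descentBottomsLRMin_permOfPartition :
    DescentBottomsLRMin (permWord (permOfPartition p)) := by
  rw [descentBottomsLRMin_iff, length_permWord]
  intro i hi hdes
  simp only [getD_permWord] at hdes ⊢
  rw [← prefixMin_succ_lt_iff, prefixMin_entry_permOfPartition p hi,
    prefixMin_entry_permOfPartition p (by omega)]
  exact (entry_permOfPartition_succ_lt_iff p hi).1 hdes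

theorem desList_permOfPartition (hn : 1 ≤ n) :
    desList (permWord (permOfPartition p)) + 1 = p.parts.card := by
  set σ := permOfPartition p
  have hdrops : desList (permWord σ) = ((Finset.range (n - 1)).filter fun i =>
      blockMin p (entry σ (i + 1)) < blockMin p (entry σ i)).card := by
    rw [desList, length_permWord, List.countP_eq_length_filter]
    change ((Finset.range (n - 1)).filter fun i => entry σ (i + 1) < entry σ i).card = _
    congr 1
    exact Finset.filter_congr fun i hi =>
      entry_permOfPartition_succ_lt_iff p (by simp at hi; omega)
  have himage : (Finset.range n).image (fun i => blockMin p (entry σ i)) = p.parts.image bmin :=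
    calc _ = ((Finset.range n).image (entry σ)).image (bmin ∘ p.part) := by
          rw [Finset.image_image]; rfl
      _ = p.parts.image bmin := by rw [image_entry_range, ← Finset.image_image, p.image_part]
  have hanti : AntitoneOn (fun i => blockMin p (entry σ i)) (Set.Iic (n - 1)) :=
    fun i _ j hj hij => blockMin_entry_permOfPartition_antitone p hij (by simp at hj; omega)
  rw [hdrops, ← hanti.card_image_range_succ, Nat.sub_add_cancel hn, himage,
    card_image_bmin_parts]

theorem invList_permOfPartition : invList (permWord (permOfPartition p)) = frCount p := by
  set σ := permOfPartition p
  rw [invList, frCount_eq, length_permWord]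
  refine Finset.card_nbij' (fun ab => (entry σ ab.2, entry σ ab.1))
    (fun cd => (position σ cd.2, position σ cd.1)) ?_ ?_ ?_ ?_
  · intro ab h
    simp only [Finset.mem_coe, Finset.mem_filter, Finset.mem_product, Finset.mem_range] at h ⊢
    obtain ⟨⟨ha, hb⟩, hab, hba⟩ := h
    exact ⟨⟨entry_mem_Icc hb, entry_mem_Icc ha⟩, hba,
      (entry_permOfPartition_lex p hab hb).resolve_right fun h => h.2.not_gt hba⟩
  · intro cd h
    simp only [Finset.mem_coe, Finset.mem_filter, Finset.mem_product, Finset.mem_range] at h ⊢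
    obtain ⟨⟨hc, hd⟩, hcd, hM⟩ := h
    refine ⟨⟨position_lt hd, position_lt hc⟩, not_le.1 fun hle => ?_, by
      rwa [getD_permWord, getD_permWord, entry_position hc, entry_position hd]⟩
    have := blockMin_entry_permOfPartition_antitone p hle (position_lt hd)
    rw [entry_position hc, entry_position hd] at this
    exact this.not_gt hM
  · rintro ⟨a, b⟩ h
    simp only [Finset.mem_coe, Finset.mem_filter, Finset.mem_product, Finset.mem_range] at h
    simp [position_entry h.1.1, position_entry h.1.2]
  · rintro ⟨c, d⟩ h
    simp only [Finset.mem_coe, Finset.mem_filter, Finset.mem_product] at h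
    simp [entry_position h.1.1, entry_position h.1.2]

end OfPartition

section RunPartition

variable {n : ℕ} (π : Equiv.Perm (Fin n))

noncomputable def runPartition : Finpartition (Finset.Icc 1 n) :=
  Finpartition.ofSetSetoid (Setoid.ker fun x => prefixMin (entry π) (position π x)) _

variable {π}

theorem mem_part_runPartition {x y : ℕ} :
    y ∈ (runPartition π).part x ↔ x ∈ Finset.Icc 1 n ∧ y ∈ Finset.Icc 1 n ∧
      prefixMin (entry π) (position π x) = prefixMin (entry π) (position π y) :=
  Finpartition.mem_part_ofSetSetoid_iff_rel _

theorem blockMin_runPartition {i : ℕ} (hi : i < n) :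
    blockMin (runPartition π) (entry π i) = prefixMin (entry π) i := by
  obtain ⟨s, hs, he⟩ := exists_eq_prefixMin (w := entry π) i
  apply bmin_eq
  · rw [mem_part_runPartition, ← he, position_entry hi, position_entry (by omega)]
    refine ⟨entry_mem_Icc hi, entry_mem_Icc (by omega), ?_⟩
    exact le_antisymm (prefixMin_antitone hs) ((prefixMin_le le_rfl).trans_eq he)
  · intro y hy
    obtain ⟨-, hyI, hpy⟩ := mem_part_runPartition.1 hy
    rw [position_entry hi] at hpy
    calc prefixMin (entry π) i = prefixMin (entry π) (position π y) := hpy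
      _ ≤ entry π (position π y) := prefixMin_le le_rfl
      _ = y := entry_position hyI

theorem permOfPartition_runPartition (h : DescentBottomsLRMin (permWord π)) :
    permOfPartition (runPartition π) = π := by
  rw [descentBottomsLRMin_iff, length_permWord] at h
  refine (Tuple.eq_sort_of_strictMono fun i j hij => ?_).symm
  have hj := j.isLt
  simp only [Function.comp_apply, blockKey, Prod.Lex.toLex_lt_toLex, OrderDual.toDual_lt_toDual]
  rw [← entry_of_lt i.isLt, ← entry_of_lt hj, blockMin_runPartition i.isLt, blockMin_runPartition hj]
  rcases (prefixMin_antitone (w := entry π) hij.le).lt_or_eq with hlt | heq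
  · exact Or.inl hlt
  · exact Or.inr ⟨heq.symm, lt_of_prefixMin_eq entry_injOn h hij hj heq.symm⟩

theorem runPartition_permOfPartition (p : Finpartition (Finset.Icc 1 n)) :
    runPartition (permOfPartition p) = p := by
  have key : ∀ x ∈ Finset.Icc 1 n,
      prefixMin (entry (permOfPartition p)) (position (permOfPartition p) x) = blockMin p x :=
    fun x hx => by
      rw [prefixMin_entry_permOfPartition p (position_lt hx), entry_position hx]
  refine Finpartition.ext_of_part fun x hx => Finset.ext fun y => ?_
  rw [mem_part_runPartition]
  constructor
  · rintro ⟨-, hy, hxy⟩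
    rw [key x hx, key y hy, ← part_eq_part_iff_blockMin_eq hx hy] at hxy
    exact hxy ▸ p.mem_part hy
  · intro hy
    have hyI := p.part_subset x hy
    rw [key x hx, key y hyI, ← part_eq_part_iff_blockMin_eq hx hyI]
    exact ⟨hx, hyI, (p.part_eq_of_mem (p.part_mem.2 hx) hy).symm⟩

end RunPartition

end Simsun132

open Simsun132 in
/-- for `n ≥ 1`, `k ≥ 1` and `ℓ ≥ 0`, the number of `π ∈ SP_n(132)`
with `des(π) = k-1` and `inv(π) = ℓ` equals the number of set partitions of `[n]`
with exactly `k` blocks and exactly `ℓ` free rises. -/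
theorem stmt11 (n k l : ℕ) (hn : 1 ≤ n) (hk : 1 ≤ k) :
    {π : Equiv.Perm (Fin n) | AvoidsSP [1, 3, 2] π ∧
      desList (permWord π) = k - 1 ∧ invList (permWord π) = l}.ncard =
    {p : Finpartition (Finset.Icc 1 n) | p.parts.card = k ∧ frCount p = l}.ncard := by
  have hinj : Function.Injective (permOfPartition (n := n)) :=
    Function.LeftInverse.injective runPartition_permOfPartition
  rw [← Set.ncard_image_of_injective _ hinj]
  congr 1
  ext π
  constructor
  · rintro ⟨hπ, hdes, hinv⟩
    have hπ' := permOfPartition_runPartition ((avoidsSP_132_iff π).1 hπ)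
    refine ⟨runPartition π, ⟨?_, ?_⟩, hπ'⟩
    · have := desList_permOfPartition (runPartition π) hn
      rw [hπ'] at this
      omega
    · rw [← invList_permOfPartition, hπ', hinv]
  · rintro ⟨p, ⟨rfl, rfl⟩, rfl⟩
    have := desList_permOfPartition p hn
    exact ⟨(avoidsSP_132_iff _).2 (descentBottomsLRMin_permOfPartition p), by omega,
      invList_permOfPartition p⟩
end
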